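/- arXiv:math/0507551 — 12 statements merged into one kernel-verified Lean document; each statement's English description precedes it below -/
import Mathlib

section
/- If τ is a noetherian topology on a set Y, then the point closure τ' of τ (the coarsest topology in which points and τ-closed sets are closed) is also a noetherian topology. -/
/-!
An ultrafilter on a set `s` is either principal at a point of `s`, which converges to that point
in every topology, or finer than the cofinite filter. In the second case it contains every
cofinite set, so it converges in the point closure to any `τ`-limit it has in `s`; and such a
limit exists because `τ` is noetherian, so that every subset is `τ`-compact.
-/

open Filter Topology TopologicalSpace

theorem IsCompact.generateFrom_union_of_compl_finite {Y : Type*} [TopologicalSpace Y]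
    {s : Set Y} (hs : IsCompact s) {B : Set (Set Y)} (hB : ∀ V ∈ B, Vᶜ.Finite) :
    @IsCompact Y (generateFrom ({U : Set Y | IsOpen U} ∪ B)) s := by
  rw [@isCompact_iff_ultrafilter_le_nhds] at hs ⊢
  intro f hfs
  rcases f.le_cofinite_or_eq_pure with hf | ⟨x, rfl⟩
  · obtain ⟨x, hxs, hfx⟩ := hs f hfs
    refine ⟨x, hxs, ?_⟩
    rw [nhds_generateFrom]
    refine le_iInf₂ fun U ⟨hxU, hU⟩ => le_principal_iff.mpr ?_
    rcases hU with hU | hU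
    · exact hfx (hU.mem_nhds hxU)
    · exact hf (mem_cofinite.mpr (hB U hU))
  · exact ⟨x, le_principal_iff.mp hfs, @pure_le_nhds Y (generateFrom _) x⟩

theorem NoetherianSpace.generateFrom_union_of_compl_finite {Y : Type*} [TopologicalSpace Y]
    [NoetherianSpace Y] {B : Set (Set Y)} (hB : ∀ V ∈ B, Vᶜ.Finite) :
    @NoetherianSpace Y (generateFrom ({U : Set Y | IsOpen U} ∪ B)) :=
  (@noetherianSpace_iff_isCompact Y (generateFrom _)).mpr fun s =>
    (NoetherianSpace.isCompact s).generateFrom_union_of_compl_finite hB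

/-- If τ is a noetherian topology on a set Y, then the point closure τ'
of τ (the coarsest topology in which points and τ-closed sets are closed) is also a
noetherian topology.  The point closure is the topology generated by the τ-open sets
together with the complements of singletons. -/
theorem stmt1 {Y : Type*} [t : TopologicalSpace Y] [TopologicalSpace.NoetherianSpace Y] :
    @TopologicalSpace.NoetherianSpace Y
      (TopologicalSpace.generateFrom ({U : Set Y | IsOpen U} ∪ {V : Set Y | ∃ y : Y, V = {y}ᶜ})) :=
  NoetherianSpace.generateFrom_union_of_compl_finite <| by
    rintro _ ⟨y, rfl⟩
    simp
end

section
/- Let τ be a noetherian topology on a set Y and let (X_α)_{α∈A} be a nonempty family of sets, each of the form C_α ∪ F_α with C_α τ-closed and F_α finite. Then the intersection ⋂_{α∈A} X_α is again of the form C ∪ F with C τ-closed and F finite. -/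
/-- Let τ be a noetherian topology on a set Y and (X_α)_{α∈A} a nonempty
family of sets, each of the form C_α ∪ F_α with C_α τ-closed and F_α finite.  Then
⋂_{α∈A} X_α is again of the form C ∪ F with C τ-closed and F finite. -/
theorem stmt2 {Y : Type*} [TopologicalSpace Y] [TopologicalSpace.NoetherianSpace Y]
    {A : Type*} [Nonempty A] (C F : A → Set Y)
    (hC : ∀ a, IsClosed (C a)) (hF : ∀ a, (F a).Finite) :
    ∃ D G : Set Y, IsClosed D ∧ G.Finite ∧ (⋂ a, (C a ∪ F a)) = D ∪ G := by
  classical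
  obtain ⟨a0⟩ := ‹Nonempty A›
  set S : Set (TopologicalSpace.Closeds Y) :=
    {s | ∃ T : Finset A, T.Nonempty ∧ (s : Set Y) = ⋂ a ∈ T, C a} with hS
  have hne : S.Nonempty := by
    refine ⟨⟨C a0, hC a0⟩, {a0}, Finset.singleton_nonempty a0, ?_⟩
    simp
  obtain ⟨D, ⟨T, hTne, hDT⟩, hmin⟩ :=
    (wellFounded_lt (α := TopologicalSpace.Closeds Y)).has_min S hne
  -- D ⊆ C a for all a
  have hsub : ∀ a, (D : Set Y) ⊆ C a := by
    intro a
    by_contra h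
    have hle : (⟨(D : Set Y) ∩ C a, D.isClosed.inter (hC a)⟩ : TopologicalSpace.Closeds Y) ≤ D :=
      fun x hx => hx.1
    have hlt : (⟨(D : Set Y) ∩ C a, D.isClosed.inter (hC a)⟩ : TopologicalSpace.Closeds Y) < D := by
      refine lt_of_le_of_ne hle ?_
      intro heq
      apply h
      have h2 : (D : Set Y) ∩ C a = D := congrArg SetLike.coe heq
      intro x hx
      rw [← h2] at hx
      exact hx.2
    refine hmin _ ⟨insert a T, ⟨a, Finset.mem_insert_self a T⟩, ?_⟩ hlt
    simp only [TopologicalSpace.Closeds.coe_mk, hDT, Finset.set_biInter_insert]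
    rw [Set.inter_comm]
  have hDeq : (D : Set Y) = ⋂ a, C a := by
    apply subset_antisymm
    · exact Set.subset_iInter hsub
    · rw [hDT]
      intro x hx
      simp only [Set.mem_iInter] at hx ⊢
      intro a _
      exact hx a
  refine ⟨D, (⋂ a, (C a ∪ F a)) \ D, D.isClosed, ?_, ?_⟩
  · apply Set.Finite.subset (T.finite_toSet.biUnion fun a _ => hF a)
    rintro x ⟨hx1, hx2⟩
    rw [hDT] at hx2
    simp only [Set.mem_iInter, not_forall] at hx2
    obtain ⟨a, haT, hxa⟩ := hx2
    have := Set.mem_iInter.1 hx1 a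
    rcases this with h | h
    · exact absurd h hxa
    · exact Set.mem_biUnion haT h
  · apply subset_antisymm
    · intro x hx
      by_cases hxD : x ∈ (D : Set Y)
      · exact Or.inl hxD
      · exact Or.inr ⟨hx, hxD⟩
    · rintro x (hx | hx)
      · rw [hDeq] at hx
        exact Set.mem_iInter.2 fun a => Or.inl (Set.mem_iInter.1 hx a)
      · exact hx.1
end

section
/- Let R be a ring. The Zariski topology on Irr R, whose closed sets are the sets V(I) = {[N] ∈ Irr R : I·N = 0} for two-sided ideals I, is noetherian if and only if R satisfies the ascending chain condition on semiprimitive two-sided ideals. -/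
universe u v w

/-- A bundled simple left `R`-module. -/
structure SimpleMod (R : Type u) [Ring R] : Type (u + 1) where
  carrier : Type u
  [isAddCommGroup : AddCommGroup carrier]
  [isModule : Module R carrier]
  simple : IsSimpleModule R carrier

attribute [instance] SimpleMod.isAddCommGroup SimpleMod.isModule

/-- Simple modules up to isomorphism. -/
instance irrSetoid (R : Type u) [Ring R] : Setoid (SimpleMod R) where
  r M N := Nonempty (M.carrier ≃ₗ[R] N.carrier)
  iseqv := ⟨fun M => ⟨LinearEquiv.refl R M.carrier⟩,
    fun ⟨e⟩ => ⟨e.symm⟩, fun ⟨e⟩ ⟨f⟩ => ⟨e.trans f⟩⟩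

/-- `Irr R`: the set of isomorphism classes of simple left `R`-modules. -/
def Irr (R : Type u) [Ring R] : Type (u + 1) := Quotient (irrSetoid R)

/-- A fixed representative `N_p` of the isomorphism class `p`. -/
noncomputable def Irr.Rep {R : Type u} [Ring R] (p : Irr R) : SimpleMod R := Quotient.out p

/-- The (left) annihilator in `R` of a module, as a set. -/
def annSet (R : Type u) [Ring R] (M : Type u) [AddCommGroup M] [Module R M] : Set R :=
  {r : R | ∀ m : M, r • m = 0}

/-- The Zariski-closed set `V(I)` determined by a set `I ⊆ R`. -/
def VV {R : Type u} [Ring R] (I : Set R) : Set (Irr R) :=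
  {p : Irr R | ∀ r ∈ I, ∀ m : p.Rep.carrier, r • m = 0}

/-- A set `I ⊆ R` is a semiprimitive ideal if it is an intersection of annihilators of
simple left `R`-modules. -/
def Semiprimitive (R : Type u) [Ring R] (I : Set R) : Prop :=
  ∃ S : Set (Irr R), I = ⋂ p ∈ S, annSet R (Irr.Rep p).carrier

/-- `N` is a subquotient of `M`: a quotient of a submodule of `M`. -/
def IsSubquotient (R : Type u) [Ring R] (M : Type v) [AddCommGroup M] [Module R M]
    (N : Type w) [AddCommGroup N] [Module R N] : Prop :=
  ∃ (A : Submodule R M) (f : A →ₗ[R] N), Function.Surjective f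

/-- `X ⊆ Irr R` is closed in the refined Zariski topology if the isomorphism class of
every simple subquotient of `∏_{p ∈ X} N_p` belongs to `X`. -/
def RefinedClosed {R : Type u} [Ring R] (X : Set (Irr R)) : Prop :=
  ∀ q : Irr R, IsSubquotient R ((p : X) → (Irr.Rep (p : Irr R)).carrier) q.Rep.carrier → q ∈ X

section Aux

variable {R : Type u} [Ring R]

/-- The intersection of annihilators over a set of classes. -/
def IX (X : Set (Irr R)) : Set R := ⋂ p ∈ X, annSet R (Irr.Rep p).carrier

lemma subset_VV_IX (X : Set (Irr R)) : X ⊆ VV (IX X) := by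
  intro p hp r hr m
  have : r ∈ annSet R (Irr.Rep p).carrier := by
    have := Set.mem_iInter₂.1 hr p hp
    exact this
  exact this m

lemma subset_IX_VV (J : Set R) : J ⊆ IX (VV J) := by
  intro r hr
  refine Set.mem_iInter₂.2 fun p hp => ?_
  exact fun m => hp r hr m

lemma VV_antitone {J K : Set R} (h : J ⊆ K) : VV K ⊆ VV J :=
  fun p hp r hr => hp r (h hr)

lemma IX_antitone {X Y : Set (Irr R)} (h : X ⊆ Y) : IX Y ⊆ IX X := by
  intro r hr
  refine Set.mem_iInter₂.2 fun p hp => Set.mem_iInter₂.1 hr p (h hp)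

lemma IX_VV_IX (X : Set (Irr R)) : IX (VV (IX X)) = IX X :=
  Set.Subset.antisymm (IX_antitone (subset_VV_IX X)) (subset_IX_VV _)

lemma VV_IX_VV (J : Set R) : VV (IX (VV J)) = VV J :=
  Set.Subset.antisymm (VV_antitone (subset_IX_VV J)) (subset_VV_IX _)

/-- `IX X` bundled as a two-sided ideal. -/
def annTSI (X : Set (Irr R)) : TwoSidedIdeal R :=
  TwoSidedIdeal.mk' (IX X)
    (Set.mem_iInter₂.2 fun p _ => fun m => zero_smul R m)
    (fun {x y} hx hy => Set.mem_iInter₂.2 fun p hp => fun m => by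
      rw [add_smul, Set.mem_iInter₂.1 hx p hp m, Set.mem_iInter₂.1 hy p hp m, add_zero])
    (fun {x} hx => Set.mem_iInter₂.2 fun p hp => fun m => by
      rw [neg_smul, Set.mem_iInter₂.1 hx p hp m, neg_zero])
    (fun {x y} hy => Set.mem_iInter₂.2 fun p hp => fun m => by
      rw [mul_smul, Set.mem_iInter₂.1 hy p hp m, smul_zero])
    (fun {x y} hx => Set.mem_iInter₂.2 fun p hp => fun m => by
      rw [mul_smul, Set.mem_iInter₂.1 hx p hp (y • m)])

lemma coe_annTSI (X : Set (Irr R)) : (annTSI X : Set R) = IX X :=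
  TwoSidedIdeal.coe_mk' _ _ _ _ _ _

end Aux

/-- The Zariski topology on `Irr R` (closed sets the `V(I)` for two-sided
ideals `I`) is noetherian iff `R` has the ACC on semiprimitive two-sided ideals. -/
theorem stmt5 (R : Type u) [Ring R] (t : TopologicalSpace (Irr R))
    (ht : ∀ s : Set (Irr R), @IsClosed (Irr R) t s ↔ ∃ I : TwoSidedIdeal R, s = VV (I : Set R)) :
    @TopologicalSpace.NoetherianSpace (Irr R) t ↔
      (∀ f : ℕ → Set R, (∀ n, Semiprimitive R (f n)) → (∀ n, f n ⊆ f (n + 1)) →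
        ∃ n, ∀ m, n ≤ m → f m = f n) := by
  classical
  rw [show TopologicalSpace.NoetherianSpace (Irr R) ↔ WellFoundedLT (TopologicalSpace.Closeds (Irr R)) from (TopologicalSpace.noetherianSpace_TFAE (Irr R)).out 0 1]
  rw [show WellFoundedLT (TopologicalSpace.Closeds (Irr R)) ↔ WellFounded ((· < ·) : TopologicalSpace.Closeds (Irr R) → _ → Prop) from isWellFounded_iff _ _]
  have hwf : WellFounded ((· < ·) : TopologicalSpace.Closeds (Irr R) → _ → Prop) ↔
      ∀ a : ℕ →o (TopologicalSpace.Closeds (Irr R))ᵒᵈ, ∃ n, ∀ m, n ≤ m → a n = a m :=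
    (isWellFounded_iff _ _).symm.trans (wellFoundedGT_iff_monotone_chain_condition (α := (TopologicalSpace.Closeds (Irr R))ᵒᵈ))
  rw [hwf]
  constructor
  · intro h f hsemi hmono
    choose S hS using hsemi
    have hclosed : ∀ n, @IsClosed (Irr R) t (VV (f n)) := fun n => by
      rw [ht]
      exact ⟨annTSI (S n), by rw [coe_annTSI]; exact congrArg VV (hS n)⟩
    have hanti : ∀ n m, n ≤ m → VV (f m) ⊆ VV (f n) := by
      intro n m hnm
      refine VV_antitone ?_
      induction hnm with
      | refl => exact le_refl _
      | step _ ih => exact le_trans ih (hmono _)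
    obtain ⟨n, hn⟩ := h ⟨fun n => OrderDual.toDual ⟨VV (f n), hclosed n⟩,
      fun a b hab => hanti a b hab⟩
    refine ⟨n, fun m hm => ?_⟩
    have hVV : VV (f m) = VV (f n) := by
      have := hn m hm
      exact congrArg (fun c => (OrderDual.ofDual c).carrier) this.symm
    calc f m = IX (VV (f m)) := by rw [hS m]; exact (IX_VV_IX (S m)).symm
      _ = IX (VV (f n)) := by rw [hVV]
      _ = f n := by rw [hS n]; exact IX_VV_IX (S n)
  · intro h a
    set f : ℕ → Set R := fun n => IX ((OrderDual.ofDual (a n) : TopologicalSpace.Closeds (Irr R)) : Set (Irr R)) with hf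
    have hsemi : ∀ n, Semiprimitive R (f n) := fun n => ⟨_, rfl⟩
    have hmono : ∀ n, f n ⊆ f (n + 1) := fun n =>
      IX_antitone (a.monotone (Nat.le_succ n))
    obtain ⟨n, hn⟩ := h f hsemi hmono
    refine ⟨n, fun m hm => ?_⟩
    have key : ∀ k, ((OrderDual.ofDual (a k) : TopologicalSpace.Closeds (Irr R)) : Set (Irr R)) = VV (f k) := by
      intro k
      obtain ⟨I, hI⟩ := (ht _).1 (OrderDual.ofDual (a k)).isClosed'
      calc ((OrderDual.ofDual (a k) : TopologicalSpace.Closeds (Irr R)) : Set (Irr R))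
          = VV (I : Set R) := hI
        _ = VV (IX (VV (I : Set R))) := (VV_IX_VV _).symm
        _ = VV (f k) := congrArg (fun X => VV (IX X)) hI.symm
    have : ((OrderDual.ofDual (a n) : TopologicalSpace.Closeds (Irr R)) : Set (Irr R)) =
        ((OrderDual.ofDual (a m) : TopologicalSpace.Closeds (Irr R)) : Set (Irr R)) := by
      rw [key n, key m, hn m hm]
    exact (TopologicalSpace.Closeds.ext this)
end

section
/- Let R be a ring that satisfies the ascending chain condition on semiprimitive two-sided ideals and satisfies the cofinite product condition at all of its semiprimitive prime ideals. Then every closed subset of Irr R under the refined Zariski topology is of the form V(I) ∪ S for some semiprimitive ideal I of R and some finite subset S of Irr R. -/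
universe u v w

/-- `R` satisfies the cofinite product condition at `I`: for every family of pairwise
nonisomorphic simple left `R`-modules whose cofinite partial products all have left
annihilator `I`, the module `R/I` embeds into the full product, i.e. there is a linear
map `R → ∏ Mᵢ` with kernel exactly `I`. -/
def CofiniteProductCondition (R : Type u) [Ring R] (I : Set R) : Prop :=
  ∀ (Ω : Type u) (M : Ω → SimpleMod R),
    (∀ i j : Ω, i ≠ j → IsEmpty ((M i).carrier ≃ₗ[R] (M j).carrier)) →
    (∀ Ω' : Set Ω, Ω'ᶜ.Finite → annSet R ((i : Ω') → (M (i : Ω)).carrier) = I) →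
    ∃ f : R →ₗ[R] ((i : Ω) → (M i).carrier), (LinearMap.ker f : Set R) = I

/-- `I` is a prime (two-sided) ideal-set: for two-sided ideals `A`, `B`, `AB ⊆ I`
implies `A ⊆ I` or `B ⊆ I`. -/
def IsPrimeIdealSet (R : Type u) [Ring R] (I : Set R) : Prop :=
  ∀ A B : TwoSidedIdeal R, (∀ a ∈ A, ∀ b ∈ B, a * b ∈ I) →
    (A : Set R) ⊆ I ∨ (B : Set R) ⊆ I

section Aux
variable {R : Type u} [Ring R]

/-- annihilator set of the full space. -/
def JX (R : Type u) [Ring R] (X : Set (Irr R)) : Set R :=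
  ⋂ p ∈ X, annSet R (Irr.Rep p).carrier

lemma JX_semiprimitive (X : Set (Irr R)) : Semiprimitive R (JX R X) := ⟨X, rfl⟩

lemma mem_JX {X : Set (Irr R)} {r : R} :
    r ∈ JX R X ↔ ∀ p ∈ X, ∀ m : (Irr.Rep p).carrier, r • m = 0 := by
  simp [JX, annSet]

lemma JX_mono {X Y : Set (Irr R)} (h : X ⊆ Y) : JX R Y ⊆ JX R X := by
  intro r hr
  rw [mem_JX] at *
  exact fun p hp => hr p (h hp)

lemma subset_VV_JX {X : Set (Irr R)} : X ⊆ VV (JX R X) := by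
  intro p hp r hr m
  exact mem_JX.mp hr p hp m

lemma mem_VV {I : Set R} {p : Irr R} :
    p ∈ VV I ↔ ∀ r ∈ I, ∀ m : (Irr.Rep p).carrier, r • m = 0 := Iff.rfl

lemma VV_anti {I J : Set R} (h : I ⊆ J) : VV J ⊆ VV I :=
  fun _ hp r hr => hp r (h hr)

/-- transfer subquotient along injective map -/
lemma IsSubquotient.of_injective {M : Type v} {M' : Type w} {N : Type*}
    [AddCommGroup M] [Module R M] [AddCommGroup M'] [Module R M'] [AddCommGroup N] [Module R N]
    (g : M →ₗ[R] M') (hg : Function.Injective g) (h : IsSubquotient R M N) :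
    IsSubquotient R M' N := by
  obtain ⟨A, f, hf⟩ := h
  exact ⟨A.map g, f.comp (Submodule.equivMapOfInjective g hg A).symm.toLinearMap,
    hf.comp (Submodule.equivMapOfInjective g hg A).symm.surjective⟩

lemma ann_of_subquotient {M : Type v} {N : Type w}
    [AddCommGroup M] [Module R M] [AddCommGroup N] [Module R N]
    {r : R} (hr : ∀ m : M, r • m = 0) (h : IsSubquotient R M N) :
    ∀ n : N, r • n = 0 := by
  obtain ⟨A, f, hf⟩ := h
  intro n
  obtain ⟨a, rfl⟩ := hf n
  rw [← map_smul]
  convert map_zero f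
  ext
  exact hr _

open Classical in
/-- the inclusion of a sub-product as a submodule of the full product -/
noncomputable def prodIncl (C : Irr R → Type u)
    [∀ p, AddCommGroup (C p)] [∀ p, Module R (C p)]
    {X' X : Set (Irr R)} (h : X' ⊆ X) :
    ((p : X') → C p) →ₗ[R] ((p : X) → C p) where
  toFun v p := if hp : (p : Irr R) ∈ X' then v ⟨p, hp⟩ else 0
  map_add' v w := by
    funext p
    by_cases hp : (p : Irr R) ∈ X' <;> simp [hp]
  map_smul' r v := by
    funext p
    by_cases hp : (p : Irr R) ∈ X' <;> simp [hp]

lemma prodIncl_injective (C : Irr R → Type u)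
    [∀ p, AddCommGroup (C p)] [∀ p, Module R (C p)]
    {X' X : Set (Irr R)} (h : X' ⊆ X) : Function.Injective (prodIncl C h) := by
  intro v w hvw
  funext p
  have h2 := congrFun hvw ⟨(p : Irr R), h p.2⟩
  simpa only [prodIncl, LinearMap.coe_mk, AddHom.coe_mk, dif_pos p.2] using h2

lemma refinedClosed_inter (X : Set (Irr R)) (hX : RefinedClosed X) (A : Set R) :
    RefinedClosed (X ∩ VV A) := by
  intro q hq
  constructor
  · exact hX q (hq.of_injective _ (prodIncl_injective (fun p => (Irr.Rep p).carrier)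
      (Set.inter_subset_left)))
  · intro r hr m
    refine ann_of_subquotient (fun v => ?_) hq m
    funext p
    have := p.2.2 r hr (v p)
    simpa using this

end Aux

section Aux2
variable {R : Type u} [Ring R]

/-- The annihilator of a simple module is a prime ideal set. -/
lemma ann_prime (N : Type u) [AddCommGroup N] [Module R N] (hN : IsSimpleModule R N) :
    IsPrimeIdealSet R (annSet R N) := by
  haveI := hN
  intro A B hAB
  by_cases hB : (B : Set R) ⊆ annSet R N
  · exact Or.inr hB
  · left
    rw [Set.not_subset] at hB
    obtain ⟨b, hbB, hbann⟩ := hB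
    simp only [annSet, Set.mem_setOf_eq, not_forall] at hbann
    obtain ⟨m, hm⟩ := hbann
    set S : Set N := {x | ∃ b' ∈ B, ∃ n : N, b' • n = x} with hS
    have hspan : Submodule.span R S = ⊤ := by
      rcases eq_bot_or_eq_top (Submodule.span R S) with h | h
      · exfalso
        apply hm
        have : b • m ∈ Submodule.span R S := Submodule.subset_span ⟨b, SetLike.mem_coe.mp hbB, m, rfl⟩
        rw [h] at this
        simpa using this
      · exact h
    have key : ∀ x ∈ Submodule.span R S, ∀ a ∈ A, a • x = 0 := by
      intro x hx
      induction hx using Submodule.span_induction with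
      | mem x hx =>
        intro a ha
        obtain ⟨b', hb', n', rfl⟩ := hx
        rw [← mul_smul]
        exact hAB a ha b' hb' n'
      | zero => intro a _; simp
      | add x y _ _ hx hy => intro a ha; rw [smul_add, hx a ha, hy a ha, add_zero]
      | smul r x _ hx =>
        intro a ha
        rw [← mul_smul]
        exact hx (a * r) (A.mul_mem_right a r ha)
    intro a ha n
    exact key n (by rw [hspan]; trivial) a ha

/-- A semiprimitive set is (the carrier of) a two-sided ideal. -/
lemma semiprimitive_ideal {I : Set R} (hI : Semiprimitive R I) :
    ∃ T : TwoSidedIdeal R, (T : Set R) = I := by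
  obtain ⟨S, rfl⟩ := hI
  refine ⟨TwoSidedIdeal.mk' (⋂ p ∈ S, annSet R (Irr.Rep p).carrier)
    ?_ ?_ ?_ ?_ ?_, TwoSidedIdeal.coe_mk' _ _ _ _ _ _⟩
  · simp only [Set.mem_iInter]; intro p _; intro m; simp [annSet]
  · intro x y hx hy
    simp only [Set.mem_iInter] at *
    intro p hp m
    have := hx p hp
    have := hy p hp
    show (x + y) • m = 0
    rw [add_smul, hx p hp m, hy p hp m, add_zero]
  · intro x hx
    simp only [Set.mem_iInter] at *
    intro p hp m
    show (-x) • m = 0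
    rw [neg_smul, hx p hp m, neg_zero]
  · intro x y hy
    simp only [Set.mem_iInter] at *
    intro p hp m
    show (x * y) • m = 0
    rw [mul_smul, hy p hp m, smul_zero]
  · intro x y hx
    simp only [Set.mem_iInter] at *
    intro p hp m
    show (x * y) • m = 0
    rw [mul_smul, hx p hp (y • m)]

lemma VV_inter {I J : Set R} (hI : Semiprimitive R I) (hJ : Semiprimitive R J) :
    VV (I ∩ J) = VV I ∪ VV J := by
  apply Set.Subset.antisymm
  · intro p hp
    obtain ⟨TI, hTI⟩ := semiprimitive_ideal hI
    obtain ⟨TJ, hTJ⟩ := semiprimitive_ideal hJ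
    have := ann_prime (Irr.Rep p).carrier (Irr.Rep p).simple TI TJ ?_
    · rcases this with h | h
      · exact Or.inl fun r hr => h (hTI ▸ hr)
      · exact Or.inr fun r hr => h (hTJ ▸ hr)
    · intro a haI b hbJ
      have ha' : a ∈ I := hTI ▸ SetLike.mem_coe.mpr haI
      have hb' : b ∈ J := hTJ ▸ SetLike.mem_coe.mpr hbJ
      have h1 : a * b ∈ I := by
        rw [← hTI]; exact SetLike.mem_coe.mpr (TI.mul_mem_right a b (by rw [← SetLike.mem_coe, hTI]; exact ha'))
      have h2 : a * b ∈ J := by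
        rw [← hTJ]; exact SetLike.mem_coe.mpr (TJ.mul_mem_left a b (by rw [← SetLike.mem_coe, hTJ]; exact hb'))
      exact hp (a * b) ⟨h1, h2⟩
  · intro p hp
    rcases hp with h | h
    · exact fun r hr => h r hr.1
    · exact fun r hr => h r hr.2

lemma Semiprimitive.inter {I J : Set R} (hI : Semiprimitive R I) (hJ : Semiprimitive R J) :
    Semiprimitive R (I ∩ J) := by
  obtain ⟨S, rfl⟩ := hI
  obtain ⟨T, rfl⟩ := hJ
  exact ⟨S ∪ T, by rw [Set.biInter_union]⟩

end Aux2

section Aux3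
variable {R : Type u} [Ring R]

lemma ann_pi {ι : Type*} (C : ι → Type*) [∀ i, AddCommGroup (C i)] [∀ i, Module R (C i)]
    {r : R} : (∀ v : (i : ι) → C i, r • v = 0) ↔ ∀ i, ∀ m : C i, r • m = 0 := by
  classical
  constructor
  · intro h i m
    have := congrFun (h (Function.update (0 : (i : ι) → C i) i m)) i
    simpa using this
  · intro h v
    funext i
    exact h i (v i)

lemma rep_eq_of_iso {p q : Irr R}
    (e : (Irr.Rep p).carrier ≃ₗ[R] (Irr.Rep q).carrier) : p = q :=
  Quotient.out_equiv_out.mp ⟨e⟩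

lemma exists_small (X : Set (Irr R)) :
    ∃ ω : X → Submodule R R,
      ∀ p : X, Nonempty ((R ⧸ ω p) ≃ₗ[R] (Irr.Rep (p : Irr R)).carrier) := by
  have h : ∀ p : X, ∃ m : Submodule R R,
      Nonempty ((R ⧸ m) ≃ₗ[R] (Irr.Rep (p : Irr R)).carrier) := by
    intro p
    obtain ⟨hnt, hsurj⟩ :=
      isSimpleModule_iff_toSpanSingleton_surjective.mp (Irr.Rep (p : Irr R)).simple
    obtain ⟨m₀, hm₀⟩ := @exists_ne _ hnt 0
    exact ⟨_, ⟨LinearMap.quotKerEquivOfSurjective _ (hsurj m₀ hm₀)⟩⟩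
  exact ⟨fun p => Classical.choose (h p), fun p => Classical.choose_spec (h p)⟩

lemma prime_case (X : Set (Irr R)) (hX : RefinedClosed X) {I : Set R}
    (hsemi : Semiprimitive R I) (hpr : IsPrimeIdealSet R I)
    (hc : CofiniteProductCondition R I)
    (hcof : ∀ X' : Set (Irr R), X' ⊆ X → (X \ X').Finite → JX R X' = I) :
    X = VV I := by
  obtain ⟨ω, hω⟩ := exists_small X
  have hinj : Function.Injective ω := by
    intro p q h
    obtain ⟨e1⟩ := hω p
    obtain ⟨e2⟩ := hω q
    exact Subtype.ext (rep_eq_of_iso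
      (e1.symm.trans ((Submodule.quotEquivOfEq _ _ h).trans e2)))
  set Ω : Type u := ↥(Set.range ω) with hΩ
  set E : ↥X ≃ Ω := Equiv.ofInjective ω hinj with hE
  have h1 : ∀ i j : Ω, i ≠ j →
      IsEmpty ((Irr.Rep ((E.symm i : X) : Irr R)).carrier ≃ₗ[R]
        (Irr.Rep ((E.symm j : X) : Irr R)).carrier) := by
    intro i j hij
    refine ⟨fun e => hij ?_⟩
    have h2 : E.symm i = E.symm j := Subtype.ext (rep_eq_of_iso e)
    exact E.symm.injective h2
  have h2 : ∀ Ω' : Set Ω, Ω'ᶜ.Finite →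
      annSet R ((i : Ω') → (Irr.Rep ((E.symm (i : Ω) : X) : Irr R)).carrier) = I := by
    intro Ω' hfin
    set X' : Set (Irr R) := {p | ∃ hp : p ∈ X, E ⟨p, hp⟩ ∈ Ω'} with hX'
    have hsub : X' ⊆ X := by
      rintro p ⟨hp, _⟩
      exact hp
    have hdiff : (X \ X').Finite := by
      have hc1 : ∀ p : ↥(X \ X'), E ⟨p.1, p.2.1⟩ ∈ Ω'ᶜ := by
        intro p hmem
        exact p.2.2 ⟨p.2.1, hmem⟩
      haveI : Finite ↥(Ω'ᶜ) := hfin.to_subtype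
      have hfi : Function.Injective
          (fun p : ↥(X \ X') => (⟨E ⟨p.1, p.2.1⟩, hc1 p⟩ : ↥(Ω'ᶜ))) := by
        intro p q h
        simp only [Subtype.mk.injEq] at h
        have h5 := E.injective h
        have h4 : (⟨p.1, p.2.1⟩ : ↥X).1 = (⟨q.1, q.2.1⟩ : ↥X).1 := congrArg Subtype.val h5
        exact Subtype.ext h4
      haveI := Finite.of_injective _ hfi
      exact Set.toFinite _
    rw [← hcof X' hsub hdiff]
    ext r
    simp only [annSet, Set.mem_setOf_eq, mem_JX]
    rw [ann_pi]
    constructor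
    · intro h p hp
      obtain ⟨hpX, hpΩ⟩ := hp
      have hthis : ∀ m : (Irr.Rep ((E.symm (E ⟨p, hpX⟩) : X) : Irr R)).carrier,
          r • m = 0 := h ⟨E ⟨p, hpX⟩, hpΩ⟩
      rw [Equiv.symm_apply_apply] at hthis
      exact hthis
    · intro h i
      have hq : ((E.symm (i : Ω) : X) : Irr R) ∈ X' := by
        refine ⟨(E.symm (i : Ω)).2, ?_⟩
        have : (⟨((E.symm (i : Ω) : X) : Irr R), (E.symm (i : Ω)).2⟩ : X) =
            E.symm (i : Ω) := rfl
        rw [this, Equiv.apply_symm_apply]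
        exact i.2
      exact h _ hq
  obtain ⟨f, hker⟩ := hc Ω (fun i => Irr.Rep ((E.symm i : X) : Irr R)) h1 h2
  set Φ := LinearEquiv.piCongrLeft' R (fun p : X => (Irr.Rep (p : Irr R)).carrier) E with hΦ
  set f' : R →ₗ[R] ((p : X) → (Irr.Rep (p : Irr R)).carrier) :=
    Φ.symm.toLinearMap.comp f with hf'
  have hkerf' : LinearMap.ker f' = LinearMap.ker f := by
    rw [hf', LinearMap.ker_comp, LinearEquiv.ker, Submodule.comap_bot]
  apply Set.Subset.antisymm
  · rw [← hcof X subset_rfl (by simp)]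
    exact subset_VV_JX
  · intro q hq
    obtain ⟨hnt, hsurj⟩ :=
      isSimpleModule_iff_toSpanSingleton_surjective.mp (Irr.Rep q).simple
    obtain ⟨m₀, hm₀⟩ := @exists_ne _ hnt 0
    set φq := LinearMap.toSpanSingleton R (Irr.Rep q).carrier m₀ with hφq
    have hle : LinearMap.ker f' ≤ LinearMap.ker φq := by
      intro r hr
      have hrI : r ∈ I := by
        rw [← hker]
        rw [hkerf'] at hr
        exact hr
      rw [LinearMap.mem_ker, hφq, LinearMap.toSpanSingleton_apply]
      exact hq r hrI m₀
    have hψs : Function.Surjective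
        ((Submodule.liftQ (LinearMap.ker f') φq hle).comp
          (f'.quotKerEquivRange).symm.toLinearMap) := by
      intro n
      obtain ⟨r, hr⟩ := hsurj m₀ hm₀ n
      refine ⟨f'.quotKerEquivRange (Submodule.Quotient.mk r), ?_⟩
      rw [LinearMap.comp_apply, LinearEquiv.coe_coe, LinearEquiv.symm_apply_apply,
        Submodule.liftQ_apply]
      exact hr
    exact hX q ⟨LinearMap.range f', _, hψs⟩

end Aux3

/-- If `R` has the ACC on semiprimitive two-sided ideals and satisfies the
cofinite product condition at all of its semiprimitive prime ideals, then every closed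
subset of `Irr R` in the refined Zariski topology has the form `V(I) ∪ S` with `I`
semiprimitive and `S` finite. -/
theorem stmt7 (R : Type u) [Ring R]
    (hacc : ∀ f : ℕ → Set R, (∀ n, Semiprimitive R (f n)) → (∀ n, f n ⊆ f (n + 1)) →
      ∃ n, ∀ m, n ≤ m → f m = f n)
    (hcpc : ∀ I : Set R, Semiprimitive R I → IsPrimeIdealSet R I →
      CofiniteProductCondition R I)
    (X : Set (Irr R)) (hX : RefinedClosed X) :
    ∃ (I : Set R) (S : Set (Irr R)),
      Semiprimitive R I ∧ S.Finite ∧ X = VV I ∪ S := by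
  have hwf : WellFounded ((· > ·) : {I : Set R // Semiprimitive R I} →
      {I : Set R // Semiprimitive R I} → Prop) := by
    refine IsWellFounded.wf (self := wellFoundedGT_iff_monotone_chain_condition.mpr ?_)
    intro a
    obtain ⟨n, hn⟩ := hacc (fun n => (a n).1) (fun n => (a n).2)
      (fun n => a.mono (Nat.le_succ n))
    exact ⟨n, fun m hm => Subtype.ext ((hn m hm).symm)⟩
  have key : ∀ I : {I : Set R // Semiprimitive R I}, ∀ X : Set (Irr R),
      RefinedClosed X → JX R X = I.1 →
      ∃ I' S', Semiprimitive R I' ∧ S'.Finite ∧ X = VV I' ∪ S' := by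
    intro I
    refine hwf.induction (C := fun I => ∀ X : Set (Irr R), RefinedClosed X → JX R X = I.1 →
      ∃ I' S', Semiprimitive R I' ∧ S'.Finite ∧ X = VV I' ∪ S') I ?_
    clear hX X I
    intro I IH X hX hJ
    by_cases hcof : ∀ X' : Set (Irr R), X' ⊆ X → (X \ X').Finite → JX R X' = I.1
    · by_cases hpr : IsPrimeIdealSet R I.1
      · have heq := prime_case X hX I.2 hpr (hcpc I.1 I.2 hpr) hcof
        exact ⟨I.1, ∅, I.2, Set.finite_empty, by rw [heq, Set.union_empty]⟩
      · simp only [IsPrimeIdealSet, not_forall] at hpr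
        obtain ⟨A, B, hAB, hnot⟩ := hpr
        obtain ⟨hA, hB⟩ := not_or.mp hnot
        have hXAc : RefinedClosed (X ∩ VV (A : Set R)) := refinedClosed_inter X hX _
        have hXBc : RefinedClosed (X ∩ VV (B : Set R)) := refinedClosed_inter X hX _
        have hcover : X = (X ∩ VV (A : Set R)) ∪ (X ∩ VV (B : Set R)) := by
          apply Set.Subset.antisymm
          · intro p hp
            have hprime := ann_prime (Irr.Rep p).carrier (Irr.Rep p).simple A B ?_
            · rcases hprime with h | h
              · exact Or.inl ⟨hp, fun r hr m => h hr m⟩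
              · exact Or.inr ⟨hp, fun r hr m => h hr m⟩
            · intro a ha b hb
              have hab : a * b ∈ I.1 := hAB a ha b hb
              rw [← hJ] at hab
              exact mem_JX.mp hab p hp
          · rintro p (h | h) <;> exact h.1
        have hgtA : I.1 < JX R (X ∩ VV (A : Set R)) := by
          have hsub : I.1 ⊆ JX R (X ∩ VV (A : Set R)) :=
            hJ ▸ JX_mono Set.inter_subset_left
          refine lt_of_le_of_ne hsub (fun hcontra => hA ?_)
          intro r hr
          rw [hcontra]
          exact mem_JX.mpr (fun p hp m => hp.2 r hr m)
        have hgtB : I.1 < JX R (X ∩ VV (B : Set R)) := by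
          have hsub : I.1 ⊆ JX R (X ∩ VV (B : Set R)) :=
            hJ ▸ JX_mono Set.inter_subset_left
          refine lt_of_le_of_ne hsub (fun hcontra => hB ?_)
          intro r hr
          rw [hcontra]
          exact mem_JX.mpr (fun p hp m => hp.2 r hr m)
        obtain ⟨IA, SA, hIAs, hSAf, hXAeq⟩ :=
          IH ⟨JX R (X ∩ VV (A : Set R)), JX_semiprimitive _⟩ hgtA _ hXAc rfl
        obtain ⟨IB, SB, hIBs, hSBf, hXBeq⟩ :=
          IH ⟨JX R (X ∩ VV (B : Set R)), JX_semiprimitive _⟩ hgtB _ hXBc rfl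
        refine ⟨IA ∩ IB, SA ∪ SB, hIAs.inter hIBs, hSAf.union hSBf, ?_⟩
        rw [hcover, hXAeq, hXBeq, VV_inter hIAs hIBs]
        ext p
        simp only [Set.mem_union]
        tauto
    · push_neg at hcof
      obtain ⟨X', hsub, hfin, hne⟩ := hcof
      have hII : I.1 ⊆ JX R X' := hJ ▸ JX_mono hsub
      have hYc : RefinedClosed (X ∩ VV (JX R X')) := refinedClosed_inter X hX _
      have hJY : JX R (X ∩ VV (JX R X')) = JX R X' := by
        apply Set.Subset.antisymm
        · exact JX_mono (fun p hp => ⟨hsub hp, subset_VV_JX hp⟩)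
        · intro r hr
          exact mem_JX.mpr (fun p hp m => hp.2 r hr m)
      have hgt : I < (⟨JX R X', JX_semiprimitive X'⟩ : {I : Set R // Semiprimitive R I}) := by
        rw [← Subtype.coe_lt_coe]
        exact lt_of_le_of_ne hII (Ne.symm hne)
      obtain ⟨I', S, hI's, hSf, hYeq⟩ :=
        IH ⟨JX R X', JX_semiprimitive X'⟩ hgt _ hYc hJY
      refine ⟨I', S ∪ (X \ (X ∩ VV (JX R X'))), hI's, hSf.union (hfin.subset ?_), ?_⟩
      · intro p hp
        exact ⟨hp.1, fun hX' => hp.2 ⟨hsub hX', subset_VV_JX hX'⟩⟩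
      · rw [← Set.union_assoc, ← hYeq, Set.union_diff_cancel Set.inter_subset_left]
  exact key ⟨JX R X, JX_semiprimitive X⟩ X hX rfl
end

section
/- Let k be a field and R a k-algebra of countable k-vector-space dimension. Let I be a two-sided ideal of R and (M_i)_{i∈Ω} a family of left R-modules such that I equals the left annihilator in R of ∏_{i∈Ω'} M_i for every cofinite subset Ω' ⊆ Ω (including Ω itself). Then there is a left R-module embedding of R/I into ∏_{i∈Ω} M_i. -/
universe u v

/-- Auxiliary: the `k`-subspace of `V` consisting of elements annihilating `m`. -/
def annV (k : Type u) {R : Type u} [Field k] [Ring R] [Algebra k R]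
    {N : Type*} [AddCommGroup N] [Module R N] (V : Submodule k R) (m : N) :
    Submodule k R where
  carrier := {r | r ∈ V ∧ r • m = 0}
  add_mem' := fun ha hb => ⟨V.add_mem ha.1 hb.1, by rw [add_smul, ha.2, hb.2, add_zero]⟩
  zero_mem' := ⟨V.zero_mem, zero_smul R m⟩
  smul_mem' := fun c r hr => ⟨V.smul_mem c hr.1, by
    rw [Algebra.smul_def, mul_smul, hr.2, smul_zero]⟩

lemma mem_annV {k : Type u} {R : Type u} [Field k] [Ring R] [Algebra k R]
    {N : Type*} [AddCommGroup N] [Module R N] {V : Submodule k R} {m : N} {r : R} :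
    r ∈ annV k V m ↔ r ∈ V ∧ r • m = 0 := Iff.rfl

/-- Let `k` be a field and `R` a `k`-algebra of countable vector space
dimension, `I` a two-sided ideal of `R`, and `(Mᵢ)` a family of left `R`-modules such
that `I` is the left annihilator of `∏_{i∈Ω'} Mᵢ` for every cofinite `Ω' ⊆ Ω`.  Then
there is a left `R`-module embedding `R/I ↪ ∏_{i∈Ω} Mᵢ`, i.e. a linear map
`R → ∏ Mᵢ` whose kernel is exactly `I`. -/
theorem stmt8 (k : Type u) [Field k] (R : Type u) [Ring R] [Algebra k R]
    (hcount : Module.rank k R ≤ Cardinal.aleph0)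
    (I : TwoSidedIdeal R) (Ω : Type v) (M : Ω → Type u)
    [∀ i, AddCommGroup (M i)] [∀ i, Module R (M i)]
    (hann : ∀ Ω' : Set Ω, Ω'ᶜ.Finite →
      {r : R | ∀ x : (i : Ω') → M i, ∀ i : Ω', r • x i = 0} = (I : Set R)) :
    ∃ f : R →ₗ[R] ((i : Ω) → M i), (LinearMap.ker f : Set R) = (I : Set R) := by
  classical
  -- Fact (**): every element of I annihilates every element of every M i.
  have key2 : ∀ r ∈ I, ∀ (i : Ω) (m : M i), r • m = 0 := by
    intro r hr i m
    have h := hann Set.univ (by simp)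
    have hr' : r ∈ {r : R | ∀ x : (i : ↥(Set.univ : Set Ω)) → M i, ∀ j : ↥(Set.univ : Set Ω),
        r • x j = 0} := by rw [h]; exact hr
    have := hr' (fun j => if hj : (j : Ω) = i then (cast (congrArg M hj.symm) m) else 0)
      ⟨i, trivial⟩
    simpa using this
  -- Fact (*): for r ∉ I and any finite F, some M i with i ∉ F detects r.
  have key : ∀ r : R, r ∉ I → ∀ F : Finset Ω, ∃ i : Ω, i ∉ F ∧ ∃ m : M i, r • m ≠ 0 := by
    intro r hr F
    have h := hann ((↑F : Set Ω))ᶜ (by simp [Set.Finite.subset F.finite_toSet])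
    by_contra hcon
    push_neg at hcon
    apply hr
    have : r ∈ {r : R | ∀ x : (i : ↥((↑F : Set Ω))ᶜ) → M i, ∀ j : ↥((↑F : Set Ω))ᶜ,
        r • x j = 0} := by
      intro x j
      exact hcon j j.2 (x j)
    rw [h] at this
    exact this
  -- Step lemma: for each finite-dimensional V and finite F₀, there is a finitely
  -- supported x avoiding F₀ with V ∩ ann(x) ⊆ I.
  have stepA : ∀ (n : ℕ) (V : Submodule k R), FiniteDimensional k V →
      Module.finrank k V ≤ n → ∀ F₀ : Finset Ω,
      ∃ (F : Finset Ω) (x : (i : Ω) → M i),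
        (∀ i ∉ F, x i = 0) ∧ (∀ i ∈ F, i ∉ F₀) ∧
        (∀ r ∈ V, (∀ i, r • x i = 0) → r ∈ I) := by
    intro n
    induction n with
    | zero =>
      intro V hFD hrk F₀
      haveI := hFD
      have hV : V = ⊥ := Submodule.finrank_eq_zero.1 (Nat.le_zero.1 hrk)
      refine ⟨∅, 0, fun i _ => rfl, fun i hi => absurd hi (Finset.notMem_empty i), ?_⟩
      intro r hrV _
      rw [hV, Submodule.mem_bot] at hrV
      rw [hrV]; exact I.zero_mem
    | succ n ih =>
      intro V hFD hrk F₀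
      haveI := hFD
      by_cases hVI : ∀ r ∈ V, r ∈ I
      · exact ⟨∅, 0, fun i _ => rfl, fun i hi => absurd hi (Finset.notMem_empty i),
          fun r hrV _ => hVI r hrV⟩
      · push_neg at hVI
        obtain ⟨r, hrV, hrI⟩ := hVI
        obtain ⟨i, hiF₀, m, hm⟩ := key r hrI F₀
        set W : Submodule k R := annV k V m with hW
        have hWV : W ≤ V := fun y hy => hy.1
        haveI : FiniteDimensional k W := Submodule.finiteDimensional_of_le hWV
        have hWlt : W < V := lt_of_le_of_ne hWV (by
          intro hEq
          have : r ∈ W := hEq ▸ hrV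
          exact hm this.2)
        have hrkW : Module.finrank k W ≤ n := by
          have := Submodule.finrank_lt_finrank_of_lt hWlt
          omega
        obtain ⟨F', x', hsupp', hdisj', hkill'⟩ := ih W ‹_› hrkW (insert i F₀)
        have hiF' : i ∉ F' := fun hi => (hdisj' i hi) (Finset.mem_insert_self i F₀)
        refine ⟨insert i F', Function.update x' i m, ?_, ?_, ?_⟩
        · intro j hj
          rw [Finset.mem_insert, not_or] at hj
          rw [Function.update_of_ne hj.1]
          exact hsupp' j hj.2
        · intro j hj
          rcases Finset.mem_insert.1 hj with hj | hj
          · exact hj ▸ hiF₀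
          · exact fun hjF₀ => (hdisj' j hj) (Finset.mem_insert_of_mem hjF₀)
        · intro s hsV hs
          have hsm : s • m = 0 := by
            have := hs i
            rwa [Function.update_self] at this
          have hsW : s ∈ W := ⟨hsV, hsm⟩
          refine hkill' s hsW ?_
          intro j
          by_cases hji : j = i
          · subst hji
            rw [hsupp' j hiF', smul_zero]
          · have := hs j
            rwa [Function.update_of_ne hji] at this
  -- A countable spanning family s : ℕ → R.
  obtain ⟨s, hs⟩ : ∃ s : ℕ → R, Submodule.span k (Set.range s) = ⊤ := by
    set B := Module.Basis.ofVectorSpaceIndex k R with hB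
    have hcard : Cardinal.mk ↥B ≤ Cardinal.aleph0 := by
      rw [(Module.Basis.ofVectorSpace k R).mk_eq_rank'']
      exact hcount
    have hBc : (B : Set R).Countable := by
      rwa [← Set.countable_coe_iff, ← Cardinal.mk_le_aleph0_iff]
    have hBspan : Submodule.span k (B : Set R) = ⊤ := by
      rw [← (Module.Basis.ofVectorSpace k R).span_eq, Module.Basis.range_ofVectorSpace]
    have hc2 : ((B : Set R) ∪ {0}).Countable := hBc.union (Set.countable_singleton 0)
    have hne : ((B : Set R) ∪ {0}).Nonempty := ⟨0, Or.inr rfl⟩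
    obtain ⟨s, hs⟩ := hc2.exists_eq_range hne
    refine ⟨s, ?_⟩
    rw [← hs, Submodule.span_union, hBspan, top_sup_eq]
  -- The increasing chain of finite-dimensional subspaces.
  set T : ℕ → Submodule k R := fun n => Submodule.span k (s '' Set.Iio n) with hT
  have hTfd : ∀ n, FiniteDimensional k (T n) := fun n =>
    FiniteDimensional.span_of_finite k ((Set.finite_Iio n).image s)
  have hTall : ∀ r : R, ∃ n, r ∈ T n := by
    intro r
    have hr : r ∈ Submodule.span k (Set.range s) := by rw [hs]; trivial
    obtain ⟨t, hts, hrt⟩ := Submodule.mem_span_finite_of_mem_span hr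
    by_cases hte : t.Nonempty
    · -- each element of t is s j for some j; bound the j's
      have : ∀ y ∈ t, ∃ j : ℕ, s j = y := fun y hy => hts hy
      choose g hg using this
      obtain ⟨N, hN⟩ : ∃ N, ∀ y (hy : y ∈ t), g y hy < N := by
        refine ⟨(t.attach.sup fun y => g y.1 y.2) + 1, fun y hy => ?_⟩
        have h2 : g y hy ≤ t.attach.sup fun y => g y.1 y.2 :=
          Finset.le_sup (f := fun y : {x // x ∈ t} => g y.1 y.2)
            (Finset.mem_attach t ⟨y, hy⟩)
        omega
      refine ⟨N, Submodule.span_mono ?_ hrt⟩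
      intro y hy
      exact ⟨g y hy, hN y hy, hg y hy⟩
    · rw [Finset.not_nonempty_iff_eq_empty] at hte
      subst hte
      have hr0 : r = 0 := by simpa using hrt
      exact ⟨0, hr0 ▸ (T 0).zero_mem⟩
  -- Choose the stage data.
  have main : ∀ (n : ℕ) (F₀ : Finset Ω), ∃ (F : Finset Ω) (x : (i : Ω) → M i),
      (∀ i ∉ F, x i = 0) ∧ (∀ i ∈ F, i ∉ F₀) ∧
      (∀ r ∈ T n, (∀ i, r • x i = 0) → r ∈ I) :=
    fun n F₀ => stepA (Module.finrank k (T n)) (T n) (hTfd n) le_rfl F₀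
  choose Fn xn hsupp hdisj hkill using main
  -- Cumulative supports.
  set q : ℕ → Finset Ω := fun n => Nat.rec ∅ (fun m acc => acc ∪ Fn m acc) n with hq
  have hq0 : q 0 = ∅ := rfl
  have hqs : ∀ n, q (n + 1) = q n ∪ Fn n (q n) := fun n => rfl
  set F : ℕ → Finset Ω := fun n => Fn n (q n) with hF
  set y : ℕ → (i : Ω) → M i := fun n => xn n (q n) with hy
  have hqmono : ∀ m n, m ≤ n → q m ⊆ q n := by
    intro m n hmn
    induction n with
    | zero => rw [Nat.le_zero.1 hmn]
    | succ n ih =>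
      rcases Nat.lt_or_ge m (n + 1) with h | h
      · refine (ih (Nat.lt_succ_iff.1 h)).trans ?_
        rw [hqs]; exact Finset.subset_union_left
      · rw [Nat.le_antisymm hmn h]
  have hFq : ∀ m n, m < n → F m ⊆ q n := by
    intro m n hmn
    refine Finset.Subset.trans ?_ (hqmono (m + 1) n hmn)
    rw [hqs]; exact Finset.subset_union_right
  have hFdisj : ∀ {m n : ℕ}, m ≠ n → ∀ i ∈ F m, i ∉ F n := by
    have base : ∀ {m n : ℕ}, m < n → ∀ i ∈ F m, i ∉ F n := by
      intro m n hmn i him hin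
      exact hdisj n (q n) i hin (hFq m n hmn him)
    intro m n hmn i him hin
    rcases Nat.lt_or_ge m n with h | h
    · exact base h i him hin
    · exact base (lt_of_le_of_ne h (Ne.symm hmn)) i hin him
  -- The combined element x.
  set x : (i : Ω) → M i := fun i =>
    if h : ∃ n, i ∈ F n then y (Nat.find h) i else 0 with hx
  have hxF : ∀ n i, i ∈ F n → x i = y n i := by
    intro n i hi
    have hex : ∃ m, i ∈ F m := ⟨n, hi⟩
    have hfind : Nat.find hex = n := by
      have h1 := Nat.find_spec hex
      by_contra hne
      exact hFdisj hne i h1 hi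
    rw [hx]
    simp only [dif_pos hex, hfind]
  refine ⟨{ toFun := fun r => r • x
            map_add' := fun a b => add_smul a b x
            map_smul' := fun a b => mul_smul a b x }, ?_⟩
  ext r
  simp only [SetLike.mem_coe, LinearMap.mem_ker, LinearMap.coe_mk, AddHom.coe_mk]
  constructor
  · intro hr
    obtain ⟨n, hn⟩ := hTall r
    refine hkill n (q n) r hn ?_
    intro i
    by_cases hi : i ∈ F n
    · show r • y n i = 0
      rw [← hxF n i hi]
      exact congrFun hr i
    · rw [hsupp n (q n) i hi, smul_zero]
  · intro hr
    funext i
    exact key2 r hr i (x i)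
end

section
/- Let k be a field and R a k-algebra of countable k-vector-space dimension, and suppose (M_i)_{i∈Ω} is a family of left R-modules such that ∏_{i∈Ω'} M_i is a faithful R-module for every cofinite subset Ω' ⊆ Ω. Then there exists x ∈ ∏_{i∈Ω} M_i with zero left annihilator in R; in particular R embeds as a left R-module into ∏_{i∈Ω} M_i. -/
universe u v

section Aux

variable {k : Type u} [Field k] {R : Type u} [Ring R] [Algebra k R]

/-- The annihilator of an element of an `R`-module, as a `k`-submodule of `R`. -/
def annSub (k : Type u) [Field k] {R : Type u} [Ring R] [Algebra k R]
    {N : Type*} [AddCommGroup N] [Module R N] (m : N) : Submodule k R where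
  carrier := {r | r • m = 0}
  add_mem' := by
    intro a b ha hb
    simp only [Set.mem_setOf_eq] at *
    rw [add_smul, ha, hb, add_zero]
  zero_mem' := zero_smul R m
  smul_mem' := by
    intro a r hr
    simp only [Set.mem_setOf_eq] at *
    rw [Algebra.smul_def, mul_smul, hr, smul_zero]

lemma mem_annSub {N : Type u} [AddCommGroup N] [Module R N] {m : N} {r : R} :
    r ∈ annSub k m ↔ r • m = 0 := Iff.rfl

variable {Ω : Type v} {M : Ω → Type u} [∀ i, AddCommGroup (M i)] [∀ i, Module R (M i)]

lemma keyL (hfaith : ∀ Ω' : Set Ω, Ω'ᶜ.Finite →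
      ∀ r : R, (∀ x : (i : Ω') → M i, r • x = 0) → r = 0) :
    ∀ (d : ℕ) (A : Submodule k R), FiniteDimensional k A → Module.finrank k A ≤ d →
      ∀ T : Set Ω, T.Finite →
      ∃ x : ∀ i, M i, (∀ i ∈ T, x i = 0) ∧ {i | x i ≠ 0}.Finite ∧
        ∀ r ∈ A, r • x = 0 → r = 0 := by
  classical
  intro d
  induction d with
  | zero =>
    intro A hA hr T hT
    refine ⟨0, fun i _ => rfl, by simp, ?_⟩
    haveI := hA
    have hbot : A = ⊥ := Submodule.finrank_eq_zero.mp (Nat.le_zero.mp hr)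
    intro r hrA _
    rw [hbot] at hrA
    simpa using hrA
  | succ d ih =>
    intro A hA hrank T hT
    haveI := hA
    by_cases hz : ∀ r ∈ A, r = 0
    · exact ⟨0, fun i _ => rfl, by simp, fun r hr _ => hz r hr⟩
    push_neg at hz
    obtain ⟨r₀, hr₀A, hr₀⟩ := hz
    have hy : ∃ y : (i : ↥(Tᶜ)) → M i, r₀ • y ≠ 0 := by
      by_contra h
      push_neg at h
      exact hr₀ (hfaith Tᶜ (by simpa using hT) r₀ h)
    obtain ⟨y, hy⟩ := hy
    have hj : ∃ j : ↥(Tᶜ), r₀ • y j ≠ 0 := by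
      by_contra h
      push_neg at h
      exact hy (funext fun j => h j)
    obtain ⟨j, hjm⟩ := hj
    set m : M (j : Ω) := y j with hm
    set A' : Submodule k R := A ⊓ annSub k m with hA'
    haveI : FiniteDimensional k A' := Submodule.finiteDimensional_of_le inf_le_left
    have hlt : A' < A := lt_of_le_of_ne inf_le_left (by
      intro h
      have hmem : r₀ ∈ A' := h ▸ hr₀A
      exact hjm hmem.2)
    have hfr : Module.finrank k A' ≤ d := by
      have := Submodule.finrank_lt_finrank_of_lt hlt
      omega
    obtain ⟨x', hx'T, hx'fin, hx'ann⟩ :=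
      ih A' ‹_› hfr (T ∪ {(j : Ω)}) (hT.union (Set.finite_singleton _))
    refine ⟨Function.update x' (j : Ω) m, ?_, ?_, ?_⟩
    · intro i hiT
      have hij : i ≠ (j : Ω) := by
        intro h; exact j.2 (h ▸ hiT)
      rw [Function.update_of_ne hij]
      exact hx'T i (Set.mem_union_left _ hiT)
    · apply (hx'fin.union (Set.finite_singleton (j : Ω))).subset
      intro i hi
      by_cases h : i = (j : Ω)
      · exact Set.mem_union_right _ h
      · left; rwa [Set.mem_setOf_eq, Function.update_of_ne h] at hi
    · intro r hrA hrx
      have hrm : r • m = 0 := by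
        have h1 := congrFun hrx (j : Ω)
        rwa [Pi.smul_apply, Function.update_self, Pi.zero_apply] at h1
      have hrA' : r ∈ A' := ⟨hrA, hrm⟩
      apply hx'ann r hrA'
      funext i
      by_cases h : i = (j : Ω)
      · subst h
        rw [Pi.smul_apply, hx'T _ (Set.mem_union_right _ rfl), smul_zero, Pi.zero_apply]
      · have h1 := congrFun hrx i
        rwa [Pi.smul_apply, Function.update_of_ne h] at h1

lemma exists_ann_zero (c : ℕ → R) (hc : Submodule.span k (Set.range c) = ⊤)
    (hfaith : ∀ Ω' : Set Ω, Ω'ᶜ.Finite →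
      ∀ r : R, (∀ x : (i : Ω') → M i, r • x = 0) → r = 0) :
    ∃ x : ∀ i, M i, ∀ r : R, r • x = 0 → r = 0 := by
  classical
  -- every element lies in the span of an initial segment
  have hmemV : ∀ r : R, ∃ n, r ∈ Submodule.span k (c '' Set.Iio n) := by
    intro r
    have hr : r ∈ Submodule.span k (Set.range c) := hc ▸ Submodule.mem_top
    obtain ⟨t, htsub, htmem⟩ := Submodule.mem_span_finite_of_mem_span hr
    have hex : ∀ e ∈ t, ∃ m : ℕ, c m = e := fun e he => htsub he
    choose g hg using hex
    refine ⟨(t.attach.sup fun e => g e.1 e.2) + 1, Submodule.span_mono ?_ htmem⟩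
    intro e he
    have het : e ∈ t := he
    refine ⟨g e het, ?_, hg e het⟩
    have : g e het ≤ t.attach.sup fun e => g e.1 e.2 :=
      Finset.le_sup (f := fun e : ↥t => g e.1 e.2) (Finset.mem_attach t ⟨e, het⟩)
    exact Nat.lt_succ_of_le this
  -- the inductive step
  let Q : ℕ → ((∀ i, M i) × Set Ω) → Prop := fun n s =>
    s.2.Finite ∧ (∀ i ∉ s.2, s.1 i = 0) ∧
      ∀ r ∈ Submodule.span k (c '' Set.Iio n), r • s.1 = 0 → r = 0
  have hQ0 : Q 0 (0, ∅) := by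
    refine ⟨Set.finite_empty, fun i _ => rfl, ?_⟩
    intro r hr _
    have hempty : Set.Iio (0 : ℕ) = ∅ := by ext x; simp
    rw [hempty, Set.image_empty, Submodule.span_empty, Submodule.mem_bot] at hr
    exact hr
  have hstep : ∀ n s, Q n s →
      ∃ s', Q (n+1) s' ∧ s.2 ⊆ s'.2 ∧ ∀ i ∈ s.2, s'.1 i = s.1 i := by
    rintro n ⟨x, T⟩ ⟨hTfin', hx0', _hxann⟩
    have hTfin : T.Finite := hTfin'
    have hx0 : ∀ i ∉ T, x i = 0 := hx0'
    haveI : FiniteDimensional k (Submodule.span k (c '' Set.Iio (n+1))) :=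
      FiniteDimensional.span_of_finite k ((Set.finite_Iio (n+1)).image c)
    set A : Submodule k R := Submodule.span k (c '' Set.Iio (n+1)) ⊓ annSub k x with hAdef
    haveI : FiniteDimensional k A := Submodule.finiteDimensional_of_le inf_le_left
    obtain ⟨z, hzT, hzfin, hzann⟩ := keyL hfaith (Module.finrank k A) A ‹_› le_rfl T hTfin
    refine ⟨(x + z, T ∪ {i | z i ≠ 0}), ⟨hTfin.union hzfin, ?_, ?_⟩,
      Set.subset_union_left, ?_⟩
    · intro i hi
      have hiT : i ∉ T := fun h => hi (Set.mem_union_left _ h)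
      have hiz : z i = 0 := by
        by_contra h
        exact hi (Set.mem_union_right _ h)
      show x i + z i = 0
      rw [hx0 i hiT, hiz, add_zero]
    · intro r hrV hrxz'
      have hrxz : r • (x + z) = 0 := hrxz'
      have hrx : r • x = 0 := by
        funext i
        rw [Pi.smul_apply, Pi.zero_apply]
        by_cases hiT : i ∈ T
        · have h1 := congrFun hrxz i
          rw [Pi.smul_apply, Pi.add_apply, hzT i hiT, add_zero, Pi.zero_apply] at h1
          exact h1
        · rw [hx0 i hiT, smul_zero]
      have hrA : r ∈ A := ⟨hrV, hrx⟩
      apply hzann r hrA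
      have hzz : r • z = r • (x + z) - r • x := by rw [smul_add]; abel
      rw [hzz, hrxz, hrx, sub_zero]
    · intro i hiT
      show x i + z i = x i
      rw [hzT i hiT, add_zero]
  -- build the sequence
  choose F hF using hstep
  let g : (n : ℕ) → {s : (∀ i, M i) × Set Ω // Q n s} :=
    fun n => Nat.rec ⟨(0, ∅), hQ0⟩ (fun n p => ⟨F n p.1 p.2, (hF n p.1 p.2).1⟩) n
  let X : ℕ → ∀ i, M i := fun n => (g n).1.1
  let T : ℕ → Set Ω := fun n => (g n).1.2
  have hQseq : ∀ n, Q n ((g n).1) := fun n => (g n).2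
  have hrel : ∀ n, T n ⊆ T (n+1) ∧ ∀ i ∈ T n, X (n+1) i = X n i :=
    fun n => (hF n (g n).1 (g n).2).2
  have hTmono : ∀ n m, n ≤ m → T n ⊆ T m := by
    intro n m h
    induction m, h using Nat.le_induction with
    | base => exact subset_rfl
    | succ m hm ih => exact ih.trans (hrel m).1
  have hstab : ∀ n m, n ≤ m → ∀ i ∈ T n, X m i = X n i := by
    intro n m h
    induction m, h using Nat.le_induction with
    | base => intro i _; rfl
    | succ m hm ih =>
      intro i hi
      rw [(hrel m).2 i (hTmono n m hm hi), ih i hi]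
  let xI : ∀ i, M i := fun i => if h : ∃ n, i ∈ T n then X h.choose i else 0
  have hxI : ∀ n, ∀ i ∈ T n, xI i = X n i := by
    intro n i hi
    have h : ∃ m, i ∈ T m := ⟨n, hi⟩
    show (if h : ∃ n, i ∈ T n then X h.choose i else 0) = X n i
    rw [dif_pos h]
    have h1 : X (max n h.choose) i = X h.choose i :=
      hstab _ _ (le_max_right _ _) i h.choose_spec
    have h2 : X (max n h.choose) i = X n i := hstab _ _ (le_max_left _ _) i hi
    rw [← h1, h2]
  refine ⟨xI, ?_⟩
  intro r hr
  obtain ⟨n, hn⟩ := hmemV r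
  apply (hQseq n).2.2 r hn
  show r • X n = 0
  funext i
  rw [Pi.smul_apply, Pi.zero_apply]
  by_cases hi : i ∈ T n
  · rw [← hxI n i hi]
    have := congrFun hr i
    rwa [Pi.smul_apply, Pi.zero_apply] at this
  · have h0 : X n i = 0 := (hQseq n).2.1 i hi
    rw [h0, smul_zero]

end Aux

/-- Let `k` be a field, `R` a `k`-algebra of countable vector space
dimension, and `(Mᵢ)_{i∈Ω}` a family of left `R`-modules such that `∏_{i∈Ω'} Mᵢ` is
faithful for every cofinite `Ω' ⊆ Ω`.  Then some `x ∈ ∏_{i∈Ω} Mᵢ` has zero left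
annihilator; in particular `R` embeds as a left `R`-module into `∏_{i∈Ω} Mᵢ`. -/
theorem stmt9 (k : Type u) [Field k] (R : Type u) [Ring R] [Algebra k R]
    (hcount : Module.rank k R ≤ Cardinal.aleph0)
    (Ω : Type v) (M : Ω → Type u)
    [∀ i, AddCommGroup (M i)] [∀ i, Module R (M i)]
    (hfaith : ∀ Ω' : Set Ω, Ω'ᶜ.Finite →
      ∀ r : R, (∀ x : (i : Ω') → M i, r • x = 0) → r = 0) :
    (∃ x : (i : Ω) → M i, ∀ r : R, r • x = 0 → r = 0) ∧
      ∃ f : R →ₗ[R] ((i : Ω) → M i), Function.Injective f := by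
  classical
  obtain ⟨c, hc⟩ : ∃ c : ℕ → R, Submodule.span k (Set.range c) = ⊤ := by
    have b := Module.Basis.ofVectorSpace k R
    have hcard : Countable (Module.Basis.ofVectorSpaceIndex k R) := by
      exact Cardinal.mk_le_aleph0_iff.mp (le_trans (le_of_eq b.mk_eq_rank'') hcount)
    have hScount : (insert (0:R) (Module.Basis.ofVectorSpaceIndex k R)).Countable :=
      (Set.countable_coe_iff.mp hcard).insert 0
    obtain ⟨c, hc⟩ := hScount.exists_eq_range ⟨0, Set.mem_insert _ _⟩
    refine ⟨c, ?_⟩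
    rw [← hc, Submodule.span_insert_zero]
    have hspan : Submodule.span k (Set.range (Module.Basis.ofVectorSpace k R)) = ⊤ :=
      (Module.Basis.ofVectorSpace k R).span_eq
    rwa [Module.Basis.range_ofVectorSpace] at hspan
  obtain ⟨x, hx⟩ := exists_ann_zero (M := M) c hc hfaith
  refine ⟨⟨x, hx⟩, ?_⟩
  refine ⟨{ toFun := fun r => r • x,
            map_add' := fun a b => add_smul a b x,
            map_smul' := fun a b => mul_smul a b x }, ?_⟩
  intro a b hab
  have h : (a - b) • x = 0 := by
    simp only [LinearMap.coe_mk, AddHom.coe_mk] at hab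
    rw [sub_smul, hab, sub_self]
  have := hx (a - b) h
  exact sub_eq_zero.mp this
end

section
/- Let k be a field, R a k-algebra of countable k-vector-space dimension satisfying the ascending chain condition on semiprimitive two-sided ideals. Then every closed subset of Irr R under the refined Zariski topology equals V(I) ∪ S for some semiprimitive ideal I of R and finite subset S ⊆ Irr R; consequently the refined Zariski topology coincides with the point closure of the Zariski topology and is noetherian. -/
set_option maxHeartbeats 1000000
set_option synthInstance.maxHeartbeats 400000


universe u v w

universe u'

namespace Stmt10Aux

open Function Submodule LinearMap
open scoped Classical

variable {R : Type u} [Ring R]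

/-- Abbreviation for the carrier of the representative. -/
abbrev Np (p : Irr R) : Type u := (Irr.Rep p).carrier

theorem subquot_of_le_ker {M : Type v} [AddCommGroup M] [Module R M]
    {N : Type w} [AddCommGroup N] [Module R N]
    {W : Type u'} [AddCommGroup W] [Module R W]
    (g : W →ₗ[R] M) (h : W →ₗ[R] N) (hker : LinearMap.ker g ≤ LinearMap.ker h)
    (hh : Function.Surjective h) : IsSubquotient R M N := by
  refine ⟨LinearMap.range g,
    ((LinearMap.ker g).liftQ h hker).comp (LinearMap.quotKerEquivRange g).symm.toLinearMap, ?_⟩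
  have h1 : Function.Surjective ⇑((LinearMap.ker g).liftQ h hker) := by
    intro n
    obtain ⟨x, rfl⟩ := hh n
    exact ⟨Submodule.Quotient.mk x, Submodule.liftQ_apply _ _ _⟩
  rw [LinearMap.coe_comp]
  exact h1.comp (LinearMap.quotKerEquivRange g).symm.surjective

theorem isSubquotient_of_injective {M : Type v} [AddCommGroup M] [Module R M]
    {M' : Type u'} [AddCommGroup M'] [Module R M']
    {N : Type w} [AddCommGroup N] [Module R N]
    (ι : M' →ₗ[R] M) (hι : Function.Injective ι) (hsq : IsSubquotient R M' N) :
    IsSubquotient R M N := by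
  obtain ⟨A, f, hf⟩ := hsq
  refine subquot_of_le_ker (ι.comp A.subtype) f ?_ hf
  have : LinearMap.ker (ι.comp A.subtype) = ⊥ :=
    LinearMap.ker_eq_bot.mpr (hι.comp A.injective_subtype)
  rw [this]
  exact bot_le

/-- Restriction map between products. -/
noncomputable def restrictP {Y X : Set (Irr R)} (h : Y ⊆ X) :
    ((p : X) → Np (p : Irr R)) →ₗ[R] ((p : Y) → Np (p : Irr R)) :=
  LinearMap.pi (fun p => LinearMap.proj (⟨(p : Irr R), h p.2⟩ : X))

@[simp] theorem restrictP_apply {Y X : Set (Irr R)} (h : Y ⊆ X)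
    (a : (p : X) → Np (p : Irr R)) (p : Y) :
    restrictP h a p = a ⟨(p : Irr R), h p.2⟩ := rfl

/-- Extension by zero. -/
noncomputable def extMap {Y X : Set (Irr R)} (h : Y ⊆ X) :
    ((p : Y) → Np (p : Irr R)) →ₗ[R] ((p : X) → Np (p : Irr R)) where
  toFun a := fun p => if hp : (p : Irr R) ∈ Y then a ⟨p, hp⟩ else 0
  map_add' a b := by
    funext p
    by_cases hp : (p : Irr R) ∈ Y <;> simp [hp]
  map_smul' r a := by
    funext p
    by_cases hp : (p : Irr R) ∈ Y <;> simp [hp]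

theorem extMap_injective {Y X : Set (Irr R)} (h : Y ⊆ X) :
    Function.Injective (extMap h) := by
  intro a b hab
  funext p
  have := congrFun hab ⟨(p : Irr R), h p.2⟩
  simpa [extMap, p.2] using this

theorem subquot_mono {Y X : Set (Irr R)} (h : Y ⊆ X)
    {N : Type w} [AddCommGroup N] [Module R N]
    (hsq : IsSubquotient R ((p : Y) → Np (p : Irr R)) N) :
    IsSubquotient R ((p : X) → Np (p : Irr R)) N :=
  isSubquotient_of_injective (extMap h) (extMap_injective h) hsq

theorem refinedClosed_VV (I : Set R) : RefinedClosed (VV I) := by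
  rintro q ⟨A, f, hf⟩
  intro r hr m
  obtain ⟨a, rfl⟩ := hf m
  rw [← map_smul]
  have ha : r • a = 0 := by
    apply Subtype.ext
    show r • (a : (p : VV I) → Np (p : Irr R)) = 0
    funext p
    exact p.2 r hr _
  rw [ha, map_zero]

theorem nontrivial_Np (q : Irr R) : Nontrivial (Np q) := by
  haveI := q.Rep.simple
  exact IsSimpleModule.nontrivial R _

theorem refinedClosed_empty : RefinedClosed (∅ : Set (Irr R)) := by
  rintro q ⟨A, f, hf⟩
  exfalso
  haveI := nontrivial_Np q
  obtain ⟨x, y, hxy⟩ := exists_pair_ne (Np q)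
  have hsub : Subsingleton ((p : (∅ : Set (Irr R))) → Np (p : Irr R)) := by
    constructor
    intro a b
    funext p
    exact absurd p.2 (Set.notMem_empty _)
  haveI : Subsingleton (A : Type _) := ⟨fun a b => Subtype.ext (Subsingleton.elim _ _)⟩
  obtain ⟨a, ha⟩ := hf x
  obtain ⟨b, hb⟩ := hf y
  exact hxy (ha ▸ hb ▸ congrArg f (Subsingleton.elim a b))

theorem refinedClosed_sInter {𝒮 : Set (Set (Irr R))} (h : ∀ X ∈ 𝒮, RefinedClosed X) :
    RefinedClosed (⋂₀ 𝒮) := by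
  intro q hq
  rw [Set.mem_sInter]
  intro X hX
  exact h X hX q (subquot_mono (Set.sInter_subset_of_mem hX) hq)


theorem refinedClosed_union {X Y : Set (Irr R)} (hX : RefinedClosed X) (hY : RefinedClosed Y) :
    RefinedClosed (X ∪ Y) := by
  rintro q ⟨A, f, hf⟩
  haveI := q.Rep.simple
  haveI := nontrivial_Np q
  set ρX : ((p : ↥(X ∪ Y)) → Np (p : Irr R)) →ₗ[R] ((p : X) → Np (p : Irr R)) :=
    restrictP Set.subset_union_left with hρX
  set ρY : ((p : ↥(X ∪ Y)) → Np (p : Irr R)) →ₗ[R] ((p : Y) → Np (p : Irr R)) :=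
    restrictP Set.subset_union_right with hρY
  set W : Submodule R A := LinearMap.ker (ρX.comp A.subtype) with hW
  rcases eq_bot_or_eq_top (Submodule.map f W) with hbot | htop
  · -- f kills W ; factor through ρX
    left
    apply hX q
    refine subquot_of_le_ker (ρX.comp A.subtype) f ?_ hf
    intro a ha
    have haW : a ∈ W := ha
    have : f a ∈ Submodule.map f W := ⟨a, haW, rfl⟩
    rw [hbot] at this
    simpa using this
  · -- f surjective on W, and W embeds into the Y-product
    right
    apply hY q
    have hfW : Function.Surjective ⇑(f.comp W.subtype) := by
      intro n
      have : n ∈ Submodule.map f W := htop ▸ Submodule.mem_top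
      obtain ⟨a, haW, ha⟩ := this
      exact ⟨⟨a, haW⟩, ha⟩
    refine subquot_of_le_ker (W := ↥W) ((ρY.comp A.subtype).comp W.subtype) (f.comp W.subtype) ?_ hfW
    intro w hw
    have hY0 : ρY ((A.subtype) ((W.subtype) w)) = 0 := by
      have := hw
      rwa [LinearMap.mem_ker] at this
    have hX0 : ρX ((A.subtype) ((W.subtype) w)) = 0 := by
      have h2 : (w : ↥A) ∈ LinearMap.ker (ρX.comp A.subtype) := w.2
      exact LinearMap.mem_ker.mp h2
    have hval : ((A.subtype) ((W.subtype) w)) = 0 := by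
      funext p
      rcases p.2 with hp | hp
      · exact congrFun hX0 ⟨(p : Irr R), hp⟩
      · exact congrFun hY0 ⟨(p : Irr R), hp⟩
    have : (W.subtype w) = 0 := Subtype.ext hval
    have hw0 : w = 0 := Subtype.ext (by simpa using this)
    simp [hw0]

theorem eq_of_linearEquiv {p q : Irr R} (e : Np p ≃ₗ[R] Np q) : p = q := by
  have h2 : (⟦Irr.Rep p⟧ : Irr R) = ⟦Irr.Rep q⟧ := Quotient.sound ⟨e⟩
  have hp : (⟦Irr.Rep p⟧ : Irr R) = p := Quotient.out_eq p
  have hq : (⟦Irr.Rep q⟧ : Irr R) = q := Quotient.out_eq q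
  rw [hp, hq] at h2
  exact h2

theorem refinedClosed_singleton (p₀ : Irr R) : RefinedClosed ({p₀} : Set (Irr R)) := by
  rintro q ⟨A, f, hf⟩
  haveI := q.Rep.simple
  haveI := nontrivial_Np q
  haveI := p₀.Rep.simple
  -- evaluation map
  set ev : ((p : ({p₀} : Set (Irr R))) → Np (p : Irr R)) →ₗ[R] Np p₀ :=
    LinearMap.proj (⟨p₀, rfl⟩ : ({p₀} : Set (Irr R))) with hev
  have hevinj : Function.Injective ⇑ev := by
    intro a b hab
    funext p
    obtain ⟨pp, hpp⟩ := p
    have hpp' : pp = p₀ := hpp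
    subst hpp'
    exact hab
  set g : A →ₗ[R] Np p₀ := ev.comp A.subtype with hg
  have hginj : Function.Injective ⇑g := hevinj.comp A.injective_subtype
  rcases eq_bot_or_eq_top (LinearMap.range g) with hbot | htop
  · -- A = ⊥ : contradiction with surjectivity onto nontrivial N_q
    exfalso
    obtain ⟨x, y, hxy⟩ := exists_pair_ne (Np q)
    obtain ⟨a, ha⟩ := hf x
    obtain ⟨b, hb⟩ := hf y
    have hab : a = b := by
      apply hginj
      have h1 : g a ∈ LinearMap.range g := ⟨a, rfl⟩
      have h2 : g b ∈ LinearMap.range g := ⟨b, rfl⟩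
      rw [hbot] at h1 h2
      simp only [Submodule.mem_bot] at h1 h2
      rw [h1, h2]
    exact hxy (ha ▸ hb ▸ congrArg f hab)
  · have hgbij : Function.Bijective ⇑g := ⟨hginj, LinearMap.range_eq_top.mp htop⟩
    set e := LinearEquiv.ofBijective g hgbij with he
    set φ : Np p₀ →ₗ[R] Np q := f.comp e.symm.toLinearMap with hφ
    have hφsurj : Function.Surjective ⇑φ := by
      rw [hφ, LinearMap.coe_comp]
      exact hf.comp e.symm.surjective
    have hφinj : Function.Injective ⇑φ := by
      rw [← LinearMap.ker_eq_bot]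
      rcases eq_bot_or_eq_top (LinearMap.ker φ) with h | h
      · exact h
      · exfalso
        obtain ⟨x, y, hxy⟩ := exists_pair_ne (Np q)
        obtain ⟨u, hu⟩ := hφsurj x
        obtain ⟨v, hv⟩ := hφsurj y
        have hu0 : φ u = 0 := by
          have : u ∈ LinearMap.ker φ := h ▸ Submodule.mem_top
          simpa using this
        have hv0 : φ v = 0 := by
          have : v ∈ LinearMap.ker φ := h ▸ Submodule.mem_top
          simpa using this
        rw [hu] at hu0
        rw [hv] at hv0
        exact hxy (hu0.trans hv0.symm)
    have : p₀ = q := eq_of_linearEquiv (LinearEquiv.ofBijective φ ⟨hφinj, hφsurj⟩)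
    exact this.symm


section Alg

variable (k : Type u) [Field k] (R : Type u) [Ring R] [Algebra k R]

/-- Annihilator of an element as a `k`-submodule of `R`. -/
def annE (p : Irr R) (m : Np p) : Submodule k R where
  carrier := {r : R | r • m = 0}
  add_mem' := by
    intro a b ha hb
    show (a + b) • m = 0
    rw [add_smul, ha, hb, add_zero]
  zero_mem' := zero_smul R m
  smul_mem' := by
    intro c r hr
    show (c • r) • m = 0
    rw [Algebra.smul_def, mul_smul, hr, smul_zero]

@[simp] theorem mem_annE {p : Irr R} {m : Np p} {r : R} :
    r ∈ annE k R p m ↔ r • m = 0 := Iff.rfl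

/-- Annihilator of a representative module as a `k`-submodule of `R`. -/
def annM (p : Irr R) : Submodule k R where
  carrier := annSet R (Np p)
  add_mem' := by
    intro a b ha hb m
    rw [add_smul, ha m, hb m, add_zero]
  zero_mem' := fun m => zero_smul R m
  smul_mem' := by
    intro c r hr m
    rw [Algebra.smul_def, mul_smul, hr m, smul_zero]

@[simp] theorem mem_annM {p : Irr R} {r : R} :
    r ∈ annM k R p ↔ ∀ m : Np p, r • m = 0 := Iff.rfl

/-- The semiprimitive ideal attached to a set of points, as a set. -/
def Jset (Y : Set (Irr R)) : Set R := ⋂ p ∈ Y, annSet R (Irr.Rep p).carrier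

theorem mem_Jset {Y : Set (Irr R)} {r : R} :
    r ∈ Jset R Y ↔ ∀ p ∈ Y, ∀ m : Np p, r • m = 0 := by
  simp [Jset, annSet]

theorem semiprimitive_Jset (Y : Set (Irr R)) : Semiprimitive R (Jset R Y) := ⟨Y, rfl⟩

theorem Jset_mono {Y Y' : Set (Irr R)} (h : Y' ⊆ Y) : Jset R Y ⊆ Jset R Y' := by
  intro r hr
  rw [mem_Jset] at hr ⊢
  exact fun p hp => hr p (h hp)

/-- The same ideal as a `k`-submodule. -/
def Jmod (Y : Set (Irr R)) : Submodule k R := ⨅ p ∈ Y, annM k R p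

theorem mem_Jmod {Y : Set (Irr R)} {r : R} :
    r ∈ Jmod k R Y ↔ r ∈ Jset R Y := by
  simp [Jmod, Submodule.mem_iInf, mem_Jset]

/-- A state in the recursive construction: a choice of elements with finite support. -/
structure PState (Y : Set (Irr R)) where
  m : (p : Irr R) → Np p
  supp : Set (Irr R)
  fin : supp.Finite
  sub : supp ⊆ Y
  zero : ∀ p ∉ supp, m p = 0

variable {R}

/-- The common annihilator of the chosen elements. -/
def Kst {Y : Set (Irr R)} (s : PState R Y) : Submodule k R :=
  ⨅ p ∈ s.supp, annE k R p (s.m p)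

theorem mem_Kst {Y : Set (Irr R)} {s : PState R Y} {r : R} :
    r ∈ Kst k s ↔ ∀ p ∈ s.supp, r • s.m p = 0 := by
  simp [Kst, Submodule.mem_iInf]

theorem stage_ex {Y : Set (Irr R)}
    (hINF : ∀ r : R, r ∉ Jset R Y → {p | p ∈ Y ∧ r ∉ annSet R (Np p)}.Infinite)
    (V : Submodule k R) [FiniteDimensional k V] (s : PState R Y) :
    ∃ s' : PState R Y, s.supp ⊆ s'.supp ∧ (∀ p ∈ s.supp, s'.m p = s.m p) ∧
      V ⊓ Kst k s' ≤ Jmod k R Y := by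
  suffices H : ∀ n : ℕ, ∀ s : PState R Y, Module.finrank k ↥(V ⊓ Kst k s) = n →
      ∃ s' : PState R Y, s.supp ⊆ s'.supp ∧ (∀ p ∈ s.supp, s'.m p = s.m p) ∧
        V ⊓ Kst k s' ≤ Jmod k R Y by
    exact H _ s rfl
  intro n
  induction n using Nat.strong_induction_on with
  | _ n IH =>
    intro s hn
    by_cases hle : V ⊓ Kst k s ≤ Jmod k R Y
    · exact ⟨s, subset_rfl, fun _ _ => rfl, hle⟩
    · obtain ⟨r, hrmem, hrJ⟩ := SetLike.not_le_iff_exists.mp hle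
      have hrJ' : r ∉ Jset R Y := fun hc => hrJ ((mem_Jmod k R).mpr hc)
      obtain ⟨p, hp⟩ := ((hINF r hrJ').diff s.fin).nonempty
      have hpY : p ∈ Y := hp.1.1
      have hpns : p ∉ s.supp := hp.2
      obtain ⟨mp, hmp⟩ : ∃ mp : Np p, r • mp ≠ 0 := by
        have h0 := hp.1.2
        simp only [annSet, Set.mem_setOf_eq] at h0
        push_neg at h0
        exact h0
      set s' : PState R Y :=
        { m := Function.update s.m p mp
          supp := insert p s.supp
          fin := s.fin.insert p
          sub := Set.insert_subset hpY s.sub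
          zero := by
            intro p' hp'
            rw [Set.mem_insert_iff] at hp'
            push_neg at hp'
            rw [Function.update_of_ne hp'.1]
            exact s.zero p' hp'.2 } with hs'
      have hagree : ∀ p' ∈ s.supp, s'.m p' = s.m p' := by
        intro p' hp'
        have : p' ≠ p := fun h => hpns (h ▸ hp')
        exact Function.update_of_ne this _ _
      have hKeq : Kst k s' = annE k R p mp ⊓ Kst k s := by
        ext r'
        rw [mem_Kst, Submodule.mem_inf, mem_Kst, mem_annE]
        constructor
        · intro h
          refine ⟨?_, ?_⟩
          · have := h p (Set.mem_insert _ _)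
            rwa [show s'.m p = mp from Function.update_self p mp s.m] at this
          · intro p' hp'
            have := h p' (Set.mem_insert_of_mem _ hp')
            rwa [hagree p' hp'] at this
        · rintro ⟨h1, h2⟩ p' hp'
          rcases Set.mem_insert_iff.mp hp' with h | h
          · subst h
            rwa [show s'.m p' = mp from Function.update_self p' mp s.m]
          · rw [hagree p' h]
            exact h2 p' h
      have hlt : V ⊓ Kst k s' < V ⊓ Kst k s := by
        have hle' : V ⊓ Kst k s' ≤ V ⊓ Kst k s := by
          rw [hKeq]
          exact inf_le_inf_left V inf_le_right
        refine lt_of_le_of_ne hle' (fun heq => ?_)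
        have : r ∈ V ⊓ Kst k s' := heq ▸ hrmem
        rw [Submodule.mem_inf, hKeq, Submodule.mem_inf, mem_annE] at this
        exact hmp this.2.1
      have hfd : FiniteDimensional k ↥(V ⊓ Kst k s) := inferInstance
      have hflt := Submodule.finrank_lt_finrank_of_lt hlt
      rw [hn] at hflt
      obtain ⟨s'', hsub'', hagree'', hK''⟩ :=
        IH _ hflt s' rfl
      refine ⟨s'', ?_, ?_, hK''⟩
      · exact subset_trans (subset_trans (Set.subset_insert p s.supp) subset_rfl) hsub''
      · intro p' hp'
        rw [hagree'' p' (Set.mem_insert_of_mem _ hp'), hagree p' hp']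


theorem exists_spanning_seq (hcount : Module.rank k R ≤ Cardinal.aleph0) :
    ∃ c : ℕ → R, ∀ x : R, x ∈ Submodule.span k (Set.range c) := by
  let b := Module.Basis.ofVectorSpace k R
  have hmk : Cardinal.mk (Module.Basis.ofVectorSpaceIndex k R) = Module.rank k R := b.mk_eq_rank''
  have hcnt : Countable ↥(Module.Basis.ofVectorSpaceIndex k R) :=
    Cardinal.mk_le_aleph0_iff.mp (hmk.trans_le hcount)
  have hs : (Set.range (⇑b) ∪ {0} : Set R).Countable :=
    (Set.countable_range _).union (Set.countable_singleton 0)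
  obtain ⟨c, hcr⟩ := hs.exists_eq_range ⟨0, by simp⟩
  refine ⟨c, fun x => ?_⟩
  have hsp : Submodule.span k (Set.range (⇑b) ∪ {0}) = ⊤ := by
    apply top_unique
    rw [← b.span_eq]
    exact Submodule.span_mono Set.subset_union_left
  rw [← hcr, hsp]
  trivial

theorem main_embed {Y : Set (Irr R)} (hcount : Module.rank k R ≤ Cardinal.aleph0)
    (hINF : ∀ r : R, r ∉ Jset R Y → {p | p ∈ Y ∧ r ∉ annSet R (Np p)}.Infinite) :
    ∃ m : (p : Irr R) → Np p, (∀ p, m p ≠ 0 → p ∈ Y) ∧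
      ∀ r : R, (∀ p, r • m p = 0) → r ∈ Jset R Y := by
  obtain ⟨c, hc⟩ := exists_spanning_seq (R := R) k hcount
  set VS : ℕ → Submodule k R := fun n => Submodule.span k (c '' Set.Iic n) with hVS
  have hVSfd : ∀ n, FiniteDimensional k (VS n) := fun n =>
    FiniteDimensional.span_of_finite k ((Set.finite_Iic n).image c)
  have hVSmono : Monotone VS := fun a b hab =>
    Submodule.span_mono (Set.image_mono (Set.Iic_subset_Iic.mpr hab))
  have hVSmem : ∀ x : R, ∃ n, x ∈ VS n := by
    intro x
    have hx := hc x
    have hru : Set.range c = ⋃ n, c '' Set.Iic n := by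
      ext y
      constructor
      · rintro ⟨i, rfl⟩
        exact Set.mem_iUnion.mpr ⟨i, ⟨i, Set.mem_Iic.mpr le_rfl, rfl⟩⟩
      · intro hy
        obtain ⟨n, i, _, rfl⟩ := by simpa using hy
        exact ⟨i, rfl⟩
    rw [hru, Submodule.span_iUnion] at hx
    exact (Submodule.mem_iSup_of_chain ⟨VS, hVSmono⟩ x).mp hx
  have step : ∀ (n : ℕ) (s : PState R Y), ∃ s' : PState R Y, s.supp ⊆ s'.supp ∧
      (∀ p ∈ s.supp, s'.m p = s.m p) ∧ VS n ⊓ Kst k s' ≤ Jmod k R Y := by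
    intro n s
    haveI := hVSfd n
    exact stage_ex k hINF (VS n) s
  choose nxt hsub hagr hK using step
  set s0 : PState R Y := ⟨fun _ => 0, ∅, Set.finite_empty, Set.empty_subset _, fun _ _ => rfl⟩
    with hs0
  set ch : ℕ → PState R Y := fun n => Nat.rec s0 (fun n s => nxt n s) n with hch
  have hchS : ∀ n, ch (n+1) = nxt n (ch n) := fun n => rfl
  have hmono : ∀ a b, a ≤ b → (ch a).supp ⊆ (ch b).supp := by
    intro a b hab
    induction b, hab using Nat.le_induction with
    | base => exact subset_rfl
    | succ b hab ih =>
        refine subset_trans ih ?_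
        rw [hchS b]
        exact hsub b (ch b)
  have hag : ∀ a b, a ≤ b → ∀ p ∈ (ch a).supp, (ch b).m p = (ch a).m p := by
    intro a b hab
    induction b, hab using Nat.le_induction with
    | base => intro p _; rfl
    | succ b hab ih =>
        intro p hp
        rw [hchS b, hagr b (ch b) p (hmono a b hab hp)]
        exact ih p hp
  set mfin : (p : Irr R) → Np p := fun p =>
    if h : ∃ n, p ∈ (ch n).supp then (ch h.choose).m p else 0 with hmfin
  have hmfin_eq : ∀ n p, p ∈ (ch n).supp → mfin p = (ch n).m p := by
    intro n p hp
    have hex : ∃ n, p ∈ (ch n).supp := ⟨n, hp⟩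
    rw [hmfin]
    simp only [dif_pos hex]
    have h1 := hex.choose_spec
    rw [← hag hex.choose (max hex.choose n) (le_max_left _ _) p h1]
    exact hag n (max hex.choose n) (le_max_right _ _) p hp
  refine ⟨mfin, ?_, ?_⟩
  · intro p hp
    by_cases hex : ∃ n, p ∈ (ch n).supp
    · exact (ch hex.choose).sub hex.choose_spec
    · exfalso
      apply hp
      rw [hmfin]
      simp only [dif_neg hex]
  · intro r hr
    obtain ⟨n, hn⟩ := hVSmem r
    have hrK : r ∈ Kst k (ch (n+1)) := by
      rw [mem_Kst]
      intro p hp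
      rw [← hmfin_eq (n+1) p hp]
      exact hr p
    have hmem : r ∈ VS n ⊓ Kst k (nxt n (ch n)) := by
      rw [Submodule.mem_inf]
      exact ⟨hn, by rw [← hchS n]; exact hrK⟩
    exact (mem_Jmod k R).mp (hK n (ch n) hmem)


theorem subquot_of_VV {X Y : Set (Irr R)} (hYX : Y ⊆ X)
    (hcount : Module.rank k R ≤ Cardinal.aleph0)
    (hINF : ∀ r : R, r ∉ Jset R Y → {p | p ∈ Y ∧ r ∉ annSet R (Np p)}.Infinite)
    (q : Irr R) (hq : q ∈ VV (Jset R Y)) :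
    IsSubquotient R ((p : X) → Np (p : Irr R)) (Np q) := by
  obtain ⟨m, hsupp, hKp⟩ := main_embed k hcount hINF
  haveI := q.Rep.simple
  haveI := nontrivial_Np q
  obtain ⟨n₀, hn₀⟩ := exists_ne (0 : Np q)
  set φ : R →ₗ[R] ((p : X) → Np (p : Irr R)) :=
    { toFun := fun r => fun p => r • m (p : Irr R)
      map_add' := by intro a b; funext p; simp [add_smul]
      map_smul' := by intro a x; funext p; simp [mul_smul, smul_eq_mul] } with hφ
  set ψ : R →ₗ[R] Np q :=
    { toFun := fun r => r • n₀
      map_add' := by intro a b; simp [add_smul]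
      map_smul' := by intro a x; simp [mul_smul, smul_eq_mul] } with hψ
  have hsurj : Function.Surjective ⇑ψ := by
    rcases eq_bot_or_eq_top (LinearMap.range ψ) with hbot | htop
    · exfalso
      have h1 : ψ 1 ∈ LinearMap.range ψ := ⟨1, rfl⟩
      rw [hbot] at h1
      simp only [Submodule.mem_bot] at h1
      apply hn₀
      rw [← one_smul R n₀]
      exact h1
    · exact LinearMap.range_eq_top.mp htop
  apply subquot_of_le_ker φ ψ ?_ hsurj
  intro r hrk
  have h0 : ∀ p : X, r • m (p : Irr R) = 0 := fun p =>
    congrFun (LinearMap.mem_ker.mp hrk) p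
  have hall : ∀ p, r • m p = 0 := by
    intro p
    by_cases hp : p ∈ X
    · exact h0 ⟨p, hp⟩
    · by_cases hz : m p = 0
      · rw [hz, smul_zero]
      · exact absurd (hYX (hsupp p hz)) hp
  have hrJ : r ∈ Jset R Y := hKp r hall
  rw [LinearMap.mem_ker]
  exact hq r hrJ n₀

theorem exists_max_F
    (hacc : ∀ f : ℕ → Set R, (∀ n, Semiprimitive R (f n)) → (∀ n, f n ⊆ f (n + 1)) →
      ∃ n, ∀ m, n ≤ m → f m = f n) (X : Set (Irr R)) :
    ∃ F : Set (Irr R), F.Finite ∧ ∀ G : Set (Irr R), G.Finite →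
      Jset R (X \ (F ∪ G)) = Jset R (X \ F) := by
  by_contra hcon
  push_neg at hcon
  have step : ∀ F : {F : Set (Irr R) // F.Finite}, ∃ F' : {F : Set (Irr R) // F.Finite},
      Jset R (X \ F.1) ⊆ Jset R (X \ F'.1) ∧ Jset R (X \ F.1) ≠ Jset R (X \ F'.1) := by
    rintro ⟨F, hF⟩
    obtain ⟨G, hG, hne⟩ := hcon F hF
    refine ⟨⟨F ∪ G, hF.union hG⟩, ?_, ?_⟩
    · exact Jset_mono R (Set.diff_subset_diff_right Set.subset_union_left)
    · exact fun h => hne h.symm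
  choose nxt h1 h2 using step
  set seq : ℕ → {F : Set (Irr R) // F.Finite} :=
    fun n => Nat.rec ⟨∅, Set.finite_empty⟩ (fun _ F => nxt F) n with hseq
  have hseqS : ∀ n, seq (n+1) = nxt (seq n) := fun n => rfl
  obtain ⟨n, hn⟩ := hacc (fun n => Jset R (X \ (seq n).1))
    (fun n => semiprimitive_Jset R _)
    (fun n => by show Jset R (X \ (seq n).1) ⊆ Jset R (X \ (seq (n+1)).1); rw [hseqS n]; exact h1 (seq n))
  have heq := hn (n+1) (Nat.le_succ n)
  rw [hseqS n] at heq
  exact h2 (seq n) heq.symm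

theorem core
    (hcount : Module.rank k R ≤ Cardinal.aleph0)
    (hacc : ∀ f : ℕ → Set R, (∀ n, Semiprimitive R (f n)) → (∀ n, f n ⊆ f (n + 1)) →
      ∃ n, ∀ m, n ≤ m → f m = f n)
    {X : Set (Irr R)} (hX : RefinedClosed X) :
    ∃ F : Set (Irr R), F.Finite ∧
      (∀ G : Set (Irr R), G.Finite → Jset R (X \ (F ∪ G)) = Jset R (X \ F)) ∧
      VV (Jset R (X \ F)) ⊆ X ∧ X \ VV (Jset R (X \ F)) ⊆ F := by
  obtain ⟨F, hF, hmax⟩ := exists_max_F (R := R) hacc X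
  refine ⟨F, hF, hmax, ?_, ?_⟩
  · have hINF : ∀ r : R, r ∉ Jset R (X \ F) →
        {p | p ∈ X \ F ∧ r ∉ annSet R (Np p)}.Infinite := by
      intro r hr
      by_contra hfin
      rw [Set.not_infinite] at hfin
      apply hr
      have heq := hmax {p | p ∈ X \ F ∧ r ∉ annSet R (Np p)} hfin
      rw [← heq, mem_Jset]
      intro p hp mm
      have hpXF : p ∈ X \ F := ⟨hp.1, fun h => hp.2 (Or.inl h)⟩
      have hpG : p ∉ {p | p ∈ X \ F ∧ r ∉ annSet R (Np p)} := fun h => hp.2 (Or.inr h)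
      have hra : r ∈ annSet R (Np p) := by
        by_contra hc
        exact hpG ⟨hpXF, hc⟩
      exact hra mm
    intro q hq
    exact hX q (subquot_of_VV k Set.diff_subset hcount hINF q hq)
  · intro p hp
    by_contra hpF
    apply hp.2
    intro r hr mm
    exact (mem_Jset (R := R)).mp hr p ⟨hp.1, hpF⟩ mm

end Alg

theorem stabilize_finite {α : Type*} (T : ℕ → Set α) (h0 : (T 0).Finite)
    (hdec : ∀ n, T (n+1) ⊆ T n) : ∃ N, ∀ m, N ≤ m → T m = T N := by
  have hmono : ∀ a b, a ≤ b → T b ⊆ T a := by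
    intro a b hab
    induction b, hab using Nat.le_induction with
    | base => exact subset_rfl
    | succ b hab ih => exact subset_trans (hdec b) ih
  have hex : ∀ x ∈ T 0 \ ⋂ n, T n, ∃ n, x ∉ T n := by
    intro x hx
    by_contra hcon
    push_neg at hcon
    exact hx.2 (Set.mem_iInter.mpr hcon)
  set g : α → ℕ := fun x => if hx : ∃ n, x ∉ T n then hx.choose else 0 with hg
  obtain ⟨N, hN⟩ := ((h0.diff (t := ⋂ n, T n)).image g).bddAbove
  refine ⟨N, fun m hm => ?_⟩
  apply Set.Subset.antisymm (hmono N m hm)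
  intro x hx
  by_cases hxi : x ∈ ⋂ n, T n
  · exact Set.mem_iInter.mp hxi m
  · exfalso
    have hxE : x ∈ T 0 \ ⋂ n, T n := ⟨hmono 0 N (Nat.zero_le N) hx, hxi⟩
    have hxg : ∃ n, x ∉ T n := hex x hxE
    have h1 : x ∉ T (g x) := by
      rw [hg]
      simp only [dif_pos hxg]
      exact hxg.choose_spec
    have h2 : g x ≤ N := hN (Set.mem_image_of_mem g hxE)
    exact h1 (hmono (g x) N h2 hx)

end Stmt10Aux

/-- Let `k` be a field and `R` a `k`-algebra of countable vector space
dimension satisfying the ACC on semiprimitive two-sided ideals.  Then (1) every closed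
subset of `Irr R` under the refined Zariski topology equals `V(I) ∪ S` with `I`
semiprimitive and `S` finite; (2) the refined Zariski closed sets are exactly the
closed sets of the point closure of the Zariski topology (the topology generated by the
Zariski-open sets together with complements of points); and (3) the refined Zariski
topology is noetherian (DCC on refined-closed sets). -/
theorem stmt10 (k : Type u) [Field k] (R : Type u) [Ring R] [Algebra k R]
    (hcount : Module.rank k R ≤ Cardinal.aleph0)
    (hacc : ∀ f : ℕ → Set R, (∀ n, Semiprimitive R (f n)) → (∀ n, f n ⊆ f (n + 1)) →
      ∃ n, ∀ m, n ≤ m → f m = f n) :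
    (∀ X : Set (Irr R), RefinedClosed X →
      ∃ (I : Set R) (S : Set (Irr R)), Semiprimitive R I ∧ S.Finite ∧ X = VV I ∪ S) ∧
    (∀ X : Set (Irr R), RefinedClosed X ↔
      @IsClosed (Irr R)
        (TopologicalSpace.generateFrom
          ({U : Set (Irr R) | ∃ I : TwoSidedIdeal R, U = (VV (I : Set R))ᶜ} ∪
            {V : Set (Irr R) | ∃ p : Irr R, V = {p}ᶜ})) X) ∧
    (∀ f : ℕ → Set (Irr R), (∀ n, RefinedClosed (f n)) → (∀ n, f (n + 1) ⊆ f n) →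
      ∃ n, ∀ m, n ≤ m → f m = f n) := by
  classical
  have p1 : ∀ X : Set (Irr R), RefinedClosed X →
      ∃ (I : Set R) (S : Set (Irr R)), Semiprimitive R I ∧ S.Finite ∧ X = VV I ∪ S := by
    intro X hX
    obtain ⟨F, hF, hmax, hVsub, hdiff⟩ := Stmt10Aux.core k hcount hacc hX
    refine ⟨Stmt10Aux.Jset R (X \ F), X \ VV (Stmt10Aux.Jset R (X \ F)),
      Stmt10Aux.semiprimitive_Jset R _, hF.subset hdiff, ?_⟩
    apply Set.Subset.antisymm
    · intro p hp
      by_cases h : p ∈ VV (Stmt10Aux.Jset R (X \ F))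
      · exact Or.inl h
      · exact Or.inr ⟨hp, h⟩
    · rintro p (h | h)
      · exact hVsub h
      · exact h.1
  refine ⟨p1, ?_, ?_⟩
  · -- part 2
    intro X
    letI τg : TopologicalSpace (Irr R) := TopologicalSpace.generateFrom
      ({U : Set (Irr R) | ∃ I : TwoSidedIdeal R, U = (VV (I : Set R))ᶜ} ∪
        {V : Set (Irr R) | ∃ p : Irr R, V = {p}ᶜ})
    have hsingleton : ∀ p : Irr R, IsClosed ({p} : Set (Irr R)) := by
      intro p
      constructor
      exact TopologicalSpace.isOpen_generateFrom_of_mem (Or.inr ⟨p, rfl⟩)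
    constructor
    · intro hX
      obtain ⟨I, S, hsemi, hSfin, hXeq⟩ := p1 X hX
      have hVclosed : IsClosed (VV I) := by
        obtain ⟨T, hT⟩ := hsemi
        have hI : ∀ r, r ∈ I ↔ ∀ p ∈ T, ∀ m : (Irr.Rep p).carrier, r • m = 0 := by
          intro r
          rw [hT]
          simp [annSet]
        set tsi : TwoSidedIdeal R := TwoSidedIdeal.mk' I
          ((hI 0).mpr (fun p _ m => zero_smul R m))
          (fun {x y} hx hy => (hI _).mpr (fun p hp m => by
            rw [add_smul, (hI x).mp hx p hp m, (hI y).mp hy p hp m, add_zero]))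
          (fun {x} hx => (hI _).mpr (fun p hp m => by
            rw [neg_smul, (hI x).mp hx p hp m, neg_zero]))
          (fun {x y} hy => (hI _).mpr (fun p hp m => by
            rw [mul_smul, (hI y).mp hy p hp m, smul_zero]))
          (fun {x y} hx => (hI _).mpr (fun p hp m => by
            rw [mul_smul, (hI x).mp hx p hp (y • m)])) with htsi
        have hcoe : (tsi : Set R) = I := by
          ext r
          rw [SetLike.mem_coe, htsi, TwoSidedIdeal.mem_mk']
        constructor
        apply TopologicalSpace.isOpen_generateFrom_of_mem
        exact Or.inl ⟨tsi, by rw [hcoe]⟩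
      have hSclosed : IsClosed S := by
        rw [← Set.biUnion_of_singleton S]
        exact hSfin.isClosed_biUnion (fun p _ => hsingleton p)
      rw [hXeq]
      exact hVclosed.union hSclosed
    · intro hcl
      set τ' : TopologicalSpace (Irr R) :=
        { IsOpen := fun U => RefinedClosed Uᶜ
          isOpen_univ := by
            show RefinedClosed (Set.univ : Set (Irr R))ᶜ
            rw [Set.compl_univ]
            exact Stmt10Aux.refinedClosed_empty
          isOpen_inter := by
            intro U V hU hV
            show RefinedClosed (U ∩ V)ᶜ
            rw [Set.compl_inter]
            exact Stmt10Aux.refinedClosed_union hU hV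
          isOpen_sUnion := by
            intro S hS
            show RefinedClosed (⋃₀ S)ᶜ
            rw [Set.compl_sUnion]
            exact Stmt10Aux.refinedClosed_sInter (by
              rintro _ ⟨U, hU, rfl⟩
              exact hS U hU) } with hτ'
      have hle : τ' ≤ τg := by
        apply le_generateFrom
        rintro s (⟨I₀, rfl⟩ | ⟨p, rfl⟩)
        · show RefinedClosed ((VV (I₀ : Set R))ᶜ)ᶜ
          rw [compl_compl]
          exact Stmt10Aux.refinedClosed_VV _
        · show RefinedClosed ({p}ᶜ : Set (Irr R))ᶜ
          rw [compl_compl]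
          exact Stmt10Aux.refinedClosed_singleton p
      have hopen : @IsOpen _ τg Xᶜ := hcl.isOpen_compl
      have hτ'open : @IsOpen _ τ' Xᶜ := TopologicalSpace.le_def.mp hle Xᶜ hopen
      have hrc : RefinedClosed Xᶜᶜ := hτ'open
      rwa [compl_compl] at hrc
  · -- part 3
    intro f hRC hdec
    choose F hFfin hmax hVsub hdiff using fun n => Stmt10Aux.core k hcount hacc (hRC n)
    set J : ℕ → Set R := fun n => Stmt10Aux.Jset R (f n \ F n) with hJ
    have hmono : ∀ n, J n ⊆ J (n+1) := by
      intro n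
      calc J n ⊆ Stmt10Aux.Jset R (f (n+1) \ F n) :=
            Stmt10Aux.Jset_mono R (Set.diff_subset_diff_left (hdec n))
        _ ⊆ Stmt10Aux.Jset R (f (n+1) \ (F (n+1) ∪ F n)) :=
            Stmt10Aux.Jset_mono R (Set.diff_subset_diff_right Set.subset_union_right)
        _ = J (n+1) := hmax (n+1) (F n) (hFfin n)
    obtain ⟨n₁, hn₁⟩ := hacc J (fun n => Stmt10Aux.semiprimitive_Jset R _) hmono
    set T : ℕ → Set (Irr R) := fun j => f (n₁ + j) \ VV (J n₁) with hT
    have hfeq : ∀ m, n₁ ≤ m → f m = VV (J n₁) ∪ (f m \ VV (J n₁)) := by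
      intro m hm
      have hJm : J m = J n₁ := hn₁ m hm
      apply Set.Subset.antisymm
      · intro p hp
        by_cases h : p ∈ VV (J n₁)
        · exact Or.inl h
        · exact Or.inr ⟨hp, h⟩
      · rintro p (h | h)
        · refine hVsub m ?_
          show p ∈ VV (J m)
          rw [hJm]
          exact h
        · exact h.1
    have hTdec : ∀ j, T (j+1) ⊆ T j := by
      intro j
      apply Set.diff_subset_diff_left
      exact hdec (n₁ + j)
    have hT0 : (T 0).Finite := by
      refine (hFfin n₁).subset ?_
      show f (n₁ + 0) \ VV (J n₁) ⊆ F n₁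
      rw [Nat.add_zero]
      exact hdiff n₁
    obtain ⟨N, hNs⟩ := Stmt10Aux.stabilize_finite T hT0 hTdec
    refine ⟨n₁ + N, fun m hm => ?_⟩
    have hm1 : n₁ ≤ m := le_trans (Nat.le_add_right _ _) hm
    rw [hfeq m hm1, hfeq (n₁ + N) (Nat.le_add_right _ _)]
    have hTm : f m \ VV (J n₁) = T (m - n₁) := by
      show f m \ VV (J n₁) = f (n₁ + (m - n₁)) \ VV (J n₁)
      rw [Nat.add_sub_cancel' hm1]
    have hTN : T (m - n₁) = T N := hNs (m - n₁) (by omega)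
    rw [hTm, hTN]
end

section
/- Let R be a ring, and for a left R-module M let κ(M) denote the least ordinal κ such that the dual of the interval [0,κ) of ordinals does not order-embed into the lattice of submodules of M. If (M_i)_{i∈Ω} is a family of left R-modules such that the cardinality of {i ∈ Ω : M_i is faithful} is at least |κ(R)| (κ of R as a left module over itself), then there is a left R-module embedding of R into ∏_{i∈Ω} M_i. -/
universe u

/-- `κ(M)`: the least ordinal `κ` such that the dual of `[0, κ)` does not order-embed
into the lattice of submodules of `M`, i.e. there is no strictly decreasing chain of
submodules of `M` indexed by the ordinals below `κ`. -/
noncomputable def kappa (R : Type u) [Ring R] (M : Type u) [AddCommGroup M] [Module R M] :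
    Ordinal.{u} :=
  sInf {κ : Ordinal.{u} | ¬ ∃ f : (Set.Iio κ) → Submodule R M, StrictAnti f}

/-!
Fix an injection `α ↦ iα` of the ordinals `α < κ(R)` into the faithful indices and choose
elements `xα ∈ M_{iα}` by transfinite recursion: as long as the left ideal
`⋂_{β<α} ann(xβ)` is nonzero, faithfulness of `M_{iα}` gives an `xα` whose annihilator does
not contain it. If this never reached `0`, the ideals `⋂_{β≤α} ann(xβ)` would form a strictly
decreasing chain of left ideals of length `κ(R)`, which does not exist. So
`⋂_{α<κ(R)} ann(xα) = 0`, and `r ↦ r • (xα)_α` embeds `R` into the product.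
-/

section CompleteLattice

variable {ι L Y : Type*} [CompleteLattice L]

theorem exists_not_le_of_iInf_eq_bot {g : Y → L} (hg : ⨅ y, g y = ⊥) {a : L}
    (ha : a ≠ ⊥) : ∃ y, ¬ a ≤ g y := by
  by_contra! h
  exact ha (eq_bot_iff.2 (hg ▸ le_iInf h))

theorem exists_iInf_eq_bot_of_not_exists_strictAnti [LinearOrder ι] [WellFoundedLT ι]
    [Nonempty Y] (g : ι → Y → L) (hg : ∀ i, ⨅ y, g i y = ⊥)
    (hL : ¬ ∃ f : ι → L, StrictAnti f) : ∃ x : ι → Y, ⨅ i, g i (x i) = ⊥ := by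
  have hescape : ∀ i (a : L), ∃ y, a ≠ ⊥ → ¬ a ≤ g i y := fun i a => by
    by_cases ha : a = ⊥
    · exact ⟨Classical.arbitrary Y, fun h => (h ha).elim⟩
    · obtain ⟨y, hy⟩ := exists_not_le_of_iInf_eq_bot (hg i) ha
      exact ⟨y, fun _ => hy⟩
  choose c hc using hescape
  let x : ι → Y := WellFoundedLT.fix fun i x => c i (⨅ (j) (h : j < i), g j (x j h))
  have hx : ∀ i, x i = c i (⨅ j < i, g j (x j)) := WellFoundedLT.fix_eq _
  refine ⟨x, by_contra fun hne => hL ⟨fun i => ⨅ j ≤ i, g j (x j), fun j i hji => ?_⟩⟩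
  refine lt_of_le_not_ge (biInf_mono fun k hk => hk.trans hji.le) fun hle => ?_
  have hprefix_le : ⨅ k < i, g k (x k) ≤ ⨅ k ≤ j, g k (x k) :=
    biInf_mono fun _ hk => hk.trans_lt hji
  have hprefix_ne : ⨅ k < i, g k (x k) ≠ ⊥ :=
    ne_bot_of_le_ne_bot hne (le_iInf₂ fun k _ => iInf_le _ k)
  exact hc i _ hprefix_ne (hx i ▸ (hprefix_le.trans hle).trans (biInf_le _ le_rfl))

end CompleteLattice

theorem Ordinal.nonempty_embedding_Iio_of_card_le {α : Type u} {o : Ordinal.{u}}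
    (h : o.card ≤ Cardinal.mk α) : Nonempty (Set.Iio o ↪ α) := by
  rwa [← Cardinal.lift_mk_le', Cardinal.mk_Iio_ordinal, Cardinal.lift_lift, Cardinal.lift_le]

theorem not_exists_strictAnti_Iio_kappa (R : Type u) [Ring R] (M : Type u) [AddCommGroup M]
    [Module R M] : ¬ ∃ f : Set.Iio (kappa R M) → Submodule R M, StrictAnti f := by
  refine csInf_mem (s := {κ : Ordinal.{u} | ¬ ∃ f : Set.Iio κ → Submodule R M, StrictAnti f})
    ⟨(Order.succ (Cardinal.mk (Submodule R M))).ord, ?_⟩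
  rintro ⟨f, hf⟩
  have hcard := Cardinal.lift_mk_le_lift_mk_of_injective hf.injective
  rw [Cardinal.mk_Iio_ordinal, Cardinal.lift_lift, Cardinal.card_ord, Cardinal.lift_le] at hcard
  exact (Order.lt_succ _).not_ge hcard

theorem Ideal.torsionOf_pi {R ι : Type*} [Semiring R] {M : ι → Type*}
    [∀ i, AddCommMonoid (M i)] [∀ i, Module R (M i)] (n : ∀ i, M i) :
    Ideal.torsionOf R (∀ i, M i) n = ⨅ i, Ideal.torsionOf R (M i) (n i) := by
  ext r
  simp [funext_iff]

theorem Ideal.iInf_torsionOf_eq_bot {R M : Type*} [Semiring R] [AddCommMonoid M] [Module R M]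
    (hM : ∀ r : R, (∀ m : M, r • m = 0) → r = 0) : ⨅ m : M, Ideal.torsionOf R M m = ⊥ :=
  eq_bot_iff.2 fun r hr => hM r fun m => (Submodule.mem_iInf _).1 hr m

/-- If `(Mᵢ)_{i∈Ω}` is a family of left `R`-modules such that the number
of faithful `Mᵢ` is at least `|κ(R)|`, then `R` embeds as a left `R`-module into
`∏_{i∈Ω} Mᵢ`. -/
theorem stmt11 (R : Type u) [Ring R] (Ω : Type u) (M : Ω → Type u)
    [∀ i, AddCommGroup (M i)] [∀ i, Module R (M i)]
    (hcard : (kappa R R).card ≤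
      Cardinal.mk {i : Ω // ∀ r : R, (∀ m : M i, r • m = 0) → r = 0}) :
    ∃ f : R →ₗ[R] ((i : Ω) → M i), Function.Injective f := by
  obtain ⟨e⟩ := Ordinal.nonempty_embedding_Iio_of_card_le hcard
  let ι := e.trans (Function.Embedding.subtype _)
  have hfaithful : ∀ α, ⨅ y : ∀ i, M i, Ideal.torsionOf R _ (y (ι α)) = ⊥ := fun α => by
    rw [(Function.surjective_eval (ι α)).iInf_comp (Ideal.torsionOf R (M (ι α)))]
    exact Ideal.iInf_torsionOf_eq_bot (e α).2
  obtain ⟨x, hx⟩ := exists_iInf_eq_bot_of_not_exists_strictAnti _ hfaithful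
    (not_exists_strictAnti_Iio_kappa R R)
  let n : ∀ i, M i := fun i => Function.extend ι x 0 i i
  have hn : ∀ α, n (ι α) = x α (ι α) := fun α => by
    simp only [n, ι.injective.extend_apply]
  refine ⟨LinearMap.toSpanSingleton R _ n, ?_⟩
  rw [← LinearMap.ker_eq_bot, ← Ideal.torsionOf, Ideal.torsionOf_pi, eq_bot_iff, ← hx]
  exact le_iInf fun α => (iInf_le _ (ι α)).trans_eq (congrArg _ (hn α))
end

section
/- Let M be a left R-module and (M_i)_{i∈Ω} a family of nonzero submodules of M. Let S = {Ω' ⊆ Ω : ⋂_{j∈Ω'} M_j ≠ 0}, and suppose (a) Ω ∉ S, (b) S is closed under finite unions, (c) for any disjoint subsets Ω', Ω'' of Ω, either Ω' ∈ S or Ω'' ∈ S. Then κ(M) is uncountable, where κ(M) is the least ordinal κ such that the reversed interval [0,κ) does not order-embed into the submodule lattice of M. -/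
universe u

namespace Stmt12Aux

variable {R : Type u} [Ring R] {M : Type u} [AddCommGroup M] [Module R M] {Ω : Type u}

variable {N : Ω → Submodule R M}

def sval (N : Ω → Submodule R M) (A : Set Ω) : Submodule R M := ⨅ j ∈ A, N j

variable {N : Ω → Submodule R M}

lemma sval_anti {A B : Set Ω} (h : A ⊆ B) : sval N B ≤ sval N A :=
  le_iInf₂ fun j hj => iInf₂_le j (h hj)

lemma sval_union (A B : Set Ω) : sval N (A ∪ B) = sval N A ⊓ sval N B := iInf_union

lemma sval_empty : sval N (∅ : Set Ω) = ⊤ := by simp [sval]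

lemma sval_singleton (j : Ω) : sval N ({j} : Set Ω) = N j := by simp [sval]

lemma sval_eq_bot_of_subset {A B : Set Ω} (h : A ⊆ B) (hA : sval N A = ⊥) :
    sval N B = ⊥ := le_bot_iff.mp (hA ▸ sval_anti h)

section hyps

variable (hbv : ∀ {A B : Set Ω}, sval N A ≠ ⊥ → sval N B ≠ ⊥ → sval N (A ∪ B) ≠ ⊥)
variable (hcv : ∀ A B : Set Ω, Disjoint A B → sval N A ≠ ⊥ ∨ sval N B ≠ ⊥)

include hbv hcv in
lemma bad_inter {X Y : Set Ω} (hX : sval N X = ⊥) (hY : sval N Y = ⊥) :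
    sval N (X ∩ Y) = ⊥ := by
  by_contra h
  rcases hcv (X \ Y) Y (Set.disjoint_sdiff_left) with h1 | h1
  · have h2 := hbv h1 h
    rw [Set.diff_union_inter] at h2
    exact h2 hX
  · exact h1 hY

lemma exists_drop {D T : Set Ω} (h1 : sval N D ≠ ⊥) (h2 : sval N (D ∪ T) = ⊥) :
    ∃ j ∈ T, sval N D ⊓ N j < sval N D := by
  by_contra h
  push_neg at h
  have hle : sval N D ≤ sval N T :=
    le_iInf₂ fun j hj =>
      inf_eq_left.mp ((lt_or_eq_of_le (inf_le_left (b := N j))).resolve_left (h j hj))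
  apply h1
  rw [← h2, sval_union, inf_eq_left.mpr hle]

end hyps

/-- The inductive statement: inside any "reservoir" `T` that kills `D`, we can find a
good `B ⊆ T` (the floor) and a `κ`-indexed strictly decreasing chain of values above
the floor. -/
def Concl (N : Ω → Submodule R M) (κ : Ordinal.{u}) (D T : Set Ω) : Prop :=
  ∃ B : Set Ω, ∃ A : Ordinal.{u} → Set Ω, B ⊆ T ∧ sval N (D ∪ B) ≠ ⊥ ∧
    (∀ β : Ordinal.{u}, β < κ → A β ⊆ B) ∧
    (∀ β γ : Ordinal.{u}, β < γ → γ < κ → sval N (D ∪ A γ) < sval N (D ∪ A β)) ∧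
    (∀ β : Ordinal.{u}, β < κ → sval N (D ∪ B) < sval N (D ∪ A β))

lemma concl_zero {D T : Set Ω} (h1 : sval N D ≠ ⊥) : Concl N 0 D T := by
  refine ⟨∅, fun _ => ∅, Set.empty_subset T, by rwa [Set.union_empty], ?_, ?_, ?_⟩ <;>
    intro β <;> first
      | (intro hβ; exact absurd hβ (not_lt_of_ge (zero_le (a := β))))
      | (intro γ hβγ hγ; exact absurd hγ (not_lt_of_ge (zero_le (a := γ))))

lemma concl_succ (hne : ∀ i, N i ≠ ⊥)
    (hbv : ∀ {A B : Set Ω}, sval N A ≠ ⊥ → sval N B ≠ ⊥ → sval N (A ∪ B) ≠ ⊥)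
    {κ : Ordinal.{u}} {D T : Set Ω}
    (h2 : sval N (D ∪ T) = ⊥) (IH : Concl N κ D T) :
    Concl N (Order.succ κ) D T := by
  obtain ⟨B, A, hBT, hBne, hAB, hAs, hfl⟩ := IH
  have h2' : sval N ((D ∪ B) ∪ T) = ⊥ := by
    rw [Set.union_assoc, Set.union_eq_self_of_subset_left hBT]
    exact h2
  obtain ⟨j, hjT, hdrop⟩ := exists_drop hBne h2'
  have hvalB' : sval N (D ∪ (B ∪ {j})) = sval N (D ∪ B) ⊓ N j := by
    rw [← Set.union_assoc, sval_union, sval_singleton]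
  have hne' : sval N (D ∪ (B ∪ {j})) ≠ ⊥ := by
    rw [← Set.union_assoc]
    exact hbv hBne (by rw [sval_singleton]; exact hne j)
  refine ⟨B ∪ {j}, fun γ => if γ = κ then B else A γ, ?_, hne', ?_, ?_, ?_⟩
  · exact Set.union_subset hBT (Set.singleton_subset_iff.mpr hjT)
  · intro β hβ
    by_cases hc : β = κ
    · simp only [hc, if_pos rfl]
      exact Set.subset_union_left
    · simp only [if_neg hc]
      exact (hAB β (lt_of_le_of_ne (Order.lt_succ_iff.mp hβ) hc)).trans Set.subset_union_left
  · intro β γ hβγ hγ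
    have hβκ : β < κ := lt_of_lt_of_le hβγ (Order.lt_succ_iff.mp hγ)
    have hβne : β ≠ κ := ne_of_lt hβκ
    by_cases hc : γ = κ
    · simp only [hc, if_pos rfl, if_neg hβne]
      exact hfl β hβκ
    · simp only [if_neg hc, if_neg hβne]
      exact hAs β γ hβγ (lt_of_le_of_ne (Order.lt_succ_iff.mp hγ) hc)
  · intro β hβ
    have hlt : sval N (D ∪ (B ∪ {j})) < sval N (D ∪ B) := by
      rw [hvalB']; exact hdrop
    by_cases hc : β = κ
    · simp only [hc, if_pos rfl]; exact hlt
    · simp only [if_neg hc]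
      exact hlt.trans (hfl β (lt_of_le_of_ne (Order.lt_succ_iff.mp hβ) hc))
set_option maxHeartbeats 1000000 in
lemma concl_limit
    (hbv : ∀ {A B : Set Ω}, sval N A ≠ ⊥ → sval N B ≠ ⊥ → sval N (A ∪ B) ≠ ⊥)
    (hcv : ∀ A B : Set Ω, Disjoint A B → sval N A ≠ ⊥ ∨ sval N B ≠ ⊥)
    {κ : Ordinal.{u}} (hκ : Order.IsSuccLimit κ) (hcard : κ.card ≤ Cardinal.aleph0)
    (IH : ∀ δ : Ordinal.{u}, δ < κ →
      ∀ D T : Set Ω, sval N D ≠ ⊥ → sval N (D ∪ T) = ⊥ → Concl N δ D T)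
    {D T : Set Ω} (h1 : sval N D ≠ ⊥) (h2 : sval N (D ∪ T) = ⊥) : Concl N κ D T := by
  -- Step 1: a cofinal ω-sequence in κ
  obtain ⟨g, hg⟩ : ∃ g : ℕ → Set.Iio κ, Function.Surjective g := by
    have hc1 : Cardinal.mk (Set.Iio κ) ≤ Cardinal.aleph0 := by
      rw [Ordinal.mk_Iio_ordinal]
      calc Cardinal.lift.{u+1} κ.card ≤ Cardinal.lift.{u+1} Cardinal.aleph0 :=
            Cardinal.lift_le.mpr hcard
        _ = Cardinal.aleph0 := Cardinal.lift_aleph0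
    have : Countable (Set.Iio κ) := Cardinal.mk_le_aleph0_iff.mp hc1
    have : Nonempty (Set.Iio κ) := ⟨⟨0, hκ.pos⟩⟩
    exact exists_surjective_nat _
  let lam : ℕ → Ordinal.{u} := fun k => Nat.rec 0 (fun k ih => max (ih + 1) ((g k).1 + 1)) k
  have hlamsucc : ∀ k, lam (k+1) = max (lam k + 1) ((g k).1 + 1) := fun k => rfl
  have hlamlt : ∀ k, lam k < κ := by
    intro k; induction k with
    | zero => exact hκ.pos
    | succ k ih =>
      rw [hlamsucc]
      refine max_lt ?_ ?_
      · rw [Ordinal.add_one_eq_succ]; exact hκ.succ_lt ih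
      · rw [Ordinal.add_one_eq_succ]; exact hκ.succ_lt (g k).2
  have hlammono : ∀ k, lam k < lam (k+1) := fun k =>
    lt_of_lt_of_le (by rw [Ordinal.add_one_eq_succ]; exact Order.lt_succ _)
      ((hlamsucc k) ▸ le_max_left _ _)
  have hlamcof : ∀ ξ, ξ < κ → ∃ k, ξ < lam (k+1) := by
    intro ξ hξ
    obtain ⟨k, hk⟩ := hg ⟨ξ, hξ⟩
    refine ⟨k, lt_of_lt_of_le ?_ ((hlamsucc k) ▸ le_max_right _ _)⟩
    rw [hk, Ordinal.add_one_eq_succ]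
    exact Order.lt_succ ξ
  let del : ℕ → Ordinal.{u} := fun k => lam (k+1) - lam k
  have hblock : ∀ (k : ℕ) (D' T' : Set Ω), sval N D' ≠ ⊥ → sval N (D' ∪ T') = ⊥ →
      Concl N (del k) D' T' :=
    fun k D' T' a b =>
      IH (del k) (lt_of_le_of_lt (Ordinal.sub_le_self _ _) (hlamlt (k+1))) D' T' a b
  have hlamdel : ∀ k, lam k + del k = lam (k+1) := fun k =>
    Ordinal.add_sub_cancel_of_le (hlammono k).le
  -- Step 2: reservoir lemma
  have resv : ∀ E X : Set Ω, X ⊆ T → sval N (D ∪ X) ≠ ⊥ →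
      sval N ((D ∪ E) ∪ (T \ (E ∪ X))) = ⊥ := by
    intro E X hX hvX
    by_contra hcon
    refine hbv hcon hvX (sval_eq_bot_of_subset ?_ h2)
    intro x hx
    rcases hx with hx | hx
    · exact Or.inl (Or.inl (Or.inl hx))
    · by_cases hxE : x ∈ E
      · exact Or.inl (Or.inl (Or.inr hxE))
      · by_cases hxX : x ∈ X
        · exact Or.inr (Or.inr hxX)
        · exact Or.inl (Or.inr ⟨hx, fun hmem => by
            rcases hmem with h | h
            exacts [hxE h, hxX h]⟩)
  -- Step 3: two interleaved block sequences
  let StInv : Set Ω × Set Ω → Prop := fun p =>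
    p.1 ⊆ T ∧ p.2 ⊆ T ∧ p.1 ∩ p.2 = ∅ ∧ sval N (D ∪ p.1) ≠ ⊥ ∧ sval N (D ∪ p.2) ≠ ⊥
  have hstep : ∀ (k : ℕ) (p : Set Ω × Set Ω), StInv p →
      ∃ q : (Set Ω × (Ordinal.{u} → Set Ω)) × (Set Ω × (Ordinal.{u} → Set Ω)),
        q.1.1 ⊆ T \ (p.1 ∪ p.2) ∧
        q.2.1 ⊆ T \ (p.2 ∪ (p.1 ∪ q.1.1)) ∧
        sval N (D ∪ (p.1 ∪ q.1.1)) ≠ ⊥ ∧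
        sval N (D ∪ (p.2 ∪ q.2.1)) ≠ ⊥ ∧
        (∀ β, β < del k → q.1.2 β ⊆ q.1.1) ∧
        (∀ β γ, β < γ → γ < del k →
          sval N ((D ∪ p.1) ∪ q.1.2 γ) < sval N ((D ∪ p.1) ∪ q.1.2 β)) ∧
        (∀ β, β < del k → sval N ((D ∪ p.1) ∪ q.1.1) < sval N ((D ∪ p.1) ∪ q.1.2 β)) ∧
        (∀ β, β < del k → q.2.2 β ⊆ q.2.1) ∧
        (∀ β γ, β < γ → γ < del k →
          sval N ((D ∪ p.2) ∪ q.2.2 γ) < sval N ((D ∪ p.2) ∪ q.2.2 β)) ∧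
        (∀ β, β < del k → sval N ((D ∪ p.2) ∪ q.2.1) < sval N ((D ∪ p.2) ∪ q.2.2 β)) := by
    rintro k ⟨E, O⟩ ⟨hET, hOT, hEO, hvE, hvO⟩
    obtain ⟨Be, Ae, hBe1, hBe2, hAe1, hAe2, hAe3⟩ :=
      hblock k (D ∪ E) (T \ (E ∪ O)) hvE (resv E O hOT hvO)
    have hBeT : Be ⊆ T := hBe1.trans Set.diff_subset
    have hvE' : sval N (D ∪ (E ∪ Be)) ≠ ⊥ := by rw [← Set.union_assoc]; exact hBe2
    obtain ⟨Bo, Ao, hBo1, hBo2, hAo1, hAo2, hAo3⟩ :=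
      hblock k (D ∪ O) (T \ (O ∪ (E ∪ Be))) hvO
        (resv O (E ∪ Be) (Set.union_subset hET hBeT) hvE')
    exact ⟨((Be, Ae), (Bo, Ao)), hBe1, hBo1, hvE',
      (by rw [← Set.union_assoc]; exact hBo2), hAe1, hAe2, hAe3, hAo1, hAo2, hAo3⟩
  let St : Type u := {p : Set Ω × Set Ω // StInv p}
  have hinit : StInv (∅, ∅) :=
    ⟨Set.empty_subset T, Set.empty_subset T, by simp,
      by rwa [Set.union_empty], by rwa [Set.union_empty]⟩
  let stepF : ℕ → St → St := fun k s =>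
    ⟨((s.1.1 ∪ (Classical.choose (hstep k s.1 s.2)).1.1),
      (s.1.2 ∪ (Classical.choose (hstep k s.1 s.2)).2.1)), by
        obtain ⟨hq1, hq2, hq3, hq4, -⟩ := Classical.choose_spec (hstep k s.1 s.2)
        obtain ⟨hET, hOT, hEO, -, -⟩ := s.2
        refine ⟨Set.union_subset hET (hq1.trans Set.diff_subset),
          Set.union_subset hOT (hq2.trans Set.diff_subset), ?_, hq3, hq4⟩
        apply Set.eq_empty_iff_forall_notMem.mpr
        rintro x ⟨hx1, hx2⟩
        rcases hx1 with h | h <;> rcases hx2 with h' | h'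
        · exact Set.eq_empty_iff_forall_notMem.mp hEO x ⟨h, h'⟩
        · exact (hq2 h').2 (Or.inr (Or.inl h))
        · exact (hq1 h).2 (Or.inr h')
        · exact (hq2 h').2 (Or.inr (Or.inr h))⟩
  let seq : ℕ → St := fun k => Nat.rec ⟨(∅, ∅), hinit⟩ stepF k
  let CE : ℕ → Set Ω := fun k => (seq k).1.1
  let CO : ℕ → Set Ω := fun k => (seq k).1.2
  let BeF : ℕ → Set Ω := fun k => (Classical.choose (hstep k (seq k).1 (seq k).2)).1.1
  let AeF : ℕ → Ordinal.{u} → Set Ω :=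
    fun k => (Classical.choose (hstep k (seq k).1 (seq k).2)).1.2
  let BoF : ℕ → Set Ω := fun k => (Classical.choose (hstep k (seq k).1 (seq k).2)).2.1
  let AoF : ℕ → Ordinal.{u} → Set Ω :=
    fun k => (Classical.choose (hstep k (seq k).1 (seq k).2)).2.2
  have hCE0 : CE 0 = ∅ := rfl
  have hCO0 : CO 0 = ∅ := rfl
  have hCEs : ∀ k, CE (k+1) = CE k ∪ BeF k := fun k => rfl
  have hCOs : ∀ k, CO (k+1) = CO k ∪ BoF k := fun k => rfl
  have hsp := fun k => Classical.choose_spec (hstep k (seq k).1 (seq k).2)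
  have hBeP : ∀ k, BeF k ⊆ T \ (CE k ∪ CO k) := fun k => (hsp k).1
  have hBoP : ∀ k, BoF k ⊆ T \ (CO k ∪ (CE k ∪ BeF k)) := fun k => (hsp k).2.1
  have hAe1 : ∀ k β, β < del k → AeF k β ⊆ BeF k := fun k => (hsp k).2.2.2.2.1
  have hAe2 : ∀ k β γ, β < γ → γ < del k →
      sval N ((D ∪ CE k) ∪ AeF k γ) < sval N ((D ∪ CE k) ∪ AeF k β) :=
    fun k => (hsp k).2.2.2.2.2.1
  have hAe3 : ∀ k β, β < del k →
      sval N ((D ∪ CE k) ∪ BeF k) < sval N ((D ∪ CE k) ∪ AeF k β) :=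
    fun k => (hsp k).2.2.2.2.2.2.1
  have hAo1 : ∀ k β, β < del k → AoF k β ⊆ BoF k := fun k => (hsp k).2.2.2.2.2.2.2.1
  have hAo2 : ∀ k β γ, β < γ → γ < del k →
      sval N ((D ∪ CO k) ∪ AoF k γ) < sval N ((D ∪ CO k) ∪ AoF k β) :=
    fun k => (hsp k).2.2.2.2.2.2.2.2.1
  have hAo3 : ∀ k β, β < del k →
      sval N ((D ∪ CO k) ∪ BoF k) < sval N ((D ∪ CO k) ∪ AoF k β) :=
    fun k => (hsp k).2.2.2.2.2.2.2.2.2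
  have hCEmono : ∀ k l, k ≤ l → CE k ⊆ CE l := by
    intro k l h
    induction h with
    | refl => exact subset_rfl
    | step h ih => rename_i m hm; rw [hCEs]; exact ih.trans Set.subset_union_left
  have hCOmono : ∀ k l, k ≤ l → CO k ⊆ CO l := by
    intro k l h
    induction h with
    | refl => exact subset_rfl
    | step h ih => rename_i m hm; rw [hCOs]; exact ih.trans Set.subset_union_left
  -- Step 4: disjointness of the two unions and the dichotomy
  have hdisj : (⋃ k, BeF k) ∩ (⋃ k, BoF k) = ∅ := by
    apply Set.eq_empty_iff_forall_notMem.mpr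
    rintro x ⟨hxE, hxO⟩
    rw [Set.mem_iUnion] at hxE hxO
    obtain ⟨k, hk⟩ := hxE
    obtain ⟨l, hl⟩ := hxO
    rcases le_or_gt k l with h | h
    · have hx1 : x ∈ CE l ∪ BeF l := by
        have hx2 : x ∈ CE (l+1) :=
          hCEmono (k+1) (l+1) (Nat.succ_le_succ h) (by rw [hCEs]; exact Set.mem_union_right _ hk)
        rwa [hCEs] at hx2
      exact ((hBoP l) hl).2 (Or.inr hx1)
    · have hx1 : x ∈ CO k := hCOmono (l+1) k h (by rw [hCOs]; exact Set.mem_union_right _ hl)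
      exact ((hBeP k) hk).2 (Or.inr hx1)
  have hgood : sval N (D ∪ ⋃ k, BeF k) ≠ ⊥ ∨ sval N (D ∪ ⋃ k, BoF k) ≠ ⊥ := by
    by_contra hcon
    push_neg at hcon
    obtain ⟨hE, hO⟩ := hcon
    have hbi := bad_inter hbv hcv hE hO
    rw [← Set.union_inter_distrib_left, hdisj, Set.union_empty] at hbi
    exact h1 hbi
  -- Step 5: generic assembly
  have assemble : ∀ (CB : ℕ → Set Ω) (CA : ℕ → Ordinal.{u} → Set Ω) (CC : ℕ → Set Ω),
      CC 0 = ∅ → (∀ k, CC (k+1) = CC k ∪ CB k) → (∀ k, CB k ⊆ T) →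
      (∀ k β, β < del k → CA k β ⊆ CB k) →
      (∀ k β γ, β < γ → γ < del k →
        sval N ((D ∪ CC k) ∪ CA k γ) < sval N ((D ∪ CC k) ∪ CA k β)) →
      (∀ k β, β < del k → sval N ((D ∪ CC k) ∪ CB k) < sval N ((D ∪ CC k) ∪ CA k β)) →
      sval N (D ∪ ⋃ k, CB k) ≠ ⊥ → Concl N κ D T := by
    intro CB CA CC hC0 hCs hCBT hA1 hA2 hA3 hgd
    have hCCmono : ∀ k l, k ≤ l → CC k ⊆ CC l := by
      intro k l h
      induction h with
      | refl => exact subset_rfl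
      | step h ih => rename_i m hm; rw [hCs]; exact ih.trans Set.subset_union_left
    have hCCB : ∀ k, CC k ⊆ ⋃ k, CB k := by
      intro k
      induction k with
      | zero => rw [hC0]; exact Set.empty_subset _
      | succ k ih => rw [hCs]; exact Set.union_subset ih (Set.subset_iUnion CB k)
    let kf : Ordinal.{u} → ℕ := fun ξ => sInf {k : ℕ | ξ < lam (k+1)}
    have hkf1 : ∀ ξ, ξ < κ → ξ < lam (kf ξ + 1) := by
      intro ξ hξ
      exact Nat.sInf_mem (hlamcof ξ hξ)
    have hkf2 : ∀ ξ, ξ < κ → lam (kf ξ) ≤ ξ := by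
      intro ξ hξ
      cases h : kf ξ with
      | zero => exact zero_le (a := ξ)
      | succ m =>
        have hm : m < kf ξ := h ▸ Nat.lt_succ_self m
        have hnm := Nat.notMem_of_lt_sInf hm
        exact not_lt.mp hnm
    have hkfmono : ∀ ξ ξ', ξ ≤ ξ' → ξ' < κ → kf ξ ≤ kf ξ' := by
      intro ξ ξ' hle hξ'
      exact Nat.sInf_le (lt_of_le_of_lt hle (hkf1 ξ' hξ'))
    let A : Ordinal.{u} → Set Ω := fun ξ => CC (kf ξ) ∪ CA (kf ξ) (ξ - lam (kf ξ))
    have hsub : ∀ ξ, ξ < κ → lam (kf ξ) + (ξ - lam (kf ξ)) = ξ := fun ξ hξ =>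
      Ordinal.add_sub_cancel_of_le (hkf2 ξ hξ)
    have hβdel : ∀ ξ, ξ < κ → ξ - lam (kf ξ) < del (kf ξ) := by
      intro ξ hξ
      have h1' : ξ < lam (kf ξ) + del (kf ξ) := by rw [hlamdel]; exact hkf1 ξ hξ
      have h2' : lam (kf ξ) + (ξ - lam (kf ξ)) < lam (kf ξ) + del (kf ξ) := by
        rw [hsub ξ hξ]; exact h1'
      exact (add_lt_add_iff_left _).mp h2'
    have hAval : ∀ ξ, D ∪ A ξ = (D ∪ CC (kf ξ)) ∪ CA (kf ξ) (ξ - lam (kf ξ)) := fun ξ => by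
      rw [Set.union_assoc]
    refine ⟨⋃ k, CB k, A, Set.iUnion_subset hCBT, hgd, ?_, ?_, ?_⟩
    · intro β hβ
      exact Set.union_subset (hCCB _)
        ((hA1 _ _ (hβdel β hβ)).trans (Set.subset_iUnion CB (kf β)))
    · intro β γ hβγ hγ
      have hβ : β < κ := hβγ.trans hγ
      have hkk : kf β ≤ kf γ := hkfmono β γ hβγ.le hγ
      rw [hAval β, hAval γ]
      rcases eq_or_lt_of_le hkk with heq | hlt
      · -- same block
        have hγδ : γ - lam (kf β) < del (kf β) := by rw [heq]; exact hβdel γ hγ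
        have hββ : β - lam (kf β) < γ - lam (kf β) := by
          have e1 : lam (kf β) + (β - lam (kf β)) = β := hsub β hβ
          have e2 : lam (kf β) + (γ - lam (kf β)) = γ := by rw [heq]; exact hsub γ hγ
          refine (add_lt_add_iff_left (lam (kf β))).mp ?_
          rw [e1, e2]; exact hβγ
        have hres := hA2 (kf β) _ _ hββ hγδ
        rw [← heq]
        exact hres
      · -- later block
        calc sval N ((D ∪ CC (kf γ)) ∪ CA (kf γ) (γ - lam (kf γ)))
            ≤ sval N (D ∪ CC (kf γ)) := sval_anti Set.subset_union_left
          _ ≤ sval N (D ∪ CC (kf β + 1)) :=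
              sval_anti (Set.union_subset_union_right D (hCCmono _ _ hlt))
          _ = sval N ((D ∪ CC (kf β)) ∪ CB (kf β)) := by rw [hCs, Set.union_assoc]
          _ < sval N ((D ∪ CC (kf β)) ∪ CA (kf β) (β - lam (kf β))) :=
              hA3 _ _ (hβdel β hβ)
    · intro β hβ
      rw [hAval β]
      calc sval N (D ∪ ⋃ k, CB k)
          ≤ sval N (D ∪ CC (kf β + 1)) :=
            sval_anti (Set.union_subset_union_right D (hCCB _))
        _ = sval N ((D ∪ CC (kf β)) ∪ CB (kf β)) := by rw [hCs, Set.union_assoc]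
        _ < sval N ((D ∪ CC (kf β)) ∪ CA (kf β) (β - lam (kf β))) :=
            hA3 _ _ (hβdel β hβ)
  -- Step 6: conclude
  rcases hgood with h | h
  · exact assemble BeF AeF CE hCE0 hCEs
      (fun k => (hBeP k).trans Set.diff_subset) hAe1 hAe2 hAe3 h
  · exact assemble BoF AoF CO hCO0 hCOs
      (fun k => (hBoP k).trans Set.diff_subset) hAo1 hAo2 hAo3 h
lemma crux (hne : ∀ i, N i ≠ ⊥)
    (hbv : ∀ {A B : Set Ω}, sval N A ≠ ⊥ → sval N B ≠ ⊥ → sval N (A ∪ B) ≠ ⊥)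
    (hcv : ∀ A B : Set Ω, Disjoint A B → sval N A ≠ ⊥ ∨ sval N B ≠ ⊥)
    (κ : Ordinal.{u}) : κ.card ≤ Cardinal.aleph0 →
    ∀ D T : Set Ω, sval N D ≠ ⊥ → sval N (D ∪ T) = ⊥ → Concl N κ D T := by
  induction κ using Ordinal.limitRecOn with
  | zero => intro _ D T h1 _; exact concl_zero h1
  | add_one δ ih =>
    rw [Ordinal.add_one_eq_succ]
    intro hcard D T h1 h2
    exact concl_succ hne hbv h2
      (ih ((Ordinal.card_le_card (Order.le_succ δ)).trans hcard) D T h1 h2)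
  | limit κ hκ ih =>
    intro hcard D T h1 h2
    exact concl_limit hbv hcv hκ hcard
      (fun δ hδ => ih δ hδ ((Ordinal.card_le_card hδ.le).trans hcard)) h1 h2

end Stmt12Aux

/-- Let `M` be a left `R`-module and `(Mᵢ)_{i∈Ω}` a family of nonzero
submodules of `M`.  Let `S = {Ω' ⊆ Ω : ⋂_{j∈Ω'} Mⱼ ≠ 0}`.  If (a) `Ω ∉ S`, (b) `S` is
closed under finite unions, and (c) of any two disjoint subsets of `Ω` at least one is
in `S`, then `κ(M)` is uncountable. -/
theorem stmt12 (R : Type u) [Ring R] (M : Type u) [AddCommGroup M] [Module R M]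
    (Ω : Type u) (N : Ω → Submodule R M) (hne : ∀ i, N i ≠ ⊥)
    (S : Set (Set Ω)) (hS : S = {Ω' : Set Ω | (⨅ j ∈ Ω', N j) ≠ ⊥})
    (ha : Set.univ ∉ S)
    (hb : ∀ Ω' ∈ S, ∀ Ω'' ∈ S, Ω' ∪ Ω'' ∈ S)
    (hc : ∀ Ω' Ω'' : Set Ω, Disjoint Ω' Ω'' → Ω' ∈ S ∨ Ω'' ∈ S) :
    ¬ (kappa R M).card ≤ Cardinal.aleph0 := by
  subst hS
  intro hcount
  -- translate the hypotheses
  have hbv : ∀ {A B : Set Ω}, Stmt12Aux.sval N A ≠ ⊥ → Stmt12Aux.sval N B ≠ ⊥ →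
      Stmt12Aux.sval N (A ∪ B) ≠ ⊥ := fun hA hB => hb _ hA _ hB
  have hcv : ∀ A B : Set Ω, Disjoint A B →
      Stmt12Aux.sval N A ≠ ⊥ ∨ Stmt12Aux.sval N B ≠ ⊥ := fun A B h => hc A B h
  have huniv : Stmt12Aux.sval N (Set.univ : Set Ω) = ⊥ := not_not.mp ha
  -- the defining set of `kappa` is nonempty
  have hnonempty : {κ : Ordinal.{u} | ¬ ∃ f : (Set.Iio κ) → Submodule R M, StrictAnti f}.Nonempty := by
    refine ⟨(Order.succ (Cardinal.mk (Submodule R M))).ord, ?_⟩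
    rintro ⟨f, hf⟩
    have hinj : Function.Injective f := hf.injective
    have hle := Cardinal.lift_mk_le'.mpr ⟨⟨f, hinj⟩⟩
    rw [Ordinal.mk_Iio_ordinal, Cardinal.lift_lift, Cardinal.card_ord] at hle
    have hle2 : Order.succ (Cardinal.mk (Submodule R M)) ≤ Cardinal.mk (Submodule R M) := by
      have := Cardinal.lift_le.mp hle
      exact this
    exact (Order.lt_succ _).not_ge hle2
  have hmem := csInf_mem hnonempty
  -- now produce a chain of length `kappa R M`
  have hemp : Stmt12Aux.sval N (∅ : Set Ω) ≠ ⊥ := by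
    rcases hc ∅ ∅ (by simp : Disjoint (∅ : Set Ω) ∅) with h | h <;> exact h
  have h2 : Stmt12Aux.sval N ((∅ : Set Ω) ∪ Set.univ) = ⊥ := by
    rwa [Set.empty_union]
  obtain ⟨B, A, -, -, -, hstrict, -⟩ :=
    Stmt12Aux.crux hne hbv hcv (kappa R M) hcount ∅ Set.univ hemp h2
  exact hmem ⟨fun x => Stmt12Aux.sval N (∅ ∪ A x.1),
    fun x y hxy => hstrict x.1 y.1 hxy y.2⟩
end

section
/- Let R be a prime ring with countable left Krull dimension, and suppose (A_i)_{i∈Ω} is a family of nonzero two-sided ideals of R with ⋂_{i∈Ω} A_i = 0. Then there exist two disjoint subsets Γ, Λ ⊆ Ω with ⋂_{i∈Γ} A_i = 0 and ⋂_{i∈Λ} A_i = 0. -/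
universe u

open Submodule in
/-- Gabriel–Rentschler Krull dimension, as a relation: `KdimLE R α M` means the Krull
dimension of `M` exists and is at most `α`: for every descending chain
`M₀ ⊇ M₁ ⊇ ⋯` of submodules of `M`, all but finitely many of the factors `Mₙ/Mₙ₊₁`
are zero or have Krull dimension `< α`. -/
noncomputable def KdimLE (R : Type u) [Ring R] (α : Ordinal.{u}) (M : ModuleCat.{u} R) :
    Prop :=
  ∀ f : ℕ → Submodule R M, (∀ n, f (n + 1) ≤ f n) →
    ∃ N : ℕ, ∀ n, N ≤ n →
      Subsingleton ((f n) ⧸ (comap (f n).subtype (f (n + 1)))) ∨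
      ∃ β, ∃ _ : β < α,
        KdimLE R β (ModuleCat.of R ((f n) ⧸ (comap (f n).subtype (f (n + 1)))))
termination_by α


open Submodule in
theorem KdimLE.no_long_chain (R : Type u) [Ring R] :
    ∀ (α : Ordinal.{u}) (M : ModuleCat.{u} R), KdimLE R α M →
    ∀ f : Ordinal.{u} → Submodule R M,
      (∀ δ ε : Ordinal.{u}, δ < ε → ε < Ordinal.omega0 ^ (α + 1) → f ε < f δ) → False := by
  intro α
  induction α using Ordinal.induction with
  | _ α IH =>
    intro M h f hf
    rw [KdimLE] at h
    have hpos : (0:Ordinal) < Ordinal.omega0 ^ α := Ordinal.opow_pos _ Ordinal.omega0_pos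
    set a : ℕ → Ordinal.{u} := fun n => Ordinal.omega0 ^ α * n with ha
    have halt : ∀ n : ℕ, a n < Ordinal.omega0 ^ (α + 1) := by
      intro n
      rw [Ordinal.add_one_eq_succ, Ordinal.opow_succ]
      exact (mul_lt_mul_iff_right₀ hpos).2 (Ordinal.nat_lt_omega0 n)
    have hamono : ∀ n : ℕ, a n < a (n+1) := by
      intro n
      exact (mul_lt_mul_iff_right₀ hpos).2 (by exact_mod_cast Nat.lt_succ_self n)
    obtain ⟨N, hN⟩ := h (fun n => f (a n)) (fun n => (hf _ _ (hamono n) (halt _)).le)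
    rcases hN N le_rfl with hsub | ⟨β, hβ, hQ⟩
    · exact absurd (comap_subtype_eq_top.1 (Submodule.Quotient.subsingleton_iff.1 hsub))
        (hf _ _ (hamono N) (halt _)).not_ge
    · have hβ1 : Ordinal.omega0 ^ (β+1) ≤ Ordinal.omega0 ^ α := by
        rw [Ordinal.add_one_eq_succ]
        exact Ordinal.opow_le_opow_right Ordinal.omega0_pos (Order.succ_le_of_lt hβ)
      have haN1 : a (N+1) = a N + Ordinal.omega0 ^ α := by
        show Ordinal.omega0 ^ α * ((N + 1 : ℕ) : Ordinal) = _
        push_cast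
        rw [mul_add, mul_one]
      have hlt : ∀ γ : Ordinal.{u}, γ < Ordinal.omega0 ^ (β+1) → a N + γ < a (N+1) := by
        intro γ hγ
        rw [haN1]
        exact (add_lt_add_iff_left _).2 (lt_of_lt_of_le hγ hβ1)
      have hbound : ∀ γ : Ordinal.{u}, γ < Ordinal.omega0 ^ (β+1) →
          a N + γ < Ordinal.omega0 ^ (α+1) := fun γ hγ => (hlt γ hγ).trans (halt (N+1))
      have hle : ∀ γ : Ordinal.{u}, γ < Ordinal.omega0 ^ (β+1) → f (a N + γ) ≤ f (a N) := by
        intro γ hγ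
        rcases eq_or_ne γ 0 with rfl | hne
        · rw [add_zero]
        · exact (hf _ _ (lt_add_of_pos_right _ (pos_iff_ne_zero.2 hne)) (hbound γ hγ)).le
      set K : Submodule R (f (a N)) := comap (f (a N)).subtype (f (a (N+1))) with hK
      set F : Ordinal.{u} → Submodule R (↥(f (a N)) ⧸ K) :=
        fun γ => map K.mkQ (comap (f (a N)).subtype (f (a N + γ))) with hF
      have hKle : ∀ γ : Ordinal.{u}, γ < Ordinal.omega0 ^ (β+1) →
          K ≤ comap (f (a N)).subtype (f (a N + γ)) := by
        intro γ hγ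
        exact comap_mono (hf _ _ (hlt γ hγ) (halt (N+1))).le
      have hFs : ∀ δ ε : Ordinal.{u}, δ < ε → ε < Ordinal.omega0 ^ (β+1) → F ε < F δ := by
        intro δ ε hde he
        have hd : δ < Ordinal.omega0 ^ (β+1) := hde.trans he
        have hf2 : f (a N + ε) < f (a N + δ) :=
          hf _ _ ((add_lt_add_iff_left _).2 hde) (hbound ε he)
        refine lt_of_le_of_ne (map_mono (comap_mono hf2.le)) (fun heq => ?_)
        have h1 : comap (f (a N)).subtype (f (a N + ε)) = comap (f (a N)).subtype (f (a N + δ)) := by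
          have := congrArg (comap K.mkQ) heq
          rwa [comap_map_mkQ, comap_map_mkQ, sup_eq_right.2 (hKle ε he),
            sup_eq_right.2 (hKle δ hd)] at this
        have h2 := congrArg (map (f (a N)).subtype) h1
        rw [map_comap_subtype, map_comap_subtype, inf_eq_right.2 (hle ε he),
          inf_eq_right.2 (hle δ hd)] at h2
        exact hf2.ne h2
      exact IH β hβ (ModuleCat.of R (↥(f (a N)) ⧸ K)) hQ F hFs




theorem exists_cofinal_seq (l : Ordinal.{u}) (h0 : l ≠ 0) (hc : l.card ≤ Cardinal.aleph0) :
    ∃ g : ℕ → Ordinal.{u}, (∀ n, g n < l) ∧ ∀ δ, δ < l → ∃ n, δ ≤ g n := by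
  rcases Ordinal.zero_or_succ_or_isSuccLimit l with rfl | ⟨a, rfl⟩ | hlim
  · exact absurd rfl h0
  · exact ⟨fun _ => a, fun _ => Order.lt_succ a, fun δ hδ => ⟨0, Order.lt_succ_iff.1 hδ⟩⟩
  · obtain ⟨ι, fι, hlsub, hmk⟩ := Ordinal.exists_lsub_cof l
    have hcount : Countable ι :=
      Cardinal.mk_le_aleph0_iff.1 (hmk ▸ (Ordinal.cof_le_card l).trans hc)
    have hne : Nonempty ι := by
      by_contra hempty
      rw [not_nonempty_iff] at hempty
      rw [Ordinal.lsub_empty] at hlsub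
      exact h0 hlsub.symm
    obtain ⟨e, he⟩ := exists_surjective_nat ι
    refine ⟨fun n => fι (e n), fun n => hlsub ▸ Ordinal.lt_lsub fι (e n), fun δ hδ => ?_⟩
    rw [← hlsub] at hδ
    obtain ⟨i, hi⟩ := Ordinal.lt_lsub_iff.1 hδ
    obtain ⟨n, rfl⟩ := he i
    exact ⟨n, hi⟩

open Cardinal in
theorem card_opow_omega0_le : ∀ β : Ordinal.{u}, β.card ≤ Cardinal.aleph0 →
    (Ordinal.omega0 ^ β).card ≤ Cardinal.aleph0 := by
  intro β
  induction β using Ordinal.induction with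
  | _ β IH =>
  intro hβ
  rcases Ordinal.zero_or_succ_or_isSuccLimit β with rfl | ⟨γ, rfl⟩ | hlim
  · rw [Ordinal.opow_zero, Ordinal.card_one]
    exact le_of_lt Cardinal.one_lt_aleph0
  · rw [Ordinal.opow_succ, Ordinal.card_mul, Ordinal.card_omega0]
    have hγ : γ.card ≤ Cardinal.aleph0 := le_trans (Ordinal.card_le_card (Order.le_succ γ)) hβ
    calc (Ordinal.omega0 ^ γ).card * Cardinal.aleph0
        ≤ Cardinal.aleph0 * Cardinal.aleph0 := mul_le_mul' (IH γ (Order.lt_succ γ) hγ) le_rfl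
      _ = Cardinal.aleph0 := Cardinal.aleph0_mul_aleph0
  · obtain ⟨g, hg1, hg2⟩ := exists_cofinal_seq β hlim.pos.ne' hβ
    have hlt : ∀ n, Ordinal.omega0 ^ (g n) < (ℵ₁).ord := by
      intro n
      rw [Cardinal.lt_ord]
      refine lt_of_le_of_lt (IH (g n) (hg1 n)
        (le_trans (Ordinal.card_le_card (hg1 n).le) hβ)) Cardinal.aleph0_lt_aleph_one
    have hsup : (⨆ n : ℕ, Ordinal.omega0 ^ (g n)) < (ℵ₁).ord := by
      apply Ordinal.iSup_lt_ord_lift ?_ hlt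
      rw [Cardinal.isRegular_aleph_one.cof_eq, Cardinal.mk_nat, Cardinal.lift_aleph0]
      exact Cardinal.aleph0_lt_aleph_one
    have hle : Ordinal.omega0 ^ β ≤ (⨆ n : ℕ, Ordinal.omega0 ^ (g n)) := by
      rw [Ordinal.opow_le_of_isSuccLimit Ordinal.omega0_ne_zero hlim]
      intro c hc
      obtain ⟨n, hn⟩ := hg2 c hc
      exact le_trans (Ordinal.opow_le_opow_right Ordinal.omega0_pos hn) (le_ciSup (Ordinal.bddAbove_range.{0,u} _) n)
    have hfin := lt_of_le_of_lt hle hsup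
    rw [Cardinal.lt_ord] at hfin
    have h1 : (ℵ₁ : Cardinal) = Order.succ (Cardinal.aleph0) := by
      rw [← Cardinal.aleph_zero, ← Cardinal.aleph_succ, Ordinal.succ_zero]
    rw [h1, Order.lt_succ_iff] at hfin
    exact hfin

section Comb
variable {R : Type u} [Ring R] {Ω : Type u}

def II (A : Ω → TwoSidedIdeal R) (Θ : Set Ω) : TwoSidedIdeal R := ⨅ i ∈ Θ, A i

lemma mem_II {A : Ω → TwoSidedIdeal R} {Θ : Set Ω} {x : R} :
    x ∈ II A Θ ↔ ∀ i ∈ Θ, x ∈ A i := by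
  rw [II, TwoSidedIdeal.mem_iInf]
  constructor
  · intro h i hi
    have hh := h i
    rwa [iInf_pos hi] at hh
  · intro h i
    by_cases hi : i ∈ Θ
    · rw [iInf_pos hi]; exact h i hi
    · rw [iInf_neg hi]; exact TwoSidedIdeal.mem_top R

lemma II_anti {A : Ω → TwoSidedIdeal R} {Θ Θ' : Set Ω} (h : Θ ⊆ Θ') :
    II A Θ' ≤ II A Θ := by
  intro x hx
  rw [mem_II] at hx ⊢
  exact fun i hi => hx i (h hi)

lemma II_eq_bot_iff {A : Ω → TwoSidedIdeal R} {Θ : Set Ω} :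
    II A Θ = ⊥ ↔ ∀ x : R, (∀ i ∈ Θ, x ∈ A i) → x = 0 := by
  constructor
  · intro h x hx
    have : x ∈ II A Θ := mem_II.2 hx
    rw [h, TwoSidedIdeal.mem_bot] at this
    exact this
  · intro h
    refine SetLike.ext fun x => ?_
    rw [TwoSidedIdeal.mem_bot, mem_II]
    exact ⟨fun hx => h x hx, fun hx => hx ▸ fun i _ => (A i).zero_mem⟩

structure Cfg (R : Type u) [Ring R] (Ω : Type u) where
  A : Ω → TwoSidedIdeal R
  hprime : ∀ X Y : TwoSidedIdeal R, (∀ a ∈ X, ∀ b ∈ Y, a * b = 0) → X = ⊥ ∨ Y = ⊥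
  hA : ∀ i, A i ≠ ⊥
  hbot : II A Set.univ = ⊥
  hns : ∀ Γ Λ : Set Ω, Disjoint Γ Λ → II A Γ = ⊥ → II A Λ = ⊥ → False
  hnt : (⊥ : TwoSidedIdeal R) ≠ ⊤

namespace Cfg
variable (C : Cfg R Ω)

def Sml (Θ : Set Ω) : Prop := II C.A Θ ≠ ⊥

lemma prime_split {Θ Θ' : Set Ω} (h : II C.A (Θ ∪ Θ') = ⊥) :
    II C.A Θ = ⊥ ∨ II C.A Θ' = ⊥ := by
  apply C.hprime
  intro a ha b hb
  have : a * b ∈ II C.A (Θ ∪ Θ') := by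
    rw [mem_II] at ha hb ⊢
    rintro i (hi | hi)
    · exact (C.A i).mul_mem_right _ _ (ha i hi)
    · exact (C.A i).mul_mem_left _ _ (hb i hi)
  rw [h, TwoSidedIdeal.mem_bot] at this
  exact this

lemma sml_union {Θ Θ' : Set Ω} (h : C.Sml Θ) (h' : C.Sml Θ') : C.Sml (Θ ∪ Θ') := by
  intro hb
  rcases C.prime_split hb with hc | hc
  exacts [h hc, h' hc]

lemma sml_mono {Θ Θ' : Set Ω} (hsub : Θ ⊆ Θ') (h : C.Sml Θ') : C.Sml Θ := by
  intro hb
  exact h (le_bot_iff.1 (hb ▸ II_anti hsub))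

lemma sml_empty : C.Sml ∅ := by
  intro hb
  apply C.hnt
  rw [← hb]
  refine le_antisymm le_top ?_
  intro x _
  rw [mem_II]
  exact fun i hi => absurd hi (Set.notMem_empty i)

lemma sml_singleton (j : Ω) : C.Sml {j} := by
  intro hb
  apply C.hA j
  rw [II_eq_bot_iff] at hb
  refine SetLike.ext fun x => ?_
  rw [TwoSidedIdeal.mem_bot]
  exact ⟨fun hx => hb x (fun i hi => by rwa [Set.mem_singleton_iff.1 hi]),
    fun hx => hx ▸ (C.A j).zero_mem⟩

lemma compl_bot {Θ : Set Ω} (h : C.Sml Θ) : II C.A Θᶜ = ⊥ := by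
  have := C.hbot
  rw [← Set.union_compl_self Θ] at this
  exact (C.prime_split this).resolve_left h

lemma exists_ne_zero {Θ : Set Ω} (h : C.Sml Θ) : ∃ x, x ∈ II C.A Θ ∧ x ≠ 0 := by
  by_contra hc
  push_neg at hc
  exact h (II_eq_bot_iff.2 fun x hx => hc x (mem_II.2 hx))

lemma step {H E : Set Ω} (hH : C.Sml H) (hE : C.Sml E) :
    ∃ j, j ∉ H ∧ j ∉ E ∧ II C.A (insert j H) < II C.A H ∧ C.Sml (insert j H) := by
  obtain ⟨x, hx, hx0⟩ := C.exists_ne_zero hH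
  have hcompl : II C.A (H ∪ E)ᶜ = ⊥ := C.compl_bot (C.sml_union hH hE)
  have hxn : x ∉ II C.A (H ∪ E)ᶜ := fun hmem => hx0 (by rwa [hcompl, TwoSidedIdeal.mem_bot] at hmem)
  rw [mem_II] at hxn
  push_neg at hxn
  obtain ⟨j, hj, hjx⟩ := hxn
  rw [Set.mem_compl_iff, Set.mem_union] at hj
  push_neg at hj
  refine ⟨j, hj.1, hj.2, ?_, ?_⟩
  · refine lt_of_le_of_ne (II_anti (Set.subset_insert j H)) (fun heq => ?_)
    exact hjx (mem_II.1 (heq ▸ hx) j (Set.mem_insert j H))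
  · rw [Set.insert_eq]
    exact C.sml_union (C.sml_singleton j) hH

end Cfg
structure ThSt (R : Type u) [Ring R] (Ω : Type u) where
  HA : Set Ω
  HB : Set Ω
  KA : Ordinal.{u} → TwoSidedIdeal R
  KB : Ordinal.{u} → TwoSidedIdeal R

structure ThInv (C : Cfg R Ω) (H E : Set Ω) (b : Ordinal.{u}) (s : ThSt R Ω) : Prop where
  hHA : H ⊆ s.HA
  hsA : C.Sml s.HA
  havA : ∀ j ∈ s.HA, j ∉ H → j ∉ E
  hHB : H ⊆ s.HB
  hsB : C.Sml s.HB
  havB : ∀ j ∈ s.HB, j ∉ H → j ∉ E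
  hdisj : ∀ j, j ∈ s.HA → j ∈ s.HB → j ∈ H
  hKAlt : ∀ δ, δ < b → s.KA δ < II C.A H
  hKAge : ∀ δ, δ < b → II C.A s.HA ≤ s.KA δ
  hKAstr : ∀ δ ε, δ < ε → ε < b → s.KA ε < s.KA δ
  hKBlt : ∀ δ, δ < b → s.KB δ < II C.A H
  hKBge : ∀ δ, δ < b → II C.A s.HB ≤ s.KB δ
  hKBstr : ∀ δ ε, δ < ε → ε < b → s.KB ε < s.KB δ

structure ThStep (b : Ordinal.{u}) (s s' : ThSt R Ω) : Prop where
  hA : s.HA ⊆ s'.HA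
  hB : s.HB ⊆ s'.HB
  hKA : ∀ δ, δ < b → s'.KA δ = s.KA δ
  hKB : ∀ δ, δ < b → s'.KB δ = s.KB δ

namespace Cfg

def SSt (C : Cfg R Ω) (lam : Ordinal.{u}) : Prop :=
  ∀ H E : Set Ω, C.Sml H → C.Sml E →
    ∃ (W : Set Ω) (K : Ordinal.{u} → TwoSidedIdeal R),
      (∀ j ∈ W, j ∉ H ∧ j ∉ E) ∧ C.Sml (H ∪ W) ∧
      (∀ δ, δ < lam → K δ < II C.A H) ∧
      (∀ δ, δ < lam → II C.A (H ∪ W) ≤ K δ) ∧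
      (∀ δ ε, δ < ε → ε < lam → K ε < K δ)

lemma SSt_succ (C : Cfg R Ω) {mu : Ordinal.{u}} (ih : C.SSt mu) : C.SSt (mu + 1) := by
  intro H E hH hE
  obtain ⟨W, K, hW, hsml, hlt, hge, hstr⟩ := ih H E hH hE
  obtain ⟨j, hjH, hjE, hjlt, hjsml⟩ := C.step hsml hE
  rw [Set.mem_union] at hjH
  push_neg at hjH
  refine ⟨insert j W, fun δ => if δ < mu then K δ else II C.A (insert j (H ∪ W)), ?_, ?_, ?_, ?_, ?_⟩
  · rintro i (rfl | hi)
    · exact ⟨hjH.1, hjE⟩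
    · exact hW i hi
  · rw [Set.union_insert]
    exact hjsml
  · intro δ hδ
    dsimp only
    by_cases hc : δ < mu
    · rw [if_pos hc]; exact hlt δ hc
    · rw [if_neg hc]
      exact lt_of_lt_of_le hjlt (le_trans (II_anti Set.subset_union_left) le_rfl)
  · intro δ hδ
    dsimp only
    rw [Set.union_insert]
    by_cases hc : δ < mu
    · rw [if_pos hc]
      exact le_trans (II_anti (Set.subset_insert j (H ∪ W))) (hge δ hc)
    · rw [if_neg hc]
  · intro δ ε hde hε
    dsimp only
    have hδmu : δ < mu + 1 := hde.trans hε
    by_cases hc : ε < mu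
    · rw [if_pos hc, if_pos (hde.trans hc)]
      exact hstr δ ε hde hc
    · rw [if_neg hc]
      have hdm : δ < mu := by
        have hεle : ε ≤ mu := by rwa [Ordinal.add_one_eq_succ, Order.lt_succ_iff] at hε
        rcases lt_or_eq_of_le hεle with h | h
        · exact absurd h hc
        · exact h ▸ hde
      rw [if_pos hdm]
      exact lt_of_lt_of_le hjlt (hge δ hdm)

lemma step_ex (C : Cfg R Ω) (H E : Set Ω) (hE : C.Sml E) (b τ : Ordinal.{u})
    (hSS : C.SSt τ) (s : ThSt R Ω) (hs : ThInv C H E b s) :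
    ∃ s', ThInv C H E (b + τ) s' ∧ ThStep b s s' := by
  obtain ⟨WA, KA', hWA, hsmlA, hltA, hgeA, hstrA⟩ :=
    hSS s.HA (E ∪ s.HB) hs.hsA (C.sml_union hE hs.hsB)
  obtain ⟨WB, KB', hWB, hsmlB, hltB, hgeB, hstrB⟩ :=
    hSS s.HB (E ∪ (s.HA ∪ WA)) hs.hsB (C.sml_union hE hsmlA)
  have hsub : ∀ δ : Ordinal.{u}, ¬ δ < b → δ < b + τ → δ - b < τ := by
    intro δ h1 h2
    have hbd : b + (δ - b) = δ := Ordinal.add_sub_cancel_of_le (not_lt.1 h1)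
    exact (add_lt_add_iff_left b).1 (by rwa [hbd])
  refine ⟨⟨s.HA ∪ WA, s.HB ∪ WB,
    fun δ => if δ < b then s.KA δ else KA' (δ - b),
    fun δ => if δ < b then s.KB δ else KB' (δ - b)⟩,
    ⟨hs.hHA.trans Set.subset_union_left, hsmlA, ?_,
     hs.hHB.trans Set.subset_union_left, hsmlB, ?_, ?_, ?_, ?_, ?_, ?_, ?_, ?_⟩,
    ⟨Set.subset_union_left, Set.subset_union_left,
     fun δ hδ => if_pos hδ, fun δ hδ => if_pos hδ⟩⟩
  · rintro j (hj | hj) hjH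
    · exact hs.havA j hj hjH
    · exact fun hjE => (hWA j hj).2 (Set.mem_union_left _ hjE)
  · rintro j (hj | hj) hjH
    · exact hs.havB j hj hjH
    · exact fun hjE => (hWB j hj).2 (Set.mem_union_left _ hjE)
  · rintro j (hja | hja) hjb
    · rcases hjb with hjb | hjb
      · exact hs.hdisj j hja hjb
      · exact absurd (Set.mem_union_right _ (Set.mem_union_left _ hja)) (hWB j hjb).2
    · rcases hjb with hjb | hjb
      · exact absurd (Set.mem_union_right _ hjb) (hWA j hja).2
      · exact absurd (Set.mem_union_right _ (Set.mem_union_right _ hja)) (hWB j hjb).2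
  · intro δ hδ
    dsimp only
    by_cases hc : δ < b
    · rw [if_pos hc]; exact hs.hKAlt δ hc
    · rw [if_neg hc]
      exact lt_of_lt_of_le (hltA _ (hsub δ hc hδ)) (II_anti hs.hHA)
  · intro δ hδ
    dsimp only
    by_cases hc : δ < b
    · rw [if_pos hc]
      exact le_trans (II_anti Set.subset_union_left) (hs.hKAge δ hc)
    · rw [if_neg hc]
      exact hgeA _ (hsub δ hc hδ)
  · intro δ ε hde hε
    dsimp only
    by_cases hc : ε < b
    · rw [if_pos hc, if_pos (hde.trans hc)]
      exact hs.hKAstr δ ε hde hc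
    · rw [if_neg hc]
      by_cases hd : δ < b
      · rw [if_pos hd]
        exact lt_of_lt_of_le (lt_of_lt_of_le (hltA _ (hsub ε hc hε)) le_rfl)
          (le_trans (II_anti (le_refl s.HA : s.HA ⊆ s.HA)) (hs.hKAge δ hd))
      · rw [if_neg hd]
        refine hstrA _ _ ?_ (hsub ε hc hε)
        have h1 : b + (δ - b) = δ := Ordinal.add_sub_cancel_of_le (not_lt.1 hd)
        have h2 : b + (ε - b) = ε := Ordinal.add_sub_cancel_of_le (not_lt.1 hc)
        exact (add_lt_add_iff_left b).1 (by rwa [h1, h2])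
  · intro δ hδ
    dsimp only
    by_cases hc : δ < b
    · rw [if_pos hc]; exact hs.hKBlt δ hc
    · rw [if_neg hc]
      exact lt_of_lt_of_le (hltB _ (hsub δ hc hδ)) (II_anti hs.hHB)
  · intro δ hδ
    dsimp only
    by_cases hc : δ < b
    · rw [if_pos hc]
      exact le_trans (II_anti Set.subset_union_left) (hs.hKBge δ hc)
    · rw [if_neg hc]
      exact hgeB _ (hsub δ hc hδ)
  · intro δ ε hde hε
    dsimp only
    by_cases hc : ε < b
    · rw [if_pos hc, if_pos (hde.trans hc)]
      exact hs.hKBstr δ ε hde hc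
    · rw [if_neg hc]
      by_cases hd : δ < b
      · rw [if_pos hd]
        exact lt_of_lt_of_le (hltB _ (hsub ε hc hε)) (hs.hKBge δ hd)
      · rw [if_neg hd]
        refine hstrB _ _ ?_ (hsub ε hc hε)
        have h1 : b + (δ - b) = δ := Ordinal.add_sub_cancel_of_le (not_lt.1 hd)
        have h2 : b + (ε - b) = ε := Ordinal.add_sub_cancel_of_le (not_lt.1 hc)
        exact (add_lt_add_iff_left b).1 (by rwa [h1, h2])

lemma SSt_limit (C : Cfg R Ω) {lam : Ordinal.{u}} (hlim : Order.IsSuccLimit lam)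
    (hcard : lam.card ≤ Cardinal.aleph0) (ihn : ∀ mu, mu < lam → C.SSt mu) : C.SSt lam := by
  classical
  intro H E hH hE
  obtain ⟨g, hg1, hg2⟩ := exists_cofinal_seq lam hlim.pos.ne' hcard
  let ls : ℕ → Ordinal.{u} := fun n =>
    Nat.rec (motive := fun _ => Ordinal.{u}) 0 (fun m p => max (p + 1) (g m + 1)) n
  have hls_succ : ∀ n, ls (n + 1) = max (ls n + 1) (g n + 1) := fun n => rfl
  have hlsstep : ∀ n, ls n < ls (n + 1) := by
    intro n
    rw [hls_succ]
    refine lt_of_lt_of_le ?_ (le_max_left _ _)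
    rw [Ordinal.add_one_eq_succ]; exact Order.lt_succ (ls n)
  have hlsmono : Monotone ls := monotone_nat_of_le_succ (fun n => (hlsstep n).le)
  have hlslt : ∀ n, ls n < lam := by
    intro n
    induction n with
    | zero => exact hlim.pos
    | succ m ihm =>
      rw [hls_succ]
      apply max_lt
      · rw [Ordinal.add_one_eq_succ]; exact hlim.succ_lt ihm
      · rw [Ordinal.add_one_eq_succ]; exact hlim.succ_lt (hg1 m)
  have hcover : ∀ δ, δ < lam → ∃ n, δ < ls n := by
    intro δ hδ
    obtain ⟨n, hn⟩ := hg2 δ hδ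
    refine ⟨n + 1, lt_of_le_of_lt hn (lt_of_lt_of_le ?_ ((hls_succ n).symm ▸ le_max_right _ _))⟩
    rw [Ordinal.add_one_eq_succ]; exact Order.lt_succ _
  have key : ∀ n (s : ThSt R Ω), ThInv C H E (ls n) s →
      ∃ s', ThInv C H E (ls (n + 1)) s' ∧ ThStep (ls n) s s' := by
    intro n s hs
    have htl : ls (n + 1) - ls n < lam :=
      lt_of_le_of_lt (Ordinal.sub_le_self _ _) (hlslt (n + 1))
    have hex := C.step_ex H E hE (ls n) (ls (n + 1) - ls n) (ihn _ htl) s hs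
    rwa [Ordinal.add_sub_cancel_of_le (hlsstep n).le] at hex
  have inv0 : ThInv C H E (ls 0) ⟨H, H, fun _ => ⊥, fun _ => ⊥⟩ :=
    { hHA := le_refl H
      hsA := hH
      havA := fun j hj hjH => absurd hj hjH
      hHB := le_refl H
      hsB := hH
      havB := fun j hj hjH => absurd hj hjH
      hdisj := fun j hj _ => hj
      hKAlt := fun δ hδ => absurd hδ (by simp : ¬ δ < (0 : Ordinal))
      hKAge := fun δ hδ => absurd hδ (by simp : ¬ δ < (0 : Ordinal))
      hKAstr := fun δ ε _ hε => absurd hε (by simp : ¬ ε < (0 : Ordinal))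
      hKBlt := fun δ hδ => absurd hδ (by simp : ¬ δ < (0 : Ordinal))
      hKBge := fun δ hδ => absurd hδ (by simp : ¬ δ < (0 : Ordinal))
      hKBstr := fun δ ε _ hε => absurd hε (by simp : ¬ ε < (0 : Ordinal)) }
  let seq : ∀ n : ℕ, {s : ThSt R Ω // ThInv C H E (ls n) s} :=
    fun n => Nat.rec (motive := fun n => {s : ThSt R Ω // ThInv C H E (ls n) s})
      ⟨⟨H, H, fun _ => ⊥, fun _ => ⊥⟩, inv0⟩
      (fun m p => ⟨(key m p.1 p.2).choose, (key m p.1 p.2).choose_spec.1⟩) n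
  have hstep : ∀ n, ThStep (ls n) (seq n).1 (seq (n + 1)).1 :=
    fun n => (key n (seq n).1 (seq n).2).choose_spec.2
  have hAmono : ∀ m n, m ≤ n → (seq m).1.HA ⊆ (seq n).1.HA := by
    intro m n hmn
    induction n, hmn using Nat.le_induction with
    | base => exact subset_rfl
    | succ n hmn ih => exact ih.trans (hstep n).hA
  have hBmono : ∀ m n, m ≤ n → (seq m).1.HB ⊆ (seq n).1.HB := by
    intro m n hmn
    induction n, hmn using Nat.le_induction with
    | base => exact subset_rfl
    | succ n hmn ih => exact ih.trans (hstep n).hB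
  have hagA : ∀ m n, m ≤ n → ∀ δ, δ < ls m → (seq n).1.KA δ = (seq m).1.KA δ := by
    intro m n hmn
    induction n, hmn using Nat.le_induction with
    | base => exact fun δ _ => rfl
    | succ n hmn ih =>
      exact fun δ hδ => ((hstep n).hKA δ (lt_of_lt_of_le hδ (hlsmono hmn))).trans (ih δ hδ)
  have hagB : ∀ m n, m ≤ n → ∀ δ, δ < ls m → (seq n).1.KB δ = (seq m).1.KB δ := by
    intro m n hmn
    induction n, hmn using Nat.le_induction with
    | base => exact fun δ _ => rfl
    | succ n hmn ih =>
      exact fun δ hδ => ((hstep n).hKB δ (lt_of_lt_of_le hδ (hlsmono hmn))).trans (ih δ hδ)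
  have hHsubA : H ⊆ ⋃ n, (seq n).1.HA := fun x hx => Set.mem_iUnion.2 ⟨0, (seq 0).2.hHA hx⟩
  have hHsubB : H ⊆ ⋃ n, (seq n).1.HB := fun x hx => Set.mem_iUnion.2 ⟨0, (seq 0).2.hHB hx⟩
  by_cases hsmlA : C.Sml (⋃ n, (seq n).1.HA)
  · refine ⟨(⋃ n, (seq n).1.HA) \ H,
      fun δ => if h : δ < lam then (seq (hcover δ h).choose).1.KA δ else ⊥, ?_, ?_, ?_, ?_, ?_⟩
    · intro j hj
      obtain ⟨n, hn⟩ := Set.mem_iUnion.1 hj.1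
      exact ⟨hj.2, (seq n).2.havA j hn hj.2⟩
    · rwa [Set.union_diff_cancel hHsubA]
    · intro δ hδ
      dsimp only
      rw [dif_pos hδ]
      exact (seq (hcover δ hδ).choose).2.hKAlt δ (hcover δ hδ).choose_spec
    · intro δ hδ
      dsimp only
      rw [dif_pos hδ, Set.union_diff_cancel hHsubA]
      exact le_trans (II_anti (Set.subset_iUnion (fun n => (seq n).1.HA) _))
        ((seq (hcover δ hδ).choose).2.hKAge δ (hcover δ hδ).choose_spec)
    · intro δ ε hde hε
      have hδ : δ < lam := hde.trans hε
      dsimp only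
      rw [dif_pos hδ, dif_pos hε]
      have specδ := (hcover δ hδ).choose_spec
      have specε := (hcover ε hε).choose_spec
      set N := max (hcover δ hδ).choose (hcover ε hε).choose with hN
      calc (seq (hcover ε hε).choose).1.KA ε
          = (seq N).1.KA ε := (hagA _ N (le_max_right _ _) ε specε).symm
        _ < (seq N).1.KA δ := (seq N).2.hKAstr δ ε hde
            (lt_of_lt_of_le specε (hlsmono (le_max_right _ _)))
        _ = (seq (hcover δ hδ).choose).1.KA δ := hagA _ N (le_max_left _ _) δ specδ
  · by_cases hsmlB : C.Sml (⋃ n, (seq n).1.HB)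
    · refine ⟨(⋃ n, (seq n).1.HB) \ H,
        fun δ => if h : δ < lam then (seq (hcover δ h).choose).1.KB δ else ⊥, ?_, ?_, ?_, ?_, ?_⟩
      · intro j hj
        obtain ⟨n, hn⟩ := Set.mem_iUnion.1 hj.1
        exact ⟨hj.2, (seq n).2.havB j hn hj.2⟩
      · rwa [Set.union_diff_cancel hHsubB]
      · intro δ hδ
        dsimp only
        rw [dif_pos hδ]
        exact (seq (hcover δ hδ).choose).2.hKBlt δ (hcover δ hδ).choose_spec
      · intro δ hδ
        dsimp only
        rw [dif_pos hδ, Set.union_diff_cancel hHsubB]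
        exact le_trans (II_anti (Set.subset_iUnion (fun n => (seq n).1.HB) _))
          ((seq (hcover δ hδ).choose).2.hKBge δ (hcover δ hδ).choose_spec)
      · intro δ ε hde hε
        have hδ : δ < lam := hde.trans hε
        dsimp only
        rw [dif_pos hδ, dif_pos hε]
        have specδ := (hcover δ hδ).choose_spec
        have specε := (hcover ε hε).choose_spec
        set N := max (hcover δ hδ).choose (hcover ε hε).choose with hN
        calc (seq (hcover ε hε).choose).1.KB ε
            = (seq N).1.KB ε := (hagB _ N (le_max_right _ _) ε specε).symm
          _ < (seq N).1.KB δ := (seq N).2.hKBstr δ ε hde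
              (lt_of_lt_of_le specε (hlsmono (le_max_right _ _)))
          _ = (seq (hcover δ hδ).choose).1.KB δ := hagB _ N (le_max_left _ _) δ specδ
    · exfalso
      have hbotA : II C.A (⋃ n, (seq n).1.HA) = ⊥ := not_ne_iff.1 hsmlA
      have hbotB : II C.A (⋃ n, (seq n).1.HB) = ⊥ := not_ne_iff.1 hsmlB
      have hΓ : II C.A ((⋃ n, (seq n).1.HA) \ H) = ⊥ := by
        have hu : ((⋃ n, (seq n).1.HA) \ H) ∪ H = ⋃ n, (seq n).1.HA :=
          Set.diff_union_of_subset hHsubA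
        exact (C.prime_split (hu.symm ▸ hbotA)).resolve_right hH
      have hΛ : II C.A ((⋃ n, (seq n).1.HB) \ H) = ⊥ := by
        have hu : ((⋃ n, (seq n).1.HB) \ H) ∪ H = ⋃ n, (seq n).1.HB :=
          Set.diff_union_of_subset hHsubB
        exact (C.prime_split (hu.symm ▸ hbotB)).resolve_right hH
      refine C.hns _ _ ?_ hΓ hΛ
      rw [Set.disjoint_left]
      rintro j ⟨hjA, hjH⟩ ⟨hjB, -⟩
      obtain ⟨m, hm⟩ := Set.mem_iUnion.1 hjA
      obtain ⟨k, hk⟩ := Set.mem_iUnion.1 hjB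
      exact hjH ((seq (max m k)).2.hdisj j (hAmono m _ (le_max_left _ _) hm)
        (hBmono k _ (le_max_right _ _) hk))

theorem SS (C : Cfg R Ω) : ∀ lam : Ordinal.{u}, lam.card ≤ Cardinal.aleph0 → C.SSt lam := by
  intro lam
  induction lam using Ordinal.induction with
  | _ lam IH =>
  intro hcard
  rcases Ordinal.zero_or_succ_or_isSuccLimit lam with rfl | ⟨mu, rfl⟩ | hlim
  · intro H E hH hE
    exact ⟨∅, fun _ => ⊥, fun j hj => absurd hj (Set.notMem_empty j),
      by rwa [Set.union_empty], fun δ hδ => absurd hδ (by simp : ¬ δ < (0 : Ordinal)),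
      fun δ hδ => absurd hδ (by simp : ¬ δ < (0 : Ordinal)),
      fun δ ε _ hε => absurd hε (by simp : ¬ ε < (0 : Ordinal))⟩
  · have hmu : mu.card ≤ Cardinal.aleph0 :=
      le_trans (Ordinal.card_le_card (Order.le_succ mu)) hcard
    have hres := C.SSt_succ (IH mu (Order.lt_succ mu) hmu)
    rwa [Ordinal.add_one_eq_succ] at hres
  · exact C.SSt_limit hlim hcard
      (fun mu hmu => IH mu hmu (le_trans (Ordinal.card_le_card hmu.le) hcard))
end Cfg
end Comb


lemma biInter_eq_singleton_iff {R : Type u} [Ring R] {Ω : Type u}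
    {A : Ω → TwoSidedIdeal R} {Γ : Set Ω} :
    (⋂ i ∈ Γ, (A i : Set R)) = {0} ↔ II A Γ = ⊥ := by
  rw [II_eq_bot_iff]
  constructor
  · intro h x hx
    have hmem : x ∈ ⋂ i ∈ Γ, (A i : Set R) := Set.mem_iInter₂.2 (fun i hi => hx i hi)
    rw [h] at hmem
    exact hmem
  · intro h
    refine Set.eq_singleton_iff_unique_mem.2 ⟨Set.mem_iInter₂.2 (fun i _ => (A i).zero_mem), ?_⟩
    intro x hx
    exact h x (Set.mem_iInter₂.1 hx)

/-- Let `R` be a prime ring with countable left Krull dimension and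
`(Aᵢ)_{i∈Ω}` a family of nonzero two-sided ideals with `⋂ᵢ Aᵢ = 0`.  Then there are
disjoint subsets `Γ, Λ ⊆ Ω` with `⋂_{i∈Γ} Aᵢ = 0` and `⋂_{i∈Λ} Aᵢ = 0`. -/

theorem stmt13 (R : Type u) [Ring R]
    (hprime : ∀ A B : TwoSidedIdeal R, (∀ a ∈ A, ∀ b ∈ B, a * b = 0) → A = ⊥ ∨ B = ⊥)
    (hkdim : ∃ α : Ordinal.{u}, α.card ≤ Cardinal.aleph0 ∧ KdimLE R α (ModuleCat.of R R))
    (Ω : Type u) (A : Ω → TwoSidedIdeal R) (hA : ∀ i, A i ≠ ⊥)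
    (hint : (⋂ i, (A i : Set R)) = {0}) :
    ∃ Γ Λ : Set Ω, Disjoint Γ Λ ∧
      (⋂ i ∈ Γ, (A i : Set R)) = {0} ∧ (⋂ i ∈ Λ, (A i : Set R)) = {0} := by
  classical
  rcases subsingleton_or_nontrivial R with hsub | hnt
  · refine ⟨∅, ∅, Set.disjoint_left.2 (fun a ha _ => Set.notMem_empty a ha), ?_, ?_⟩ <;>
    · rw [Set.biInter_empty]
      exact Set.eq_singleton_iff_unique_mem.2 ⟨Set.mem_univ 0, fun x _ => Subsingleton.elim x 0⟩
  · by_contra hcon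
    push_neg at hcon
    obtain ⟨α, hαc, hαk⟩ := hkdim
    have hbot : II A Set.univ = ⊥ := by
      rw [II_eq_bot_iff]
      intro x hx
      have hmem : x ∈ ⋂ i, (A i : Set R) := Set.mem_iInter.2 (fun i => hx i trivial)
      rw [hint] at hmem
      exact hmem
    have hns : ∀ Γ Λ : Set Ω, Disjoint Γ Λ → II A Γ = ⊥ → II A Λ = ⊥ → False := by
      intro Γ Λ hd h1 h2
      exact hcon Γ Λ hd (biInter_eq_singleton_iff.2 h1) (biInter_eq_singleton_iff.2 h2)
    have hnt' : (⊥ : TwoSidedIdeal R) ≠ ⊤ := by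
      intro h
      have h1 : (1 : R) ∈ (⊥ : TwoSidedIdeal R) := h ▸ TwoSidedIdeal.mem_top R
      rw [TwoSidedIdeal.mem_bot] at h1
      exact one_ne_zero h1
    let C : Cfg R Ω := ⟨A, hprime, hA, hbot, hns, hnt'⟩
    have hkapcard : (Ordinal.omega0 ^ (α + 1)).card ≤ Cardinal.aleph0 := by
      apply card_opow_omega0_le
      rw [Ordinal.add_one_eq_succ, Ordinal.card_succ]
      calc α.card + 1 ≤ Cardinal.aleph0 + Cardinal.aleph0 :=
            add_le_add hαc (le_of_lt Cardinal.one_lt_aleph0)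
        _ = Cardinal.aleph0 := Cardinal.aleph0_add_aleph0
    obtain ⟨W, K, -, -, -, -, hstr⟩ :=
      C.SS (Ordinal.omega0 ^ (α + 1)) hkapcard ∅ ∅ C.sml_empty C.sml_empty
    have hmono : ∀ δ ε : Ordinal.{u}, δ < ε → ε < Ordinal.omega0 ^ (α + 1) →
        (TwoSidedIdeal.asIdeal (K ε) : Ideal R) < (TwoSidedIdeal.asIdeal (K δ) : Ideal R) := by
      intro δ ε h1 h2
      have hlt := hstr δ ε h1 h2
      refine lt_of_le_of_ne (fun x hx => ?_) (fun heq => ?_)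
      · exact TwoSidedIdeal.mem_asIdeal.2 (hlt.le (TwoSidedIdeal.mem_asIdeal.1 hx))
      · apply hlt.ne
        refine SetLike.ext fun x => ?_
        rw [← TwoSidedIdeal.mem_asIdeal (I := K ε), ← TwoSidedIdeal.mem_asIdeal (I := K δ), heq]
    exact KdimLE.no_long_chain R α (ModuleCat.of R R) hαk
      (fun δ => (TwoSidedIdeal.asIdeal (K δ) : Ideal R)) hmono
end

section
/- For a left R-module M, the ordinal κ(M) — the least ordinal κ such that the dual of [0,κ) does not order-embed into the lattice of submodules of M — is countable if and only if M has Krull dimension (in the sense of Gabriel–Rentschler) and this Krull dimension is a countable ordinal. -/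
universe u

open Submodule Set Ordinal Cardinal

section Chains

variable (R : Type u) [Ring R] (M : Type u) [AddCommGroup M] [Module R M]

/-- There is a strictly decreasing chain of submodules of `M` indexed by `Iio o`. -/
def HasChain (o : Ordinal.{u}) : Prop :=
  ∃ f : (Set.Iio o) → Submodule R M, StrictAnti f

theorem kappa_eq : kappa R M = sInf {κ : Ordinal.{u} | ¬ HasChain R M κ} := rfl

variable {R M}

theorem HasChain.mono {o o' : Ordinal.{u}} (h : o ≤ o') (hc : HasChain R M o') :
    HasChain R M o := by
  obtain ⟨f, hf⟩ := hc
  refine ⟨fun x => f ⟨x.1, lt_of_lt_of_le x.2 h⟩, fun a b hab => hf ?_⟩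
  exact hab

variable (R M)

theorem not_hasChain_big : ¬ HasChain R M (Order.succ (#(Submodule R M))).ord := by
  rintro ⟨f, hf⟩
  have h1 : Cardinal.lift.{u} #(Set.Iio (Order.succ (#(Submodule R M))).ord)
      ≤ Cardinal.lift.{u+1} #(Submodule R M) :=
    Cardinal.lift_mk_le'.mpr ⟨⟨f, hf.injective⟩⟩
  rw [Ordinal.mk_Iio_ordinal, Cardinal.lift_lift, Cardinal.card_ord] at h1
  exact (not_le_of_gt (Order.lt_succ (#(Submodule R M)))) (Cardinal.lift_le.mp h1)

theorem not_hasChain_kappa : ¬ HasChain R M (kappa R M) := by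
  have h : ({κ : Ordinal.{u} | ¬ HasChain R M κ}).Nonempty := ⟨_, not_hasChain_big R M⟩
  rw [kappa_eq]
  exact csInf_mem h

theorem hasChain_iff_lt {o : Ordinal.{u}} : HasChain R M o ↔ o < kappa R M := by
  constructor
  · intro h
    by_contra hle
    exact not_hasChain_kappa R M (h.mono (not_lt.mp hle))
  · intro h
    have := notMem_of_lt_csInf' (s := {κ : Ordinal.{u} | ¬ HasChain R M κ}) (kappa_eq R M ▸ h)
    simpa using this

theorem hasChain_one : HasChain R M 1 := by
  refine ⟨fun _ => ⊥, fun a b hab => ?_⟩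
  have h : a.1 < b.1 := hab
  rw [Ordinal.lt_one_iff_zero.mp a.2, Ordinal.lt_one_iff_zero.mp b.2] at h
  exact absurd h (lt_irrefl 0)

theorem one_lt_kappa : 1 < kappa R M := (hasChain_iff_lt R M).mp (hasChain_one R M)

end Chains

section Quot

variable {R : Type u} [Ring R] {M : Type u} [AddCommGroup M] [Module R M]
variable (N' N : Submodule R M)

/-- The canonical order-embedding from submodules of `N ⧸ N'` into submodules of `M`. -/
noncomputable def quotE (P : Submodule R (↥N ⧸ comap N.subtype N')) : Submodule R M :=
  map N.subtype (comap (comap N.subtype N').mkQ P)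

theorem quotE_strictMono : StrictMono (quotE N' N) := by
  have hinj : Function.Injective (quotE N' N) := by
    intro P P' h
    exact comap_injective_of_surjective (mkQ_surjective _)
      (map_injective_of_injective N.injective_subtype h)
  have hmono : Monotone (quotE N' N) := fun P P' h =>
    map_mono (comap_mono h)
  exact hmono.strictMono_of_injective hinj

theorem quotE_le (P : Submodule R (↥N ⧸ comap N.subtype N')) : quotE N' N P ≤ N :=
  map_subtype_le N _

theorem le_quotE (h : N' ≤ N) (P : Submodule R (↥N ⧸ comap N.subtype N')) :
    N' ≤ quotE N' N P := by
  have h1 : comap N.subtype N' ≤ comap (comap N.subtype N').mkQ P := by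
    have := LinearMap.ker_le_comap (p := P) (comap N.subtype N').mkQ
    rwa [Submodule.ker_mkQ] at this
  calc N' = N ⊓ N' := (inf_eq_right.mpr h).symm
    _ = map N.subtype (comap N.subtype N') := (map_comap_subtype N N').symm
    _ ≤ quotE N' N P := map_mono h1

theorem hasChain_of_quot {o : Ordinal.{u}}
    (h : HasChain R (↥N ⧸ comap N.subtype N') o) : HasChain R M o := by
  obtain ⟨f, hf⟩ := h
  exact ⟨fun x => quotE N' N (f x), fun a b hab => quotE_strictMono N' N (hf hab)⟩

/-- From a chain of length `μ + 1` in the quotient `N ⧸ N'`, get a chain of length `μ`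
in `M` lying strictly between `N'` and `N`. -/
theorem exists_chain_in_interval (h : N' ≤ N) {μ : Ordinal.{u}}
    (hc : HasChain R (↥N ⧸ comap N.subtype N') (μ + 1)) :
    ∃ g : Set.Iio μ → Submodule R M, StrictAnti g ∧ ∀ δ, N' < g δ ∧ g δ ≤ N := by
  obtain ⟨c, hc⟩ := hc
  have hμ : μ < μ + 1 := by
    rw [Ordinal.add_one_eq_succ]; exact Order.lt_succ μ
  refine ⟨fun δ => quotE N' N (c ⟨δ.1, lt_trans δ.2 hμ⟩), fun a b hab => ?_, fun δ => ?_⟩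
  · exact quotE_strictMono N' N (hc (show (⟨a.1, _⟩ : Set.Iio (μ+1)) < ⟨b.1, _⟩ from hab))
  · constructor
    · calc N' ≤ quotE N' N (c ⟨μ, hμ⟩) := le_quotE N' N h _
        _ < _ := quotE_strictMono N' N (hc (show (⟨δ.1, _⟩ : Set.Iio (μ+1)) < ⟨μ, hμ⟩ from δ.2))
    · exact quotE_le N' N _

/-- From a chain in `M` lying between `N'` and `N`, get a chain in the quotient. -/
theorem hasChain_quot_of_interval {μ : Ordinal.{u}} (g : Set.Iio μ → Submodule R M)
    (hg : StrictAnti g) (hb : ∀ δ, N' ≤ g δ ∧ g δ ≤ N) :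
    HasChain R (↥N ⧸ comap N.subtype N') μ := by
  set K := comap N.subtype N' with hK
  refine ⟨fun δ => map K.mkQ (comap N.subtype (g δ)), fun a b hab => ?_⟩
  have key : ∀ P P' : Submodule R M, N' ≤ P → P < P' → P' ≤ N →
      map K.mkQ (comap N.subtype P) < map K.mkQ (comap N.subtype P') := by
    intro P P' hNP hPP' hP'N
    have hKP : K ≤ comap N.subtype P := comap_mono hNP
    have hKP' : K ≤ comap N.subtype P' := hKP.trans (comap_mono hPP'.le)
    refine lt_of_le_of_ne (map_mono (comap_mono hPP'.le)) fun heq => ?_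
    have h2 : comap N.subtype P = comap N.subtype P' := by
      have := congrArg (comap K.mkQ) heq
      rwa [comap_map_eq_self (by rw [Submodule.ker_mkQ]; exact hKP),
        comap_map_eq_self (by rw [Submodule.ker_mkQ]; exact hKP')] at this
    have h3 : P = P' := by
      have := congrArg (map N.subtype) h2
      rwa [map_comap_subtype, map_comap_subtype,
        inf_eq_right.mpr (hPP'.le.trans hP'N), inf_eq_right.mpr hP'N] at this
    exact hPP'.ne h3
  exact key _ _ (hb b).1 (hg hab) (hb a).2

end Quot

theorem card_opow_omega0_le_s14 : ∀ o : Ordinal.{u}, o.card ≤ ℵ₀ →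
    ((omega0 ^ o : Ordinal.{u})).card ≤ ℵ₀ := by
  intro o
  induction o using Ordinal.limitRecOn with
  | zero => intro _; simp
  | add_one o IH =>
    intro h
    have ho : o.card ≤ ℵ₀ := (Ordinal.card_le_card (Order.le_succ o)).trans h
    rw [opow_add_one, Ordinal.card_mul, Ordinal.card_omega0]
    calc (omega0 ^ o).card * ℵ₀ ≤ ℵ₀ * ℵ₀ := mul_le_mul' (IH ho) le_rfl
      _ = ℵ₀ := Cardinal.aleph0_mul_aleph0
  | limit o hl IH =>
    intro h
    have hcnt : Countable (Set.Iio o) := by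
      rw [← Cardinal.mk_le_aleph0_iff, Ordinal.mk_Iio_ordinal]
      calc Cardinal.lift.{u+1} o.card ≤ Cardinal.lift.{u+1} ℵ₀ := Cardinal.lift_le.mpr h
        _ = ℵ₀ := Cardinal.lift_aleph0
    have hne : Nonempty (Set.Iio o) := ⟨⟨0, hl.pos⟩⟩
    obtain ⟨s, hs⟩ := exists_surjective_nat (Set.Iio o)
    set e : ULift.{u} ℕ → Ordinal.{u} := fun k => omega0 ^ (s k.down).1 with he
    have helt : ∀ k, e k < (Cardinal.aleph 1).ord := by
      intro k
      rw [Cardinal.lt_ord]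
      have h1 : ((s k.down).1).card ≤ ℵ₀ := (Ordinal.card_le_card (s k.down).2.le).trans h
      exact lt_of_le_of_lt (IH _ (s k.down).2 h1) Cardinal.aleph0_lt_aleph_one
    have hsup : iSup e < (Cardinal.aleph 1).ord := by rw [Cardinal.ord_aleph] at helt ⊢; exact Ordinal.iSup_lt_omega_one helt
    have hle : omega0 ^ o ≤ iSup e := by
      rw [opow_le_of_isSuccLimit Ordinal.omega0_ne_zero hl]
      intro b hb
      obtain ⟨k, hk⟩ := hs ⟨b, hb⟩
      have : omega0 ^ b = e ⟨k⟩ := by rw [he]; simp [hk]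
      rw [this]
      exact le_ciSup (Ordinal.bddAbove_range e) _
    have : (omega0 ^ o : Ordinal.{u}).card < Cardinal.aleph 1 :=
      Cardinal.lt_ord.mp (lt_of_le_of_lt hle hsup)
    rwa [← Cardinal.succ_aleph0, Order.lt_succ_iff] at this



theorem lemA {R : Type u} [Ring R] :
    ∀ (α : Ordinal.{u}) (M : ModuleCat.{u} R), KdimLE R α M →
      ¬ HasChain R M (omega0 ^ (α + 1)) := by
  intro α
  induction α using Ordinal.induction with
  | h α IH =>
    intro M hK hch
    obtain ⟨f, hf⟩ := hch
    have hpos : (0 : Ordinal.{u}) < omega0 ^ α := opow_pos α omega0_pos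
    have hexp : (omega0 ^ (α + 1) : Ordinal.{u}) = omega0 ^ α * omega0 := by
      rw [opow_add, opow_one]
    have hidx : ∀ n : ℕ, (omega0 ^ α * n : Ordinal.{u}) < omega0 ^ (α + 1) := by
      intro n
      rw [hexp]
      exact (mul_lt_mul_iff_right₀ hpos).mpr (Ordinal.nat_lt_omega0 n)
    have hidx2 : ∀ (n : ℕ) (δ : Ordinal.{u}), δ < omega0 ^ α →
        omega0 ^ α * n + δ < omega0 ^ (α + 1) := by
      intro n δ hδ
      calc omega0 ^ α * n + δ < omega0 ^ α * n + omega0 ^ α :=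
            (add_lt_add_iff_left _).mpr hδ
        _ = omega0 ^ α * (n + 1 : ℕ) := by
            rw [Nat.cast_succ, Ordinal.add_one_eq_succ, Ordinal.mul_succ]
        _ ≤ omega0 ^ (α + 1) := by
            rw [hexp]
            exact mul_le_mul_right (Ordinal.nat_lt_omega0 (n+1)).le _
    set g : ℕ → Submodule R M := fun n => f ⟨omega0 ^ α * n, hidx n⟩ with hg
    have hmono : ∀ m n : ℕ, m ≤ n → (omega0 ^ α * m : Ordinal.{u}) ≤ omega0 ^ α * n :=
      fun m n h => mul_le_mul_right (Nat.cast_le.mpr h) _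
    have hdesc : ∀ n, g (n + 1) ≤ g n := by
      intro n
      exact hf.antitone (show (⟨omega0 ^ α * n, _⟩ : Set.Iio _) ≤ ⟨omega0 ^ α * (n+1 : ℕ), _⟩
        from hmono n (n+1) (Nat.le_succ n))
    rw [KdimLE] at hK
    obtain ⟨N, hN⟩ := hK g hdesc
    have hstrict : g (N + 1) < g N := by
      apply hf
      show (omega0 ^ α * N : Ordinal.{u}) < omega0 ^ α * (N+1 : ℕ)
      exact (mul_lt_mul_iff_right₀ hpos).mpr
        (Nat.cast_lt.mpr (Nat.lt_succ_self N))
    rcases hN N le_rfl with hsub | ⟨β, hβ, hKβ⟩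
    · rw [Submodule.Quotient.subsingleton_iff, Submodule.comap_subtype_eq_top] at hsub
      exact absurd hsub (not_le_of_gt hstrict)
    · -- build a chain of length `ω ^ α` inside the interval `[g (N+1), g N]`
      have hc : ∀ δ : Set.Iio (omega0 ^ α : Ordinal.{u}),
          (omega0 ^ α * N + δ.1 : Ordinal.{u}) < omega0 ^ (α + 1) :=
        fun δ => hidx2 N δ.1 δ.2
      set c : Set.Iio (omega0 ^ α : Ordinal.{u}) → Submodule R M :=
        fun δ => f ⟨omega0 ^ α * N + δ.1, hc δ⟩ with hcdef
      have hcanti : StrictAnti c := by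
        intro a b hab
        exact hf (show (omega0 ^ α * N + a.1 : Ordinal.{u}) < omega0 ^ α * N + b.1 from
          (add_lt_add_iff_left _).mpr hab)
      have hcb : ∀ δ, g (N + 1) ≤ c δ ∧ c δ ≤ g N := by
        intro δ
        constructor
        · apply hf.antitone
          show (omega0 ^ α * N + δ.1 : Ordinal.{u}) ≤ omega0 ^ α * (N+1 : ℕ)
          rw [Nat.cast_succ, Ordinal.add_one_eq_succ, Ordinal.mul_succ]
          exact add_le_add_right (Set.mem_Iio.mp δ.2).le _
        · apply hf.antitone
          show (omega0 ^ α * N : Ordinal.{u}) ≤ omega0 ^ α * N + δ.1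
          exact le_self_add
      have hchQ : HasChain R
          (↥(g N) ⧸ comap (g N).subtype (g (N + 1))) (omega0 ^ α : Ordinal.{u}) :=
        hasChain_quot_of_interval (g (N+1)) (g N) c hcanti hcb
      have hβ1 : (omega0 ^ (β + 1) : Ordinal.{u}) ≤ omega0 ^ α := by
        apply opow_le_opow_right omega0_pos
        rw [Ordinal.add_one_eq_succ]
        exact Order.succ_le_of_lt hβ
      exact IH β hβ (ModuleCat.of R (↥(g N) ⧸ comap (g N).subtype (g (N + 1)))) hKβ
        (hchQ.mono hβ1)

theorem lemB {R : Type u} [Ring R] :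
    ∀ κ : Ordinal.{u}, κ.card ≤ ℵ₀ →
      ∀ (M : Type u) (_inst1 : AddCommGroup M) (_inst2 : Module R M), kappa R M = κ →
        KdimLE R κ (ModuleCat.of R M) := by
  intro κ
  induction κ using Ordinal.induction with
  | h κ IH =>
    intro hcard M _inst1 _inst2 hκ
    rw [KdimLE]
    show ∀ f : ℕ → Submodule R M, (∀ n, f (n + 1) ≤ f n) →
      ∃ N : ℕ, ∀ n, N ≤ n →
        Subsingleton ((f n) ⧸ (comap (f n).subtype (f (n + 1)))) ∨
        ∃ β, ∃ _ : β < κ,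
          KdimLE R β (ModuleCat.of R ((f n) ⧸ (comap (f n).subtype (f (n + 1)))))
    intro f hdesc
    have hanti : Antitone f := antitone_nat_of_succ_le hdesc
    by_contra hcon
    push_neg at hcon
    -- every `n` produced by `hcon` has a nontrivial factor of maximal `kappa`
    have hQfacts : ∀ n, ¬ Subsingleton ((f n) ⧸ (comap (f n).subtype (f (n + 1)))) →
        (∀ β < κ, ¬ KdimLE R β (ModuleCat.of R ((f n) ⧸ (comap (f n).subtype (f (n + 1)))))) →
        f (n + 1) < f n ∧
          ∀ o < κ, HasChain R ((f n) ⧸ (comap (f n).subtype (f (n + 1)))) o := by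
      intro n hA hB
      constructor
      · refine (hdesc n).lt_of_ne fun h => ?_
        exact hA (Submodule.Quotient.subsingleton_iff.mpr
          (Submodule.comap_subtype_eq_top.mpr (le_of_eq h.symm)))
      · intro o ho
        have hub : kappa R ((f n) ⧸ (comap (f n).subtype (f (n + 1)))) ≤ κ := by
          by_contra hgt
          push_neg at hgt
          have h1 : HasChain R ((f n) ⧸ (comap (f n).subtype (f (n + 1)))) κ :=
            (hasChain_iff_lt _ _).mpr hgt
          have h2 : HasChain R M κ := hasChain_of_quot (f (n+1)) (f n) h1
          have := (hasChain_iff_lt R M).mp h2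
          rw [hκ] at this
          exact lt_irrefl κ this
        have heq : kappa R ((f n) ⧸ (comap (f n).subtype (f (n + 1)))) = κ := by
          rcases lt_or_eq_of_le hub with hlt | heq
          · exfalso
            have hc' : (kappa R ((f n) ⧸ (comap (f n).subtype (f (n + 1))))).card ≤ ℵ₀ :=
              (Ordinal.card_le_card hlt.le).trans hcard
            exact hB _ hlt (IH _ hlt hc' _ _ _ rfl)
          · exact heq
        apply (hasChain_iff_lt _ _).mpr
        rw [heq]
        exact ho
    set T : Set ℕ := {n | f (n + 1) < f n ∧
      ∀ o < κ, HasChain R ((f n) ⧸ (comap (f n).subtype (f (n + 1)))) o} with hTdef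
    have hmem : ∀ N, ∃ n, N ≤ n ∧ n ∈ T := by
      intro N
      obtain ⟨n, hNn, hA, hB⟩ := hcon N
      exact ⟨n, hNn, hQfacts n (not_subsingleton_iff_nontrivial.mpr hA) hB⟩
    -- it suffices to build a chain of length κ in M
    have hfinal : ¬ HasChain R M κ := by
      intro hch
      have := (hasChain_iff_lt R M).mp hch
      rw [hκ] at this
      exact lt_irrefl κ this
    rcases Ordinal.zero_or_succ_or_isSuccLimit κ with h0 | ⟨l, hl⟩ | hlim
    · exact absurd (h0 ▸ hκ ▸ one_lt_kappa R M) (by simp)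
    · -- successor case
      obtain ⟨n₀, -, hn₀⟩ := hmem 0
      obtain ⟨n₁, hn01, hn₁⟩ := hmem (n₀ + 1)
      have hchQ : HasChain R ((f n₀) ⧸ (comap (f n₀).subtype (f (n₀ + 1)))) l :=
        hn₀.2 l (by rw [← hl]; exact Order.lt_succ l)
      obtain ⟨c, hc⟩ := hchQ
      refine hfinal ⟨fun γ => if h : γ.1 < l then
        quotE (f (n₀ + 1)) (f n₀) (c ⟨γ.1, h⟩) else f (n₁ + 1), fun a b hab => ?_⟩
      have hab' : a.1 < b.1 := hab
      show (if h : b.1 < l then quotE (f (n₀ + 1)) (f n₀) (c ⟨b.1, h⟩) else f (n₁ + 1)) <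
        (if h : a.1 < l then quotE (f (n₀ + 1)) (f n₀) (c ⟨a.1, h⟩) else f (n₁ + 1))
      by_cases hbl : b.1 < l
      · have hal : a.1 < l := lt_trans hab' hbl
        rw [dif_pos hal, dif_pos hbl]
        exact quotE_strictMono _ _ (hc (show (⟨a.1, hal⟩ : Set.Iio l) < ⟨b.1, hbl⟩ from hab'))
      · rw [dif_neg hbl]
        by_cases hal : a.1 < l
        · rw [dif_pos hal]
          calc f (n₁ + 1) < f n₁ := hn₁.1
            _ ≤ f (n₀ + 1) := hanti hn01
            _ ≤ quotE (f (n₀ + 1)) (f n₀) (c ⟨a.1, hal⟩) := le_quotE _ _ (hdesc n₀) _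
        · exfalso
          have h1 : b.1 < Order.succ l := by rw [hl]; exact b.2
          have h2 : b.1 ≤ l := Order.lt_succ_iff.mp h1
          exact absurd (lt_of_le_of_lt (le_of_not_gt hal) hab') h2.not_gt
    · -- limit case
      have hcnt : Countable (Set.Iio κ) := by
        rw [← Cardinal.mk_le_aleph0_iff, Ordinal.mk_Iio_ordinal]
        calc Cardinal.lift.{u+1} κ.card ≤ Cardinal.lift.{u+1} ℵ₀ := Cardinal.lift_le.mpr hcard
          _ = ℵ₀ := Cardinal.lift_aleph0
      have hne : Nonempty (Set.Iio κ) := ⟨⟨0, hlim.pos⟩⟩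
      obtain ⟨s, hs⟩ := exists_surjective_nat (Set.Iio κ)
      have hTinf : (setOf (· ∈ T)).Infinite := by
        show T.Infinite
        apply Set.infinite_of_not_bddAbove
        rintro ⟨b, hb⟩
        obtain ⟨n, hbn, hnT⟩ := hmem (b + 1)
        exact absurd (hb hnT) (by omega)
      set nn : ℕ → ℕ := Nat.nth (· ∈ T) with hnn
      have hnT : ∀ i, nn i ∈ T := fun i => Nat.nth_mem_of_infinite hTinf i
      have hnmono : StrictMono nn := Nat.nth_strictMono hTinf
      have hchains : ∀ i : ℕ, ∃ c : Set.Iio ((s i).1) → Submodule R M,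
          StrictAnti c ∧ ∀ δ, f (nn i + 1) < c δ ∧ c δ ≤ f (nn i) := by
        intro i
        have hlt : (s i).1 + 1 < κ := by
          rw [Ordinal.add_one_eq_succ]
          exact hlim.succ_lt (s i).2
        exact exists_chain_in_interval _ _ (hdesc (nn i)) ((hnT i).2 _ hlt)
      choose c hcanti hcb using hchains
      set S : ℕ → Ordinal.{u} := fun i => Nat.rec 0 (fun j acc => acc + (s j).1) i with hSdef
      have hSsucc : ∀ i, S (i + 1) = S i + (s i).1 := fun i => rfl
      have hcover : ∀ γ : Set.Iio κ, ∃ i, γ.1 < S (i + 1) := by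
        intro γ
        have h1 : γ.1 + 1 < κ := by
          rw [Ordinal.add_one_eq_succ]
          exact hlim.succ_lt γ.2
        obtain ⟨i, hi⟩ := hs ⟨γ.1 + 1, h1⟩
        refine ⟨i, ?_⟩
        rw [hSsucc, hi]
        calc γ.1 < γ.1 + 1 := by
              rw [Ordinal.add_one_eq_succ]; exact Order.lt_succ _
          _ ≤ S i + (γ.1 + 1) := le_add_self
      set I : Set.Iio κ → ℕ := fun γ => Nat.find (hcover γ) with hIdef
      have hSle : ∀ γ, S (I γ) ≤ γ.1 := by
        intro γ
        rcases Nat.eq_zero_or_pos (I γ) with h | h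
        · rw [h]; exact zero_le
        · obtain ⟨j, hj⟩ := Nat.exists_eq_succ_of_ne_zero (Nat.pos_iff_ne_zero.mp h)
          have h2 : ¬ γ.1 < S (j + 1) := Nat.find_min (hcover γ) (show j < I γ by omega)
          rw [hj]
          exact not_lt.mp h2
      have hDlt : ∀ γ, γ.1 - S (I γ) < (s (I γ)).1 := by
        intro γ
        have h1 : γ.1 < S (I γ) + (s (I γ)).1 := by
          have := Nat.find_spec (hcover γ)
          rwa [hSsucc] at this
        have h2 : S (I γ) + (γ.1 - S (I γ)) = γ.1 := Ordinal.add_sub_cancel_of_le (hSle γ)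
        rw [← h2] at h1
        exact (add_lt_add_iff_left _).mp h1
      refine hfinal ⟨fun γ => c (I γ) ⟨γ.1 - S (I γ), hDlt γ⟩, fun a b hab => ?_⟩
      have hab' : a.1 < b.1 := hab
      have hIab : I a ≤ I b :=
        Nat.find_min' (hcover a) (lt_trans hab' (Nat.find_spec (hcover b)))
      rcases lt_or_eq_of_le hIab with hlt | heq
      · have h1 : c (I b) ⟨b.1 - S (I b), hDlt b⟩ ≤ f (nn (I b)) := (hcb (I b) _).2
        have h2 : f (nn (I b)) ≤ f (nn (I a) + 1) := hanti (hnmono hlt)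
        have h3 : f (nn (I a) + 1) < c (I a) ⟨a.1 - S (I a), hDlt a⟩ := (hcb (I a) _).1
        show c (I b) ⟨b.1 - S (I b), hDlt b⟩ < c (I a) ⟨a.1 - S (I a), hDlt a⟩
        exact lt_of_le_of_lt (h1.trans h2) h3
      · -- same block
        have hdb' : S (I a) ≤ b.1 := by rw [heq]; exact hSle b
        have hda : S (I a) + (a.1 - S (I a)) = a.1 := Ordinal.add_sub_cancel_of_le (hSle a)
        have hdb : S (I a) + (b.1 - S (I a)) = b.1 := Ordinal.add_sub_cancel_of_le hdb'
        have hd : a.1 - S (I a) < b.1 - S (I a) := by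
          apply (add_lt_add_iff_left (S (I a))).mp
          rw [hda, hdb]; exact hab'
        have htrans : ∀ (j k : ℕ) (_ : j = k) (x : Set.Iio ((s j).1)) (y : Set.Iio ((s k).1)),
            x.1 = y.1 → c j x = c k y := by
          rintro j k rfl x y hxy
          congr 1
          exact Subtype.ext hxy
        have hblt : (b.1 - S (I a) : Ordinal.{u}) < (s (I a)).1 := by
          rw [heq]; exact hDlt b
        have hb2 : c (I b) ⟨b.1 - S (I b), hDlt b⟩ = c (I a) ⟨b.1 - S (I a), hblt⟩ :=
          htrans _ _ heq.symm _ _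
            (by show (b.1 - S (I b) : Ordinal.{u}) = b.1 - S (I a); rw [heq])
        show c (I b) ⟨b.1 - S (I b), hDlt b⟩ < c (I a) ⟨a.1 - S (I a), hDlt a⟩
        rw [hb2]
        exact hcanti (I a) (show (⟨a.1 - S (I a), hDlt a⟩ : Set.Iio ((s (I a)).1)) <
          ⟨b.1 - S (I a), hblt⟩ from hd)


/-- For a left `R`-module `M`, the ordinal `κ(M)` is countable iff `M`
has Gabriel–Rentschler Krull dimension and this Krull dimension is a countable
ordinal. -/
theorem stmt14 (R : Type u) [Ring R] (M : Type u) [AddCommGroup M] [Module R M] :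
    (kappa R M).card ≤ Cardinal.aleph0 ↔
      ∃ α : Ordinal.{u}, α.card ≤ Cardinal.aleph0 ∧ KdimLE R α (ModuleCat.of R M) := by
  constructor
  · intro h
    exact ⟨kappa R M, h, lemB (kappa R M) h M _ _ rfl⟩
  · rintro ⟨α, hα, hK⟩
    have h1 : ¬ HasChain R M (omega0 ^ (α + 1)) := lemA α (ModuleCat.of R M) hK
    have h2 : kappa R M ≤ omega0 ^ (α + 1) := by
      rw [kappa_eq]
      exact csInf_le' h1
    apply (Ordinal.card_le_card h2).trans
    apply card_opow_omega0_le_s14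
    calc (α + 1).card = α.card + 1 := by rw [Ordinal.card_add, Ordinal.card_one]
      _ ≤ ℵ₀ + ℵ₀ := add_le_add hα Cardinal.one_le_aleph0
      _ = ℵ₀ := Cardinal.aleph0_add_aleph0
end

section
/- Let R be a ring. For every two-sided ideal I of R, the set V(I) = {p ∈ Irr R : I·N_p = 0} is closed in the refined Zariski topology; in particular, the refined Zariski topology refines the Zariski topology. -/
universe u v w

/-- For every two-sided ideal `I`, the set `V(I)` is closed in the refined
Zariski topology; in particular the refined Zariski topology refines the Zariski
topology. -/
theorem stmt17 (R : Type u) [Ring R] (I : TwoSidedIdeal R) :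
    RefinedClosed (VV (I : Set R)) := by
  rintro q ⟨A, f, hf⟩ r hr m
  obtain ⟨a, rfl⟩ := hf m
  rw [← map_smul]
  have : r • a = 0 := by
    ext p
    show (r • (a : (p : VV (I : Set R)) → (Irr.Rep (p : Irr R)).carrier)) p = 0
    exact p.2 r hr ((a : (p : VV (I : Set R)) → (Irr.Rep (p : Irr R)).carrier) p)
  rw [this, map_zero]
end
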